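/- arXiv:math/9903063 — 9 statements merged into one kernel-verified Lean document; each statement's English description precedes it below -/
import Mathlib

section
/- Every nonempty even-visiting closed walk has length divisible by 4. That is, if L > 0 and there exists a closed walk of length L in which every site different from 0 is visited an even number of times, then 4 divides L. -/
/-- A walk of length `L`: a function `s : Fin (L+1) → ℤ` with `s 0 = 0` and
unit steps `|s (i+1) - s i| = 1` for all `i < L`. -/
def IsWalk (L : ℕ) (s : Fin (L + 1) → ℤ) : Prop :=
  s 0 = 0 ∧ ∀ i : Fin L, |s i.succ - s i.castSucc| = 1

/-- A closed walk: a walk that ends at the origin. -/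
def IsClosedWalk (L : ℕ) (s : Fin (L + 1) → ℤ) : Prop :=
  IsWalk L s ∧ s (Fin.last L) = 0

/-- The number of visits of the walk `s` to the site `x`. -/
def visits (L : ℕ) (s : Fin (L + 1) → ℤ) (x : ℤ) : ℕ :=
  Fintype.card {i : Fin (L + 1) // s i = x}

/-- A walk is even-visiting if every site different from `0` is visited an
even number of times. -/
def EvenVisiting (L : ℕ) (s : Fin (L + 1) → ℤ) : Prop :=
  ∀ x : ℤ, x ≠ 0 → Even (visits L s x)

/-- The up-crossing count `u(j)`: the number of indices `i < L` with
`s i = j` and `s (i+1) = j + 1`. -/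
def upcross (L : ℕ) (s : Fin (L + 1) → ℤ) (j : ℤ) : ℕ :=
  Fintype.card {i : Fin L // s i.castSucc = j ∧ s i.succ = j + 1}

/-!
Squaring a unit step gives `s (i+1)² - s i² = 2 s i (s (i+1) - s i) + 1`, so summing along a closed
walk from `0` yields `L = -2 ∑ᵢ s i (s (i+1) - s i)`. Since every step is odd, the sum has the
parity of `∑ᵢ s i = ∑ₓ x · visits x`, which is even when every site `x ≠ 0` is visited an even
number of times. Hence `L` is `2` times an even number.
-/

open Finset

theorem Fin.sum_succ_sub_castSucc {M : Type*} [AddCommGroup M] {n : ℕ} (f : Fin (n + 1) → M) :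
    ∑ i : Fin n, (f i.succ - f i.castSucc) = f (Fin.last n) - f 0 := by
  rw [sum_sub_distrib, eq_sub_of_add_eq' (Fin.sum_univ_succ f).symm,
    eq_sub_of_add_eq (Fin.sum_univ_castSucc f).symm]
  abel

section UnitSteps

variable {L : ℕ} {s : Fin (L + 1) → ℤ}

theorem sq_last_sub_sq_zero_of_unit_steps (hstep : ∀ i : Fin L, |s i.succ - s i.castSucc| = 1) :
    s (Fin.last L) ^ 2 - s 0 ^ 2 =
      L + 2 * ∑ i : Fin L, s i.castSucc * (s i.succ - s i.castSucc) := by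
  have hsq : ∀ i : Fin L, s i.succ ^ 2 - s i.castSucc ^ 2 =
      1 + 2 * (s i.castSucc * (s i.succ - s i.castSucc)) := fun i => by
    have h := congrArg (· ^ 2) (hstep i)
    simp only [sq_abs, one_pow] at h
    linear_combination h
  rw [← Fin.sum_succ_sub_castSucc (fun i => s i ^ 2), sum_congr rfl fun i _ => hsq i,
    sum_add_distrib, ← mul_sum]
  simp

theorem even_sum_mul_step_iff (hstep : ∀ i : Fin L, |s i.succ - s i.castSucc| = 1) :
    Even (∑ i : Fin L, s i.castSucc * (s i.succ - s i.castSucc)) ↔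
      Even (∑ i : Fin L, s i.castSucc) := by
  refine Int.even_sub.mp ?_
  rw [← sum_sub_distrib]
  refine even_sum _ fun i _ => ?_
  have hodd : Odd (s i.succ - s i.castSucc) := odd_abs.mp (hstep i ▸ odd_one)
  rw [← mul_sub_one]
  exact (hodd.sub_odd odd_one).mul_left _

end UnitSteps

theorem EvenVisiting.even_sum {L : ℕ} {s : Fin (L + 1) → ℤ} (hs : EvenVisiting L s) :
    Even (∑ i, s i) := by
  classical
  rw [show ∑ i, s i = ∑ x ∈ univ.image s, #{i | s i = x} • x from sum_comp (fun x => x) s]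
  refine Finset.even_sum _ fun x _ => ?_
  rcases eq_or_ne x 0 with rfl | hx
  · simp
  · have hvis : #{i | s i = x} = visits L s x := (Fintype.card_subtype _).symm
    rw [hvis, nsmul_eq_mul]
    exact ((Int.even_coe_nat _).mpr (hs x hx)).mul_right x

theorem even_visiting_length_div_four_general (L : ℕ)
    (h : ∃ s : Fin (L + 1) → ℤ, IsClosedWalk L s ∧ EvenVisiting L s) :
    4 ∣ L := by
  obtain ⟨s, ⟨⟨hs0, hstep⟩, hsL⟩, hev⟩ := h
  have hlen := sq_last_sub_sq_zero_of_unit_steps hstep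
  rw [hs0, hsL] at hlen
  have hsum : Even (∑ i : Fin L, s i.castSucc) := by
    simpa [Fin.sum_univ_castSucc, hsL] using hev.even_sum
  obtain ⟨k, hk⟩ := (even_sum_mul_step_iff hstep).mpr hsum
  have : (4 : ℤ) ∣ L := ⟨-k, by linarith⟩
  exact_mod_cast this

/-- Every nonempty even-visiting closed walk has length divisible by 4. -/
theorem even_visiting_length_div_four (L : ℕ) (hL : 0 < L)
    (h : ∃ s : Fin (L + 1) → ℤ, IsClosedWalk L s ∧ EvenVisiting L s) :
    4 ∣ L :=
  even_visiting_length_div_four_general L h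
end

section
/- In any even-visiting closed walk, the origin is visited an odd number of times: if s is a closed walk of length L in which every site x ≠ 0 is visited an even number of times, then the cardinality of {i : Fin (L+1) | s i = 0} is odd. -/
/-!
A closed walk has even length, since every step changes the parity of the position, so it
makes an odd number `L + 1` of visits in total. The visits to the sites `x ≠ 0` add up to an
even number, hence the origin takes an odd share.
-/

theorem IsWalk.even_add {L : ℕ} {s : Fin (L + 1) → ℤ} (hs : IsWalk L s) (i : Fin (L + 1)) :
    Even (s i + i) := by
  obtain ⟨h0, hstep⟩ := hs
  induction i using Fin.induction with
  | zero => simp [h0]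
  | succ i ih =>
    have hsplit : s i.succ + (i.succ : ℕ) = (s i.castSucc + (i.castSucc : ℕ))
        + (s i.succ - s i.castSucc + 1) := by
      simp only [Fin.val_succ, Fin.val_castSucc]; push_cast; ring
    rw [hsplit]
    refine ih.add ?_
    rcases abs_eq (zero_le_one' ℤ) |>.mp (hstep i) with h | h <;> rw [h] <;> decide

theorem IsClosedWalk.even_length {L : ℕ} {s : Fin (L + 1) → ℤ} (hs : IsClosedWalk L s) :
    Even L := by
  have h := hs.1.even_add (Fin.last L)
  rwa [hs.2, Fin.val_last, zero_add, Int.even_coe_nat] at h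

theorem odd_card_fiber_of_even_card_fibers {α β : Type*} [Fintype α] [DecidableEq β]
    (f : α → β) (b : β) (hα : Odd (Fintype.card α))
    (hfib : ∀ x, x ≠ b → Even (Fintype.card {i // f i = x})) :
    Odd (Fintype.card {i // f i = b}) := by
  simp only [Fintype.card_subtype] at hfib ⊢
  -- `b` is inserted so that its fiber can be split off even when it is empty.
  have hsplit := Finset.card_eq_sum_card_fiberwise (f := f) (s := Finset.univ)
    (t := insert b (Finset.univ.image f)) fun i _ => Finset.mem_insert_of_mem (by simp)
  rw [← Finset.add_sum_erase _ _ (Finset.mem_insert_self _ _)] at hsplit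
  have hrest : Even (∑ x ∈ (insert b (Finset.univ.image f)).erase b,
      (Finset.univ.filter (f · = x)).card) :=
    Finset.even_sum _ fun x hx => hfib x (Finset.ne_of_mem_erase hx)
  rw [← Finset.card_univ, hsplit] at hα
  exact (Nat.odd_add.mp hα).mpr hrest

/-- In any even-visiting closed walk, the origin is visited an odd number of times. -/
theorem even_visiting_origin_odd (L : ℕ) (s : Fin (L + 1) → ℤ)
    (hs : IsClosedWalk L s) (he : EvenVisiting L s) :
    Odd (visits L s 0) := by
  have htotal : Odd (Fintype.card (Fin (L + 1))) := by
    rw [Fintype.card_fin]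
    exact hs.even_length.add_one
  exact odd_card_fiber_of_even_card_fibers s 0 htotal he
end

section
/- Appending a new top level multiplies the walk count by a binomial coefficient: for t ≥ 1 and positive integers n_1, …, n_t, n_{t+1}, one has W(n_1, …, n_t, n_{t+1}) = C(2·n_{t+1} + 2·n_t − 1, 2·n_{t+1}) · W(n_1, …, n_t), where C denotes the binomial coefficient. -/
/-- `Wcount t n` is the number of closed walks (of length `4 * (n 0 + ... + n (t-1))`)
whose up-crossing counts satisfy `u (j - 1) = 2 * n_j` for `1 <= j <= t`
(i.e. `u i = 2 * n i` for the edges `i = 0, ..., t-1`) and `u j = 0` for every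
other `j : ℤ`; such walks stay in the interval `[0, t]`. -/
noncomputable def Wcount (t : ℕ) (n : Fin t → ℕ) : ℕ :=
  Nat.card {s : Fin (4 * (∑ i, n i) + 1) → ℤ //
    IsClosedWalk (4 * ∑ i, n i) s ∧
    (∀ i : Fin t, upcross (4 * ∑ i, n i) s ((i : ℕ) : ℤ) = 2 * n i) ∧
    ∀ m : ℤ, (∀ i : Fin t, m ≠ ((i : ℕ) : ℤ)) → upcross (4 * ∑ i, n i) s m = 0}

namespace WalkAux

/-- number of up-steps at level `j` of the step list `l` started at height `h`. -/
def ups (j : ℤ) : ℤ → List ℤ → ℕ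
  | _, [] => 0
  | h, a :: l => (if h = j ∧ a = 1 then 1 else 0) + ups j (h + a) l

def downs (j : ℤ) : ℤ → List ℤ → ℕ
  | _, [] => 0
  | h, a :: l => (if h = j ∧ a = -1 then 1 else 0) + downs j (h + a) l

def vis (j : ℤ) : ℤ → List ℤ → ℕ
  | _, [] => 0
  | h, a :: l => (if h = j then 1 else 0) + vis j (h + a) l

def Steps (l : List ℤ) : Prop := ∀ a ∈ l, a = 1 ∨ a = -1

@[simp] theorem ups_nil (j h : ℤ) : ups j h [] = 0 := rfl
@[simp] theorem ups_cons (j h a : ℤ) (l : List ℤ) :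
    ups j h (a :: l) = (if h = j ∧ a = 1 then 1 else 0) + ups j (h + a) l := rfl
@[simp] theorem downs_nil (j h : ℤ) : downs j h [] = 0 := rfl
@[simp] theorem downs_cons (j h a : ℤ) (l : List ℤ) :
    downs j h (a :: l) = (if h = j ∧ a = -1 then 1 else 0) + downs j (h + a) l := rfl
@[simp] theorem vis_nil (j h : ℤ) : vis j h [] = 0 := rfl
@[simp] theorem vis_cons (j h a : ℤ) (l : List ℤ) :
    vis j h (a :: l) = (if h = j then 1 else 0) + vis j (h + a) l := rfl

theorem ups_append (j : ℤ) : ∀ (l₁ l₂ : List ℤ) (h : ℤ),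
    ups j h (l₁ ++ l₂) = ups j h l₁ + ups j (h + l₁.sum) l₂
  | [], l₂, h => by simp
  | a :: l₁, l₂, h => by
    simp [ups_append j l₁ l₂ (h + a), add_assoc]

/-- crossing balance: up-crossings of the edge `(τ-1, τ)` minus down-crossings equal
the change of the indicator of being `≥ τ`. -/
theorem crossing (τ : ℤ) : ∀ (l : List ℤ) (h : ℤ), Steps l →
    ups (τ - 1) h l + (if τ ≤ h then 1 else 0)
      = downs τ h l + (if τ ≤ h + l.sum then 1 else 0)
  | [], h, _ => by simp
  | a :: l, h, hs => by
    have ha : a = 1 ∨ a = -1 := hs a (by simp)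
    have IH := crossing τ l (h + a) (fun x hx => hs x (by simp [hx]))
    simp only [ups_cons, downs_cons, List.sum_cons] at *
    rcases ha with rfl | rfl <;> norm_num <;> simp only [← add_assoc] <;> split_ifs at IH ⊢ <;> omega

theorem vis_eq_ups_add_downs (τ : ℤ) : ∀ (l : List ℤ) (h : ℤ), Steps l →
    vis τ h l = ups τ h l + downs τ h l
  | [], h, _ => by simp
  | a :: l, h, hs => by
    have ha : a = 1 ∨ a = -1 := hs a (by simp)
    have IH := vis_eq_ups_add_downs τ l (h + a) (fun x hx => hs x (by simp [hx]))
    simp only [ups_cons, downs_cons, vis_cons]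
    rcases ha with rfl | rfl <;> rw [IH] <;> simp <;> split_ifs <;> omega

/-- For a `±1`-step list starting and ending strictly below `τ`, the number of visits
to `τ` equals the number of up-steps at `τ - 1`, provided there are no up-steps at `τ`. -/
theorem vis_eq (τ : ℤ) (l : List ℤ) (hs : Steps l) (h0 : ¬ τ ≤ (0:ℤ)) (h1 : ¬ τ ≤ l.sum)
    (hu : ups τ 0 l = 0) : vis τ 0 l = ups (τ - 1) 0 l := by
  have hc := crossing τ l 0 hs
  have hv := vis_eq_ups_add_downs τ l 0 hs
  rw [zero_add] at hc
  split_ifs at hc <;> omega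

/-! ### peaks, insertion, deletion, extraction -/

def peaks : ℕ → List ℤ
  | 0 => []
  | k + 1 => 1 :: -1 :: peaks k

@[simp] theorem peaks_zero : peaks 0 = [] := rfl
@[simp] theorem peaks_succ (k : ℕ) : peaks (k + 1) = 1 :: -1 :: peaks k := rfl

@[simp] theorem length_peaks : ∀ k, (peaks k).length = 2 * k
  | 0 => rfl
  | k + 1 => by simp [length_peaks k]; omega

@[simp] theorem sum_peaks : ∀ k, (peaks k).sum = 0
  | 0 => rfl
  | k + 1 => by simp [sum_peaks k]

theorem steps_peaks : ∀ k, Steps (peaks k)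
  | 0 => by intro a ha; simp at ha
  | k + 1 => by
    intro a ha
    simp only [peaks_succ, List.mem_cons] at ha
    rcases ha with rfl | rfl | ha
    · left; rfl
    · right; rfl
    · exact steps_peaks k a ha

theorem ups_peaks (j τ : ℤ) : ∀ k, ups j τ (peaks k) = if τ = j then k else 0
  | 0 => by simp
  | k + 1 => by
    have := ups_peaks j τ k
    simp only [peaks_succ, ups_cons]
    have e : τ + 1 + -1 = τ := by ring
    rw [e, this]
    split_ifs <;> simp_all <;> omega

def ins (τ : ℤ) : ℤ → List ℤ → List ℕ → List ℤ
  | _, [], _ => []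
  | h, a :: l, K =>
    if h = τ then peaks K.headI ++ a :: ins τ (h + a) l K.tail
    else a :: ins τ (h + a) l K

@[simp] theorem ins_nil (τ h : ℤ) (K : List ℕ) : ins τ h [] K = [] := rfl
theorem ins_cons (τ h a : ℤ) (l : List ℤ) (K : List ℕ) :
    ins τ h (a :: l) K =
      if h = τ then peaks K.headI ++ a :: ins τ (h + a) l K.tail
      else a :: ins τ (h + a) l K := rfl

def del (τ : ℤ) : ℤ → List ℤ → List ℤ
  | _, [] => []
  | h, a :: l =>
    if h = τ ∧ a = 1 then del τ h l.tail
    else a :: del τ (h + a) l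
termination_by _ l => l.length
decreasing_by
  · simp [List.length_tail]
  · simp

@[simp] theorem del_nil (τ h : ℤ) : del τ h [] = [] := by rw [del]
theorem del_cons (τ h a : ℤ) (l : List ℤ) :
    del τ h (a :: l) = if h = τ ∧ a = 1 then del τ h l.tail
      else a :: del τ (h + a) l := by rw [del]

def ext (τ : ℤ) : ℤ → List ℤ → List ℕ
  | _, [] => []
  | h, a :: l =>
    if h = τ then
      if a = 1 then
        match ext τ h l.tail with
        | [] => [1]
        | k :: K => (k + 1) :: K
      else 0 :: ext τ (h + a) l
    else ext τ (h + a) l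
termination_by _ l => l.length
decreasing_by
  · simp [List.length_tail]
  · simp
  · simp

@[simp] theorem ext_nil (τ h : ℤ) : ext τ h [] = [] := by rw [ext]
theorem ext_cons (τ h a : ℤ) (l : List ℤ) :
    ext τ h (a :: l) =
      if h = τ then
        if a = 1 then
          match ext τ h l.tail with
          | [] => [1]
          | k :: K => (k + 1) :: K
        else 0 :: ext τ (h + a) l
      else ext τ (h + a) l := by rw [ext]

theorem steps_cons {a : ℤ} {l : List ℤ} : Steps (a :: l) ↔ (a = 1 ∨ a = -1) ∧ Steps l := by
  simp [Steps]

theorem steps_append {l₁ l₂ : List ℤ} : Steps (l₁ ++ l₂) ↔ Steps l₁ ∧ Steps l₂ := by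
  simp [Steps, List.mem_append, or_imp, forall_and]

theorem ins_steps (τ : ℤ) : ∀ (l : List ℤ) (K : List ℕ) (h : ℤ), Steps l → Steps (ins τ h l K)
  | [], K, h, _ => by intro a ha; simp at ha
  | a :: l, K, h, hs => by
    rw [steps_cons] at hs
    rw [ins_cons]
    split_ifs
    · rw [steps_append, steps_cons]
      exact ⟨steps_peaks _, hs.1, ins_steps τ l K.tail (h + a) hs.2⟩
    · rw [steps_cons]; exact ⟨hs.1, ins_steps τ l K (h + a) hs.2⟩

theorem ins_sum (τ : ℤ) : ∀ (l : List ℤ) (K : List ℕ) (h : ℤ), (ins τ h l K).sum = l.sum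
  | [], K, h => by simp
  | a :: l, K, h => by
    rw [ins_cons]
    split_ifs <;> simp [List.sum_append, ins_sum τ l _ (h + a)]

theorem ins_length (τ : ℤ) : ∀ (l : List ℤ) (K : List ℕ) (h : ℤ), K.length = vis τ h l →
    (ins τ h l K).length = l.length + 2 * K.sum
  | [], K, h, hK => by
    simp only [vis_nil] at hK
    rw [List.length_eq_zero_iff] at hK
    simp [hK]
  | a :: l, K, h, hK => by
    rw [vis_cons] at hK
    rw [ins_cons]
    by_cases ht : h = τ
    · rw [if_pos ht]
      rw [if_pos ht] at hK
      have hK' : K.tail.length = vis τ (h + a) l := by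
        simp only [List.length_tail]; omega
      have IH := ins_length τ l K.tail (h + a) hK'
      have hsum : K.sum = K.headI + K.tail.sum := by
        cases K with
        | nil => simp at hK; omega
        | cons k K' => simp
      simp only [List.length_append, List.length_cons, length_peaks, IH]
      omega
    · rw [if_neg ht]
      rw [if_neg ht] at hK
      have IH := ins_length τ l K (h + a) (by omega)
      simp only [List.length_cons, IH]
      omega

theorem ins_ups (τ j : ℤ) : ∀ (l : List ℤ) (K : List ℕ) (h : ℤ), K.length = vis τ h l →
    ups j h (ins τ h l K) = ups j h l + if j = τ then K.sum else 0
  | [], K, h, hK => by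
    simp only [vis_nil] at hK
    rw [List.length_eq_zero_iff] at hK
    simp [hK]
  | a :: l, K, h, hK => by
    rw [vis_cons] at hK
    rw [ins_cons]
    by_cases ht : h = τ
    · rw [if_pos ht]
      rw [if_pos ht] at hK
      have hK' : K.tail.length = vis τ (h + a) l := by
        simp only [List.length_tail]; omega
      have IH := ins_ups τ j l K.tail (h + a) hK'
      have hsum : K.sum = K.headI + K.tail.sum := by
        cases K with
        | nil => simp at hK; omega
        | cons k K' => simp
      rw [ups_append, sum_peaks, add_zero, ups_cons, IH, ups_peaks, ups_cons, hsum]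
      subst ht
      split_ifs <;> omega
    · rw [if_neg ht]
      rw [if_neg ht] at hK
      have IH := ins_ups τ j l K (h + a) (by omega)
      rw [ups_cons, IH, ups_cons]
      split_ifs <;> omega

theorem del_peaks (τ : ℤ) : ∀ (k : ℕ) (r : List ℤ), del τ τ (peaks k ++ r) = del τ τ r
  | 0, r => by simp
  | k + 1, r => by
    rw [peaks_succ, List.cons_append, List.cons_append, del_cons]
    rw [if_pos ⟨rfl, rfl⟩]
    simpa using del_peaks τ k r

theorem del_ins (τ : ℤ) : ∀ (l : List ℤ) (K : List ℕ) (h : ℤ), Steps l →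
    ups τ h l = 0 → K.length = vis τ h l → del τ h (ins τ h l K) = l
  | [], K, h, _, _, _ => by simp
  | a :: l, K, h, hs, h0, hK => by
    rw [steps_cons] at hs
    rw [ups_cons] at h0
    rw [vis_cons] at hK
    have h0' : ups τ (h + a) l = 0 := by split_ifs at h0 <;> omega
    rw [ins_cons]
    by_cases ht : h = τ
    · rw [if_pos ht]
      rw [if_pos ht] at hK
      have ha : a = -1 := by
        rcases hs.1 with rfl | rfl
        · rw [if_pos ⟨ht, rfl⟩] at h0; omega
        · rfl
      subst ha
      rw [ht] at h0' hK ⊢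
      rw [del_peaks, del_cons, if_neg (by simp)]
      congr 1
      refine del_ins τ l K.tail (τ + -1) hs.2 h0' ?_
      simp only [List.length_tail]; omega
    · rw [if_neg ht]
      rw [if_neg ht] at hK
      rw [del_cons, if_neg (by tauto)]
      congr 1
      exact del_ins τ l K (h + a) hs.2 h0' (by omega)

theorem ext_peaks (τ : ℤ) : ∀ (k : ℕ) (r : List ℤ),
    ext τ τ (peaks k ++ (-1 :: r)) = k :: ext τ (τ + -1) r
  | 0, r => by
    rw [peaks_zero, List.nil_append, ext_cons, if_pos rfl, if_neg (by norm_num)]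
  | k + 1, r => by
    rw [peaks_succ, List.cons_append, List.cons_append, ext_cons, if_pos rfl, if_pos rfl]
    simp only [List.tail_cons]
    rw [ext_peaks τ k r]

theorem ext_ins (τ : ℤ) : ∀ (l : List ℤ) (K : List ℕ) (h : ℤ), Steps l →
    ups τ h l = 0 → K.length = vis τ h l → ext τ h (ins τ h l K) = K
  | [], K, h, _, _, hK => by
    simp only [vis_nil] at hK
    rw [List.length_eq_zero_iff] at hK
    simp [hK]
  | a :: l, K, h, hs, h0, hK => by
    rw [steps_cons] at hs
    rw [ups_cons] at h0
    rw [vis_cons] at hK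
    have h0' : ups τ (h + a) l = 0 := by split_ifs at h0 <;> omega
    rw [ins_cons]
    by_cases ht : h = τ
    · rw [if_pos ht]
      rw [if_pos ht] at hK
      have ha : a = -1 := by
        rcases hs.1 with rfl | rfl
        · rw [if_pos ⟨ht, rfl⟩] at h0; omega
        · rfl
      subst ha
      rw [ht] at h0' hK ⊢
      cases K with
      | nil => simp at hK; omega
      | cons k K' =>
        simp only [List.headI, List.tail_cons]
        rw [ext_peaks]
        congr 1
        refine ext_ins τ l K' (τ + -1) hs.2 h0' ?_
        simp only [List.length_cons] at hK; omega
    · rw [if_neg ht]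
      rw [if_neg ht] at hK
      rw [ext_cons, if_neg ht]
      exact ext_ins τ l K (h + a) hs.2 h0' (by omega)

theorem ext_ne_nil (τ a : ℤ) (l : List ℤ) : ext τ τ (a :: l) ≠ [] := by
  rw [ext_cons, if_pos rfl]
  by_cases ha : a = 1
  · rw [if_pos ha]
    cases ext τ τ l.tail <;> simp
  · rw [if_neg ha]
    simp

theorem del_big (τ : ℤ) : ∀ (N : ℕ) (l : List ℤ) (h : ℤ), l.length ≤ N → Steps l →
    ups (τ + 1) h l = 0 → h + l.sum ≠ τ → h + l.sum ≠ τ + 1 →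
    (del τ h l).sum = l.sum ∧
    (del τ h l).length + 2 * ups τ h l = l.length ∧
    (∀ j, j ≠ τ → ups j h (del τ h l) = ups j h l) ∧
    ups τ h (del τ h l) = 0 ∧
    Steps (del τ h l) ∧
    (ext τ h l).sum = ups τ h l ∧
    (ext τ h l).length = vis τ h (del τ h l) ∧
    ins τ h (del τ h l) (ext τ h l) = l := by
  intro N
  induction N with
  | zero =>
    intro l h hlen _ _ _ _
    have : l = [] := by
      cases l with
      | nil => rfl
      | cons a l => simp at hlen
    subst this
    refine ⟨by simp, by simp, fun j _ => by simp, by simp, ?_, by simp, by simp, by simp⟩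
    intro x hx; simp at hx
  | succ N IHN =>
    intro l h hlen hs hU hE0 hE1
    cases l with
    | nil =>
      refine ⟨by simp, by simp, fun j _ => by simp, by simp, ?_, by simp, by simp, by simp⟩
      intro x hx; simp at hx
    | cons a l' =>
      rw [steps_cons] at hs
      by_cases hta : h = τ ∧ a = 1
      · obtain ⟨ht, rfl⟩ := hta
        cases l' with
        | nil =>
          exfalso
          apply hE1
          simp [ht]
        | cons b r =>
          have hb : b = -1 := by
            rcases hs.2 b (by simp) with rfl | rfl
            · exfalso
              rw [ups_cons, ups_cons] at hU
              have h2 : h + 1 = τ + 1 ∧ (1:ℤ) = 1 := ⟨by omega, rfl⟩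
              rw [if_pos h2] at hU
              split_ifs at hU <;> omega
            · rfl
          subst hb
          have e : h + 1 + -1 = h := by ring
          have hsum : (1 :: -1 :: r : List ℤ).sum = r.sum := by simp
          have hrs : Steps r := by
            intro x hx; exact hs.2 x (by simp [hx])
          have hrU : ups (τ + 1) h r = 0 := by
            rw [ups_cons, ups_cons, e] at hU
            omega
          have hrlen : r.length ≤ N := by
            simp only [List.length_cons] at hlen
            omega
          have hrE0 : h + r.sum ≠ τ := by rw [hsum] at hE0; exact hE0
          have hrE1 : h + r.sum ≠ τ + 1 := by rw [hsum] at hE1; exact hE1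
          obtain ⟨A, B, C, D, E, F, G, H⟩ := IHN r h hrlen hrs hrU hrE0 hrE1
          have hrne : r ≠ [] := by
            rintro rfl
            exact hE0 (by simp [ht])
          have hdel : del τ h (1 :: -1 :: r) = del τ h r := by
            rw [del_cons, if_pos ⟨ht, rfl⟩]; rfl
          obtain ⟨c, r', rfl⟩ : ∃ c r', r = c :: r' := by
            cases r with
            | nil => exact absurd rfl hrne
            | cons c r' => exact ⟨c, r', rfl⟩
          obtain ⟨k, K, hkK⟩ : ∃ k K, ext τ h (c :: r') = k :: K := by
            rw [ht]
            cases hE2 : ext τ τ (c :: r') with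
            | nil => exact absurd hE2 (ext_ne_nil τ c r')
            | cons k K => exact ⟨k, K, rfl⟩
          have hext : ext τ h (1 :: -1 :: (c :: r')) = (k + 1) :: K := by
            rw [ext_cons, if_pos ht, if_pos rfl]
            simp only [List.tail_cons]
            rw [hkK]
          have hups : ups τ h (1 :: -1 :: (c :: r')) = 1 + ups τ h (c :: r') := by
            rw [ups_cons, ups_cons, e, if_pos ⟨ht, rfl⟩, if_neg (by norm_num)]
            omega
          refine ⟨?_, ?_, ?_, ?_, ?_, ?_, ?_, ?_⟩
          · rw [hdel, A, hsum]
          · rw [hdel, hups]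
            simp only [List.length_cons] at *
            omega
          · intro j hj
            have hupsj : ups j h (1 :: -1 :: (c :: r')) = ups j h (c :: r') := by
              rw [ups_cons, ups_cons, e,
                if_neg (by rintro ⟨h1, -⟩; exact hj (by omega)), if_neg (by norm_num)]
              omega
            rw [hdel, C j hj, hupsj]
          · rw [hdel]; exact D
          · rw [hdel]; exact E
          · rw [hkK] at F
            rw [hext, hups]
            simp only [List.sum_cons] at F ⊢
            omega
          · rw [hext, hdel, ← G, hkK]
            simp only [List.length_cons]
          · rw [hext, hdel]
            cases hD : del τ h (c :: r') with
            | nil =>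
              rw [hD] at H
              simp at H
            | cons d D =>
              rw [hD, hkK] at H
              rw [ins_cons, if_pos ht] at H ⊢
              simp only [List.headI, List.tail_cons] at H ⊢
              rw [peaks_succ]
              simp only [List.cons_append]
              rw [H]
      · have hdel : del τ h (a :: l') = a :: del τ (h + a) l' := by
          rw [del_cons, if_neg hta]
        have hlen' : l'.length ≤ N := by
          simp only [List.length_cons] at hlen; omega
        have hs' : Steps l' := hs.2
        have hU' : ups (τ + 1) (h + a) l' = 0 := by
          rw [ups_cons] at hU; omega
        have hE0' : h + a + l'.sum ≠ τ := by
          simp only [List.sum_cons] at hE0; omega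
        have hE1' : h + a + l'.sum ≠ τ + 1 := by
          simp only [List.sum_cons] at hE1; omega
        obtain ⟨A, B, C, D, E, F, G, H⟩ := IHN l' (h + a) hlen' hs' hU' hE0' hE1'
        have hupsa : ups τ h (a :: l') = ups τ (h + a) l' := by
          rw [ups_cons, if_neg hta]
          omega
        refine ⟨?_, ?_, ?_, ?_, ?_, ?_, ?_, ?_⟩
        · rw [hdel, List.sum_cons, List.sum_cons, A]
        · rw [hdel, hupsa, List.length_cons, List.length_cons]
          omega
        · intro j hj
          rw [hdel, ups_cons, ups_cons, C j hj]
        · rw [hdel, ups_cons, if_neg hta, D]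
        · rw [hdel, steps_cons]; exact ⟨hs.1, E⟩
        · by_cases ht : h = τ
          · have hext : ext τ h (a :: l') = 0 :: ext τ (h + a) l' := by
              rw [ext_cons, if_pos ht, if_neg (fun h1 => hta ⟨ht, h1⟩)]
            rw [hext, List.sum_cons, F, hupsa]
            omega
          · have hext : ext τ h (a :: l') = ext τ (h + a) l' := by
              rw [ext_cons, if_neg ht]
            rw [hext, F, hupsa]
        · by_cases ht : h = τ
          · have hext : ext τ h (a :: l') = 0 :: ext τ (h + a) l' := by
              rw [ext_cons, if_pos ht, if_neg (fun h1 => hta ⟨ht, h1⟩)]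
            rw [hext, hdel, List.length_cons, vis_cons, if_pos ht, G]
            omega
          · have hext : ext τ h (a :: l') = ext τ (h + a) l' := by
              rw [ext_cons, if_neg ht]
            rw [hext, hdel, vis_cons, if_neg ht, G]
            omega
        · by_cases ht : h = τ
          · have hext : ext τ h (a :: l') = 0 :: ext τ (h + a) l' := by
              rw [ext_cons, if_pos ht, if_neg (fun h1 => hta ⟨ht, h1⟩)]
            rw [hext, hdel, ins_cons, if_pos ht]
            simp only [List.headI, peaks_zero, List.tail_cons, List.nil_append]
            rw [H]
          · have hext : ext τ h (a :: l') = ext τ (h + a) l' := by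
              rw [ext_cons, if_neg ht]
            rw [hext, hdel, ins_cons, if_neg ht, H]

/-! ### transfer between `Fin`-walks and step lists -/

def walkSteps {L : ℕ} (s : Fin (L + 1) → ℤ) : List ℤ :=
  List.ofFn (fun i : Fin L => s i.succ - s i.castSucc)

@[simp] theorem length_walkSteps {L : ℕ} (s : Fin (L + 1) → ℤ) :
    (walkSteps s).length = L := by simp [walkSteps]

theorem walkSteps_get {L : ℕ} (s : Fin (L + 1) → ℤ) (m : ℕ) (hm : m < L) :
    (walkSteps s).getD m 0 = s ⟨m + 1, by omega⟩ - s ⟨m, by omega⟩ := by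
  unfold walkSteps
  rw [List.getD_eq_getElem _ _ (by simp; omega), List.getElem_ofFn]
  rfl

theorem walkSteps_take {L : ℕ} (s : Fin (L + 1) → ℤ) (h0 : s 0 = 0) :
    ∀ (m : ℕ) (hm : m ≤ L), ((walkSteps s).take m).sum = s ⟨m, by omega⟩
  | 0, _ => by simpa using h0.symm
  | m + 1, hm => by
    have hml : m < (walkSteps s).length := by simp; omega
    rw [List.sum_take_succ _ m hml, walkSteps_take s h0 m (by omega)]
    have := walkSteps_get s m (by omega)
    rw [List.getD_eq_getElem _ _ hml] at this
    rw [this]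
    ring

theorem ups_eq_sum (j : ℤ) : ∀ (l : List ℤ) (h : ℤ),
    ups j h l = ∑ i ∈ Finset.range l.length,
      if h + ((l.take i).sum) = j ∧ l.getD i 0 = 1 then 1 else 0
  | [], h => by simp
  | a :: l, h => by
    rw [ups_cons, ups_eq_sum j l (h + a)]
    simp only [List.length_cons]
    rw [Finset.sum_range_succ']
    rw [add_comm]
    congr 1
    · refine Finset.sum_congr rfl (fun i _ => ?_)
      refine if_congr ?_ rfl rfl
      rw [List.take_succ_cons, List.sum_cons, ← add_assoc]
      rfl
    · simp

theorem upcross_eq_ups (L : ℕ) (s : Fin (L + 1) → ℤ) (hw : IsWalk L s) (j : ℤ) :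
    upcross L s j = ups j 0 (walkSteps s) := by
  classical
  rw [upcross, Fintype.card_subtype, Finset.card_filter, ups_eq_sum, length_walkSteps]
  rw [← Fin.sum_univ_eq_sum_range
    (fun i => if 0 + ((walkSteps s).take i).sum = j ∧ (walkSteps s).getD i 0 = 1 then 1 else 0) L]
  refine Finset.sum_congr rfl (fun i _ => ?_)
  refine if_congr ?_ rfl rfl
  rw [walkSteps_take s hw.1 i (le_of_lt i.isLt), walkSteps_get s i i.isLt, zero_add]
  have e1 : s i.castSucc = s ⟨(i : ℕ), by omega⟩ := by congr 1
  have e2 : s i.succ = s ⟨(i : ℕ) + 1, by omega⟩ := by congr 1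
  rw [e1, e2]
  constructor
  · rintro ⟨hc, hs⟩; exact ⟨hc, by omega⟩
  · rintro ⟨hc, hs⟩; exact ⟨hc, by omega⟩

theorem steps_walkSteps {L : ℕ} (s : Fin (L + 1) → ℤ) (hw : IsWalk L s) :
    Steps (walkSteps s) := by
  intro a ha
  rw [walkSteps, List.mem_ofFn] at ha
  obtain ⟨i, rfl⟩ := ha
  have := hw.2 i
  rcases abs_eq (by norm_num : (0:ℤ) ≤ 1) |>.1 this with h | h
  · exact Or.inl h
  · exact Or.inr h

theorem sum_walkSteps {L : ℕ} (s : Fin (L + 1) → ℤ) (h0 : s 0 = 0) :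
    (walkSteps s).sum = s (Fin.last L) := by
  have := walkSteps_take s h0 L le_rfl
  rwa [List.take_of_length_le (by simp)] at this

def listWalk (L : ℕ) (l : List ℤ) : Fin (L + 1) → ℤ := fun m => ((l.take m).sum)

theorem listWalk_isWalk (L : ℕ) (l : List ℤ) (hlen : l.length = L) (hs : Steps l) :
    IsWalk L (listWalk L l) := by
  constructor
  · simp [listWalk]
  · intro i
    have hml : (i : ℕ) < l.length := by omega
    have h1 : (i.succ : ℕ) = (i : ℕ) + 1 := rfl
    have h2 : (i.castSucc : ℕ) = (i : ℕ) := rfl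
    simp only [listWalk, h1, h2]
    rw [List.sum_take_succ _ _ hml]
    have : l[(i : ℕ)] = 1 ∨ l[(i : ℕ)] = -1 := hs _ (List.getElem_mem hml)
    rcases this with h | h <;> rw [h] <;> simp

theorem walkSteps_listWalk (L : ℕ) (l : List ℤ) (hlen : l.length = L) :
    walkSteps (listWalk L l) = l := by
  apply List.ext_getElem (by simp [hlen])
  intro i h1 h2
  have h3 : i < L := by simpa using h1
  have := walkSteps_get (listWalk L l) i h3
  rw [List.getD_eq_getElem _ _ (by simpa using h3)] at this
  rw [this]
  simp only [listWalk]
  rw [List.sum_take_succ _ _ (by omega)]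
  ring

theorem listWalk_walkSteps (L : ℕ) (s : Fin (L + 1) → ℤ) (hw : IsWalk L s) :
    listWalk L (walkSteps s) = s := by
  funext m
  simp only [listWalk]
  rw [walkSteps_take s hw.1 m (by omega)]

def WListCond (L t : ℕ) (n : Fin t → ℕ) (l : List ℤ) : Prop :=
  l.length = L ∧ Steps l ∧ l.sum = 0 ∧
  (∀ i : Fin t, ups ((i : ℕ) : ℤ) 0 l = 2 * n i) ∧
  ∀ m : ℤ, (∀ i : Fin t, m ≠ ((i : ℕ) : ℤ)) → ups m 0 l = 0

def walkEquiv (L t : ℕ) (n : Fin t → ℕ) :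
    {s : Fin (L + 1) → ℤ //
      IsClosedWalk L s ∧
      (∀ i : Fin t, upcross L s ((i : ℕ) : ℤ) = 2 * n i) ∧
      ∀ m : ℤ, (∀ i : Fin t, m ≠ ((i : ℕ) : ℤ)) → upcross L s m = 0}
    ≃ {l : List ℤ // WListCond L t n l} where
  toFun x := ⟨walkSteps x.1,
    length_walkSteps _, steps_walkSteps _ x.2.1.1,
    by rw [sum_walkSteps _ x.2.1.1.1, x.2.1.2],
    fun i => by rw [← upcross_eq_ups _ _ x.2.1.1]; exact x.2.2.1 i,
    fun m hm => by rw [← upcross_eq_ups _ _ x.2.1.1]; exact x.2.2.2 m hm⟩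
  invFun y := ⟨listWalk L y.1, by
    obtain ⟨hlen, hs, hsum, hc1, hc2⟩ := y.2
    have hw : IsWalk L (listWalk L y.1) := listWalk_isWalk L y.1 hlen hs
    have hws : walkSteps (listWalk L y.1) = y.1 := walkSteps_listWalk L y.1 hlen
    refine ⟨⟨hw, ?_⟩, fun i => ?_, fun m hm => ?_⟩
    · show ((y.1.take (Fin.last L : ℕ)).sum) = 0
      rw [show ((Fin.last L : ℕ)) = L from rfl]
      rw [List.take_of_length_le (by omega), hsum]
    · rw [upcross_eq_ups _ _ hw, hws]; exact hc1 i
    · rw [upcross_eq_ups _ _ hw, hws]; exact hc2 m hm⟩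
  left_inv x := Subtype.ext (listWalk_walkSteps L x.1 x.2.1.1)
  right_inv y := Subtype.ext (walkSteps_listWalk L y.1 y.2.1)

theorem Wcount_eq_card (t : ℕ) (n : Fin t → ℕ) :
    Wcount t n = Nat.card {l : List ℤ // WListCond (4 * ∑ i, n i) t n l} :=
  Nat.card_congr (walkEquiv (4 * ∑ i, n i) t n)

/-! ### counting the insertion data -/

theorem ofFn_getD (v : ℕ) (K : List ℕ) (h : K.length = v) :
    List.ofFn (fun i : Fin v => K.getD i 0) = K := by
  apply List.ext_getElem (by simp [h])
  intro i h1 h2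
  rw [List.getElem_ofFn]
  exact List.getD_eq_getElem _ _ h2

def KListEquiv (v m : ℕ) :
    {K : List ℕ // K.length = v ∧ K.sum = m} ≃ {f : Fin v → ℕ // ∑ i, f i = m} where
  toFun K := ⟨fun i => K.1.getD i 0, by
    rw [← List.sum_ofFn, ofFn_getD v K.1 K.2.1]; exact K.2.2⟩
  invFun f := ⟨List.ofFn f.1, by simp, by rw [List.sum_ofFn]; exact f.2⟩
  left_inv K := Subtype.ext (ofFn_getD v K.1 K.2.1)
  right_inv f := Subtype.ext (by
    funext i
    show (List.ofFn f.1).getD i 0 = f.1 i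
    rw [List.getD_eq_getElem _ _ (by simp), List.getElem_ofFn])

theorem card_KSet (v m : ℕ) :
    Nat.card {K : List ℕ // K.length = v ∧ K.sum = m} = Nat.multichoose v m := by
  classical
  rw [Nat.card_congr ((KListEquiv v m).trans (Sym.equivNatSumOfFintype (Fin v) m).symm),
    Nat.card_eq_fintype_card, Sym.card_sym_eq_multichoose, Fintype.card_fin]

/-! ### assembly -/

theorem small_facts (t : ℕ) (n : Fin (t + 2) → ℕ) (l' : List ℤ)
    (h : WListCond (4 * ∑ i : Fin (t + 1), n i.castSucc) (t + 1) (fun i => n i.castSucc) l') :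
    ups ((t : ℤ) + 1) 0 l' = 0 ∧ vis ((t : ℤ) + 1) 0 l' = 2 * n ((Fin.last t).castSucc) := by
  obtain ⟨hlen, hs, hsum, hc1, hc2⟩ := h
  have hu : ups ((t : ℤ) + 1) 0 l' = 0 := by
    refine hc2 _ (fun i => ?_)
    have := i.isLt
    omega
  refine ⟨hu, ?_⟩
  have hv := vis_eq ((t : ℤ) + 1) l' hs (by omega) (by rw [hsum]; omega) hu
  rw [hv, show ((t : ℤ) + 1 - 1) = ((Fin.last t : ℕ) : ℤ) by simp]
  exact hc1 (Fin.last t)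

theorem forward_mem (t : ℕ) (n : Fin (t + 2) → ℕ) (l : List ℤ)
    (hb : WListCond (4 * ∑ i, n i) (t + 2) n l) :
    WListCond (4 * ∑ i : Fin (t + 1), n i.castSucc) (t + 1) (fun i => n i.castSucc)
      (del ((t : ℤ) + 1) 0 l) ∧
    ((ext ((t : ℤ) + 1) 0 l).length = 2 * n ((Fin.last t).castSucc) ∧
     (ext ((t : ℤ) + 1) 0 l).sum = 2 * n (Fin.last (t + 1))) ∧
    ins ((t : ℤ) + 1) 0 (del ((t : ℤ) + 1) 0 l) (ext ((t : ℤ) + 1) 0 l) = l := by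
  obtain ⟨hlen, hs, hsum, hc1, hc2⟩ := hb
  have hU : ups ((t : ℤ) + 1 + 1) 0 l = 0 := by
    refine hc2 _ (fun i => ?_)
    have := i.isLt
    omega
  have hE0 : (0 : ℤ) + l.sum ≠ (t : ℤ) + 1 := by rw [hsum]; omega
  have hE1 : (0 : ℤ) + l.sum ≠ (t : ℤ) + 1 + 1 := by rw [hsum]; omega
  obtain ⟨A, B, C, D, E, F, G, H⟩ :=
    del_big ((t : ℤ) + 1) l.length l 0 le_rfl hs hU hE0 hE1
  have hA : ups ((t : ℤ) + 1) 0 l = 2 * n (Fin.last (t + 1)) := by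
    have := hc1 (Fin.last (t + 1))
    rw [show (((Fin.last (t + 1) : ℕ)) : ℤ) = (t : ℤ) + 1 by simp] at this
    exact this
  have hsmall : WListCond (4 * ∑ i : Fin (t + 1), n i.castSucc) (t + 1)
      (fun i => n i.castSucc) (del ((t : ℤ) + 1) 0 l) := by
    have hSsum : (∑ i, n i) = (∑ i : Fin (t + 1), n i.castSucc) + n (Fin.last (t + 1)) :=
      Fin.sum_univ_castSucc n
    refine ⟨?_, E, by rw [A, hsum], fun i => ?_, fun m hm => ?_⟩
    · rw [hA] at B
      omega
    · have hje : ((i : ℕ) : ℤ) ≠ (t : ℤ) + 1 := by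
        have := i.isLt
        omega
      rw [C _ hje]
      have := hc1 i.castSucc
      rw [show (((i.castSucc : ℕ)) : ℤ) = ((i : ℕ) : ℤ) by simp] at this
      exact this
    · by_cases hm2 : m = (t : ℤ) + 1
      · rw [hm2]; exact D
      · rw [C _ hm2]
        refine hc2 m (fun i => ?_)
        by_cases hit : (i : ℕ) < t + 1
        · have := hm ⟨(i : ℕ), hit⟩
          simpa using this
        · have : (i : ℕ) = t + 1 := by have := i.isLt; omega
          rw [this]
          push_cast
          exact hm2
  have hvis := (small_facts t n _ hsmall).2
  refine ⟨hsmall, ⟨?_, ?_⟩, H⟩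
  · rw [G]; exact hvis
  · rw [F]; exact hA

theorem backward_mem (t : ℕ) (n : Fin (t + 2) → ℕ) (l' : List ℤ) (K : List ℕ)
    (hsm : WListCond (4 * ∑ i : Fin (t + 1), n i.castSucc) (t + 1) (fun i => n i.castSucc) l')
    (hK1 : K.length = 2 * n ((Fin.last t).castSucc)) (hK2 : K.sum = 2 * n (Fin.last (t + 1))) :
    WListCond (4 * ∑ i, n i) (t + 2) n (ins ((t : ℤ) + 1) 0 l' K) ∧
    del ((t : ℤ) + 1) 0 (ins ((t : ℤ) + 1) 0 l' K) = l' ∧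
    ext ((t : ℤ) + 1) 0 (ins ((t : ℤ) + 1) 0 l' K) = K := by
  obtain ⟨hu, hv⟩ := small_facts t n l' hsm
  obtain ⟨hlen, hs, hsum, hc1, hc2⟩ := hsm
  have hKv : K.length = vis ((t : ℤ) + 1) 0 l' := by rw [hv, hK1]
  have hSsum : (∑ i, n i) = (∑ i : Fin (t + 1), n i.castSucc) + n (Fin.last (t + 1)) :=
    Fin.sum_univ_castSucc n
  refine ⟨⟨?_, ins_steps _ _ _ _ hs, by rw [ins_sum, hsum], fun i => ?_, fun m hm => ?_⟩,
    del_ins _ _ _ _ hs hu hKv, ext_ins _ _ _ _ hs hu hKv⟩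
  · rw [ins_length _ _ _ _ hKv, hlen, hK2]
    omega
  · rw [ins_ups _ _ _ _ _ hKv]
    by_cases hit : (i : ℕ) < t + 1
    · rw [if_neg (by have := hit; intro hc; omega)]
      have := hc1 ⟨(i : ℕ), hit⟩
      simp only at this
      rw [show ((((⟨(i : ℕ), hit⟩ : Fin (t + 1)) : ℕ)) : ℤ) = ((i : ℕ) : ℤ) from rfl] at this
      rw [this]
      have : (⟨(i : ℕ), hit⟩ : Fin (t + 1)).castSucc = i := by
        apply Fin.ext
        simp
      rw [this]
      omega
    · have hieq : (i : ℕ) = t + 1 := by have := i.isLt; omega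
      rw [if_pos (by rw [hieq]; push_cast; ring)]
      have hupz : ups (((i : ℕ) : ℤ)) 0 l' = 0 := by
        rw [hieq]
        push_cast
        exact hu
      rw [hupz, hK2]
      have : i = Fin.last (t + 1) := by apply Fin.ext; simpa using hieq
      rw [this]
      omega
  · rw [ins_ups _ _ _ _ _ hKv]
    have hmt : m ≠ (t : ℤ) + 1 := by
      intro hc
      have := hm (Fin.last (t + 1))
      rw [show (((Fin.last (t + 1) : ℕ)) : ℤ) = (t : ℤ) + 1 by simp] at this
      exact this hc
    rw [if_neg hmt]
    have : ups m 0 l' = 0 := by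
      refine hc2 m (fun i => ?_)
      have := hm i.castSucc
      rwa [show (((i.castSucc : ℕ)) : ℤ) = ((i : ℕ) : ℤ) by simp] at this
    rw [this]

noncomputable def mainEquiv (t : ℕ) (n : Fin (t + 2) → ℕ) :
    {l : List ℤ // WListCond (4 * ∑ i, n i) (t + 2) n l} ≃
      {l : List ℤ // WListCond (4 * ∑ i : Fin (t + 1), n i.castSucc) (t + 1)
        (fun i => n i.castSucc) l} ×
      {K : List ℕ // K.length = 2 * n ((Fin.last t).castSucc) ∧
        K.sum = 2 * n (Fin.last (t + 1))} where
  toFun x := (⟨del ((t : ℤ) + 1) 0 x.1, (forward_mem t n x.1 x.2).1⟩,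
              ⟨ext ((t : ℤ) + 1) 0 x.1, (forward_mem t n x.1 x.2).2.1⟩)
  invFun y := ⟨ins ((t : ℤ) + 1) 0 y.1.1 y.2.1,
    (backward_mem t n y.1.1 y.2.1 y.1.2 y.2.2.1 y.2.2.2).1⟩
  left_inv x := Subtype.ext (forward_mem t n x.1 x.2).2.2
  right_inv y := by
    have h := backward_mem t n y.1.1 y.2.1 y.1.2 y.2.2.1 y.2.2.2
    exact Prod.ext (Subtype.ext h.2.1) (Subtype.ext h.2.2)

end WalkAux


/-- Appending a new top level multiplies the walk count by a binomial coefficient: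
for `t + 1 >= 1` levels (the tuple has `t + 2` entries, so the paper's `t` is our
`t + 1`) and positive integers `n 0, ..., n (t+1)`, one has
`W(n 0, ..., n t, n (t+1)) = C(2 * n (t+1) + 2 * n t - 1, 2 * n (t+1)) * W(n 0, ..., n t)`. -/
theorem Wcount_append (t : ℕ) (n : Fin (t + 2) → ℕ) (hn : ∀ i, 0 < n i) :
    Wcount (t + 2) n =
      Nat.choose (2 * n (Fin.last (t + 1)) + 2 * n ((Fin.last t).castSucc) - 1)
        (2 * n (Fin.last (t + 1))) * Wcount (t + 1) (fun i => n i.castSucc) := by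
  classical
  rw [WalkAux.Wcount_eq_card (t + 2) n, WalkAux.Wcount_eq_card (t + 1) (fun i => n i.castSucc)]
  rw [Nat.card_congr (WalkAux.mainEquiv t n), Nat.card_prod, WalkAux.card_KSet,
    Nat.multichoose_eq]
  rw [show 2 * n ((Fin.last t).castSucc) + 2 * n (Fin.last (t + 1)) - 1
      = 2 * n (Fin.last (t + 1)) + 2 * n ((Fin.last t).castSucc) - 1 by omega]
  ring
end

section
/- Adding one level below the origin multiplies the walk count by a binomial coefficient without the −1: for t ≥ 1 and positive integers n_0, n_1, …, n_t, the number W₋(n_0; n_1, …, n_t) of closed walks with u(−1) = 2·n_0, u(j−1) = 2·n_j for 1 ≤ j ≤ t, and u = 0 on all other edges, satisfies W₋(n_0; n_1, …, n_t) = C(2·n_0 + 2·n_1, 2·n_0) · W(n_1, …, n_t). -/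
namespace WB

def Valid (d : List ℤ) : Prop := ∀ x ∈ d, x = 1 ∨ x = -1

def uc (j : ℤ) : ℤ → List ℤ → ℕ
  | _, [] => 0
  | p, x :: d => (if p = j ∧ x = 1 then 1 else 0) + uc j (p + x) d

@[simp] lemma uc_nil (j p : ℤ) : uc j p [] = 0 := rfl

lemma uc_cons (j p x : ℤ) (d : List ℤ) :
    uc j p (x :: d) = (if p = j ∧ x = 1 then 1 else 0) + uc j (p + x) d := rfl

lemma uc_append (j : ℤ) : ∀ (a b : List ℤ) (p : ℤ),
    uc j p (a ++ b) = uc j p a + uc j (p + a.sum) b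
  | [], b, p => by simp
  | x :: a, b, p => by
    simp only [List.cons_append, uc_cons, uc_append j a b (p + x), List.sum_cons]
    rw [← add_assoc p x a.sum]
    omega

lemma uc_eq_zero_of_ne (j : ℤ) : ∀ (d : List ℤ) (p : ℤ),
    (∀ k, k < d.length → p + (d.take k).sum ≠ j) → uc j p d = 0
  | [], p, _ => rfl
  | x :: d, p, h => by
    rw [uc_cons, uc_eq_zero_of_ne j d (p + x)]
    · have := h 0 (by simp)
      simp at this
      simp [this]
    · intro k hk
      have := h (k + 1) (by simpa using hk)
      simpa [add_assoc] using this

lemma uc_pos (q : ℤ) : ∀ (d : List ℤ), Valid d → ∀ p : ℤ, p ≤ q → q < p + d.sum →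
    1 ≤ uc q p d
  | [], _, p, h1, h2 => by simp at h2; omega
  | x :: d, hv, p, h1, h2 => by
    rw [uc_cons]
    by_cases hc : p = q ∧ x = 1
    · simp [hc]
    · have hx : x = 1 ∨ x = -1 := hv x (by simp)
      have hple : p + x ≤ q := by
        rcases hx with rfl | rfl
        · rcases eq_or_lt_of_le h1 with rfl | hlt
          · exact absurd ⟨rfl, rfl⟩ hc
          · omega
        · omega
      have := uc_pos q d (fun y hy => hv y (by simp [hy])) (p + x)
        hple (by simp at h2 ⊢; omega)
      omega

lemma valid_of_sublist {a d : List ℤ} (h : a.Sublist d) (hv : Valid d) : Valid a :=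
  fun x hx => hv x (h.subset hx)

lemma sum_take_succ_ge {d : List ℤ} (hv : Valid d) (k : ℕ) :
    (d.take k).sum - 1 ≤ (d.take (k + 1)).sum := by
  by_cases hk : k < d.length
  · rw [List.sum_take_succ d k hk]
    have := hv d[k] (List.getElem_mem hk)
    omega
  · rw [List.take_of_length_le (by omega), List.take_of_length_le (by omega)]
    omega

/-- Discrete intermediate value: prefix sums start at `0`, move by `±1`. -/
lemma ivt_down {d : List ℤ} (hv : Valid d) (c : ℤ) (hc : c ≤ 0) :
    ∀ j : ℕ, (d.take j).sum ≤ c → ∃ j' ≤ j, (d.take j').sum = c := by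
  intro j
  induction j with
  | zero => intro h; exact ⟨0, le_refl 0, by simp at h ⊢; omega⟩
  | succ j ih =>
    intro h
    by_cases h' : (d.take j).sum ≤ c
    · obtain ⟨j', hj', hj''⟩ := ih h'
      exact ⟨j', by omega, hj''⟩
    · refine ⟨j + 1, le_refl _, ?_⟩
      have := sum_take_succ_ge hv j
      omega

lemma take_sum_ge {d : List ℤ} (hv : Valid d) (hs : d.sum = 0) (b : ℤ)
    (hb : b ≤ 0) (h0 : ∀ m : ℤ, m < b → uc m 0 d = 0) :
    ∀ k, b ≤ (d.take k).sum := by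
  intro k
  by_contra hcon
  push_neg at hcon
  set q := (d.take k).sum with hq
  have h1 : uc q 0 d = uc q 0 (d.take k) + uc q (0 + q) (d.drop k) := by
    conv_lhs => rw [← List.take_append_drop k d]
    rw [uc_append]
  have h2 : 1 ≤ uc q (0 + q) (d.drop k) := by
    apply uc_pos q _ (valid_of_sublist (List.drop_sublist k d) hv) _ (by omega)
    have : (d.take k).sum + (d.drop k).sum = 0 := by
      rw [← List.sum_append, List.take_append_drop, hs]
    omega
  have := h0 q (by omega)
  omega

/-! ### Blocks -/

def PosExc (e : List ℤ) : Prop :=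
  Valid e ∧ e.sum = 0 ∧ e ≠ [] ∧ ∀ k, 0 < k → k < e.length → 0 < (e.take k).sum

def Block (b : List ℤ) : Prop := b = [-1, 1] ∨ PosExc b

lemma bounce_valid : Valid [(-1 : ℤ), 1] := by
  intro x hx; simp at hx; rcases hx with rfl | rfl <;> simp

lemma Block.ne_nil {b : List ℤ} (h : Block b) : b ≠ [] := by
  rcases h with rfl | h
  · simp
  · exact h.2.2.1

lemma Block.sum_eq {b : List ℤ} (h : Block b) : b.sum = 0 := by
  rcases h with rfl | h
  · simp
  · exact h.2.1

lemma Block.valid {b : List ℤ} (h : Block b) : Valid b := by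
  rcases h with rfl | h
  · exact bounce_valid
  · exact h.1

lemma PosExc.two_le_length {e : List ℤ} (h : PosExc e) : 2 ≤ e.length := by
  obtain ⟨hv, hs, hne, hpre⟩ := h
  rcases e with _ | ⟨x, r⟩
  · exact absurd rfl hne
  rcases r with _ | ⟨y, r⟩
  · exfalso
    rcases hv x (by simp) with rfl | rfl <;> simp at hs
  · simp only [List.length_cons]
    omega

lemma PosExc.head_one {e : List ℤ} (h : PosExc e) : ∃ r, e = 1 :: r := by
  obtain ⟨x, r, rfl⟩ : ∃ x r, e = x :: r := by
    rcases e with _ | ⟨x, r⟩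
    · exact absurd rfl h.2.2.1
    · exact ⟨x, r, rfl⟩
  have hlen := h.two_le_length
  have h1 : 0 < ((x :: r).take 1).sum := h.2.2.2 1 (by omega) (by
    simp only [List.length_cons] at hlen ⊢
    omega)
  simp at h1
  have hx := h.1 x (by simp)
  have : x = 1 := by omega
  exact ⟨r, by rw [this]⟩

lemma bounce_not_posExc : ¬ PosExc [(-1 : ℤ), 1] := by
  intro h
  obtain ⟨r, hr⟩ := h.head_one
  simp at hr

lemma PosExc.uc_neg {e : List ℤ} (h : PosExc e) {j : ℤ} (hj : j < 0) :
    uc j 0 e = 0 := by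
  apply uc_eq_zero_of_ne
  intro k hk
  rcases Nat.eq_zero_or_pos k with rfl | hk0
  · simp; omega
  · have := h.2.2.2 k hk0 hk
    omega

lemma PosExc.uc_zero {e : List ℤ} (h : PosExc e) : uc 0 0 e = 1 := by
  obtain ⟨r, rfl⟩ := h.head_one
  have hz : uc 0 1 r = 0 := by
    apply uc_eq_zero_of_ne
    intro k hk
    have h2 : 0 < ((1 :: r).take (k + 1)).sum :=
      h.2.2.2 (k + 1) (by omega) (by simp only [List.length_cons] at hk ⊢; omega)
    simp only [List.take_succ_cons, List.sum_cons] at h2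
    omega
  rw [uc_cons]
  norm_num [hz]

lemma uc_bounce (j : ℤ) : uc j 0 [(-1 : ℤ), 1] = if j = -1 then 1 else 0 := by
  rw [uc_cons, uc_cons]
  norm_num
  by_cases h : j = -1 <;> simp [h]
  · omega

lemma Block.uc_neg_one {b : List ℤ} (h : Block b) :
    uc (-1) 0 b = if b = [-1, 1] then 1 else 0 := by
  rcases h with rfl | h
  · simp [uc_bounce]
  · rw [if_neg, h.uc_neg (by omega)]
    intro hb
    exact bounce_not_posExc (hb ▸ h)

lemma Block.uc_zero {b : List ℤ} (h : Block b) :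
    uc 0 0 b = if b = [-1, 1] then 0 else 1 := by
  rcases h with rfl | h
  · simp [uc_bounce]
  · rw [if_neg, h.uc_zero]
    intro hb
    exact bounce_not_posExc (hb ▸ h)

/-! ### Unique factorization into blocks -/

lemma block_prefix {b b' : List ℤ} (hb : Block b) (hb' : Block b')
    (hpre : b <+: b') : b = b' := by
  obtain ⟨w, rfl⟩ := hpre
  rcases eq_or_ne w [] with rfl | hw
  · simp
  exfalso
  have hblen : 0 < b.length := by
    have := hb.ne_nil
    cases b <;> simp_all
  have hwlen : 0 < w.length := by cases w <;> simp_all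
  rcases hb' with hbb | hp
  · -- b ++ w = [-1, 1], so b = [-1]
    have hlen : b.length + w.length = 2 := by
      have := congrArg List.length hbb
      simpa using this
    have hb1 : b.length = 1 := by omega
    have : b = [-1] := by
      have := (List.take_left : List.take b.length (b ++ w) = b)
      rw [hbb, hb1] at this
      simpa using this.symm
    rcases hb with rfl | hpb
    · simp at this
    · rw [this] at hpb
      have := hpb.2.1
      simp at this
  · have hsum : ((b ++ w).take b.length).sum = 0 := by
      rw [List.take_left, hb.sum_eq]
    have := hp.2.2.2 b.length hblen (by simp; omega)
    omega

lemma blocks_unique : ∀ (bs bs' : List (List ℤ)), (∀ b ∈ bs, Block b) →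
    (∀ b ∈ bs', Block b) → bs.flatten = bs'.flatten → bs = bs'
  | [], [], _, _, _ => rfl
  | [], b' :: bs', _, h', heq => by
    exfalso
    simp at heq
    exact (h' b' (by simp)).ne_nil heq.1
  | b :: bs, [], h, _, heq => by
    exfalso
    simp at heq
    exact (h b (by simp)).ne_nil heq.1
  | b :: bs, b' :: bs', h, h', heq => by
    simp only [List.flatten_cons] at heq
    have hbb : b = b' := by
      have h1 : b <+: (b ++ bs.flatten) := List.prefix_append _ _
      have h2 : b' <+: (b ++ bs.flatten) := heq ▸ List.prefix_append _ _
      rcases List.prefix_or_prefix_of_prefix h1 h2 with hp | hp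
      · exact block_prefix (h b (by simp)) (h' b' (by simp)) hp
      · exact (block_prefix (h' b' (by simp)) (h b (by simp)) hp).symm
    subst hbb
    have : bs.flatten = bs'.flatten := List.append_cancel_left heq
    rw [blocks_unique bs bs' (fun x hx => h x (by simp [hx]))
      (fun x hx => h' x (by simp [hx])) this]

lemma exists_factor : ∀ (N : ℕ) (d : List ℤ), d.length ≤ N → Valid d →
    d.sum = 0 → (∀ k, -1 ≤ (d.take k).sum) →
    ∃ bs : List (List ℤ), (∀ b ∈ bs, Block b) ∧ bs.flatten = d := by
  intro N
  induction N with
  | zero =>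
    intro d hlen _ _ _
    have : d = [] := by
      cases d
      · rfl
      · simp at hlen
    exact ⟨[], by simp, by simp [this]⟩
  | succ N ih =>
    intro d hlen hv hs hge
    rcases d with _ | ⟨x, r⟩
    · exact ⟨[], by simp, by simp⟩
    rcases hv x (by simp) with rfl | rfl
    · -- x = 1 : find first return to 0
      have hsr : r.sum = -1 := by simp at hs; omega
      have hP : ∃ k, (r.take k).sum = -1 :=
        ⟨r.length, by rw [List.take_length]; exact hsr⟩
      classical
      set k0 := Nat.find hP with hk0def
      have hk0 : (r.take k0).sum = -1 := Nat.find_spec hP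
      have hk0le : k0 ≤ r.length := Nat.find_le (by rw [List.take_length]; exact hsr)
      have hk0pos : 1 ≤ k0 := by
        rcases Nat.eq_zero_or_pos k0 with h0 | h
        · rw [h0] at hk0; simp at hk0
        · exact h
      have hvr : Valid r := valid_of_sublist (by simp) hv
      have hheights : ∀ j, j < k0 → 0 ≤ (r.take j).sum := by
        intro j hj
        by_contra hcon
        push_neg at hcon
        obtain ⟨j', hj', hj''⟩ := ivt_down hvr (-1) (by omega) j (by omega)
        exact Nat.find_min hP (by omega) hj''
      set e : List ℤ := 1 :: r.take k0 with he
      set rest : List ℤ := r.drop k0 with hrest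
      have hre : r.take k0 ++ rest = r := List.take_append_drop k0 r
      have hepos : PosExc e := by
        refine ⟨?_, by simp [he]; omega, by simp [he], ?_⟩
        · intro y hy
          simp [he] at hy
          rcases hy with rfl | hy
          · left; rfl
          · exact hvr y ((List.take_sublist _ _).subset hy)
        · intro k hk hklen
          have hlen_e : e.length = k0 + 1 := by
            rw [he]
            simp only [List.length_cons, List.length_take]
            omega
          obtain ⟨k', rfl⟩ : ∃ k', k = k' + 1 := ⟨k - 1, by omega⟩
          have hk'lt : k' < k0 := by omega
          have hmin : k' ⊓ k0 = k' := by omega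
          have htk : e.take (k' + 1) = 1 :: r.take k' := by
            rw [he, List.take_succ_cons, List.take_take, hmin]
          rw [htk]
          have hh := hheights k' hk'lt
          simp only [List.sum_cons]
          omega
      have hrest_sum : rest.sum = 0 := by
        have := congrArg List.sum hre
        rw [List.sum_append, hk0] at this
        omega
      have hrest_ge : ∀ k, -1 ≤ (rest.take k).sum := by
        intro k
        have h1 : r.take (k0 + k) = r.take k0 ++ rest.take k := by
          rw [List.take_add, hrest]
        have h2 := hge (k0 + k + 1)
        have h3 : ((1 :: r).take (k0 + k + 1)).sum = 1 + (r.take (k0 + k)).sum := by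
          simp [List.take_succ_cons]
        rw [h1, List.sum_append, hk0] at h3
        omega
      obtain ⟨bs', hbs', hflat⟩ := ih rest (by
        have h1 : rest.length = r.length - k0 := by simp [hrest]
        have h2 : (1 :: r).length = r.length + 1 := by simp
        omega) (valid_of_sublist (by simp [hrest]; exact (List.drop_sublist _ _).trans (by simp)) hv)
        hrest_sum hrest_ge
      refine ⟨e :: bs', ?_, ?_⟩
      · intro b hb
        rcases hb with _ | hb
        · exact Or.inr hepos
        · exact hbs' b (by assumption)
      · simp only [List.flatten_cons, hflat, he]
        simp [hre]
    · -- x = -1 : must bounce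
      rcases r with _ | ⟨y, r2⟩
      · simp at hs
      rcases hv y (by simp) with rfl | rfl
      · -- ok : bounce
        have hs2 : r2.sum = 0 := by simp at hs; omega
        have hge2 : ∀ k, -1 ≤ (r2.take k).sum := by
          intro k
          have := hge (k + 2)
          have h3 : ((-1 :: 1 :: r2).take (k + 2)).sum = (r2.take k).sum := by
            simp [List.take_succ_cons]
          omega
        obtain ⟨bs', hbs', hflat⟩ := ih r2 (by simp at hlen; omega)
          (valid_of_sublist ((List.sublist_cons_self _ _).trans (List.sublist_cons_self _ _)) hv)
          hs2 hge2
        refine ⟨[-1, 1] :: bs', ?_, ?_⟩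
        · intro b hb
          rcases hb with _ | hb
          · exact Or.inl rfl
          · exact hbs' b (by assumption)
        · simp [hflat]
      · exfalso
        have h2 := hge 2
        have h3 : ((-1 :: -1 :: r2).take 2).sum = -2 := by
          norm_num [List.take_succ_cons]
        omega

/-! ### Walks and step lists -/

def steps (L : ℕ) (s : Fin (L + 1) → ℤ) : List ℤ :=
  List.ofFn (fun i : Fin L => s i.succ - s i.castSucc)

@[simp] lemma length_steps (L : ℕ) (s : Fin (L + 1) → ℤ) :
    (steps L s).length = L := by simp [steps]

lemma take_steps_sum (L : ℕ) (s : Fin (L + 1) → ℤ) :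
    ∀ k, (hk : k ≤ L) → ((steps L s).take k).sum = s ⟨k, by omega⟩ - s 0 := by
  intro k
  induction k with
  | zero => intro hk; simp
  | succ k ih =>
    intro hk
    have hk' : k < (steps L s).length := by rw [length_steps]; omega
    rw [List.sum_take_succ _ _ hk', ih (by omega)]
    have hg : (steps L s)[k] = s ⟨k + 1, by omega⟩ - s ⟨k, by omega⟩ := by
      simp only [steps, List.getElem_ofFn, Fin.succ_mk, Fin.castSucc_mk]
    rw [hg]
    ring

lemma uc_eq_sum (j : ℤ) : ∀ (d : List ℤ) (p : ℤ),
    uc j p d = ∑ k ∈ Finset.range d.length,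
      (if p + (d.take k).sum = j ∧ d.getD k 0 = 1 then 1 else 0)
  | [], p => by simp
  | x :: d, p => by
    rw [uc_cons, uc_eq_sum j d (p + x)]
    rw [List.length_cons, Finset.sum_range_succ', add_comm]
    congr 1
    · apply Finset.sum_congr rfl
      intro k _
      have h1 : ((x :: d).take (k + 1)).sum = x + (d.take k).sum := by
        simp [List.take_succ_cons]
      have h2 : (x :: d).getD (k + 1) 0 = d.getD k 0 := rfl
      refine if_congr ?_ rfl rfl
      rw [h1, h2]
      constructor
      · rintro ⟨a, b⟩; exact ⟨by omega, b⟩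
      · rintro ⟨a, b⟩; exact ⟨by omega, b⟩
    · simp

lemma upcross_eq_uc (L : ℕ) (s : Fin (L + 1) → ℤ) (h0 : s 0 = 0) (j : ℤ) :
    upcross L s j = uc j 0 (steps L s) := by
  rw [upcross, Fintype.card_subtype, Finset.card_filter, uc_eq_sum, length_steps,
    ← Fin.sum_univ_eq_sum_range
      (fun k => if 0 + ((steps L s).take k).sum = j ∧ (steps L s).getD k 0 = 1 then 1 else 0) L]
  apply Finset.sum_congr rfl
  intro i _
  have h1 : ((steps L s).take (i : ℕ)).sum = s i.castSucc - s 0 := by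
    rw [take_steps_sum L s (i : ℕ) (le_of_lt i.isLt)]
    congr 1
  have h2 : (steps L s).getD (i : ℕ) 0 = s i.succ - s i.castSucc := by
    rw [List.getD_eq_getElem _ _ (by rw [length_steps]; exact i.isLt)]
    simp [steps]
  refine if_congr ?_ rfl rfl
  rw [h1, h2, h0]
  constructor
  · rintro ⟨a, b⟩; constructor <;> omega
  · rintro ⟨a, b⟩; constructor <;> omega

lemma steps_sum (L : ℕ) (s : Fin (L + 1) → ℤ) :
    (steps L s).sum = s (Fin.last L) - s 0 := by
  conv_lhs => rw [← (List.take_length : (steps L s).take (steps L s).length = steps L s)]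
  rw [length_steps, take_steps_sum L s L le_rfl]
  rfl

lemma card_walks (L : ℕ) (Q : (ℤ → ℕ) → Prop) :
    Nat.card {s : Fin (L + 1) → ℤ // IsClosedWalk L s ∧ Q (upcross L s)} =
    Nat.card {d : List ℤ //
      (Valid d ∧ d.length = L ∧ d.sum = 0) ∧ Q (fun j => uc j 0 d)} := by
  have key : ∀ (s : Fin (L + 1) → ℤ), IsClosedWalk L s →
      (fun j => uc j 0 (steps L s)) = upcross L s :=
    fun s hs => funext fun j => (upcross_eq_uc L s hs.1.1 j).symm
  have hf : ∀ (s : Fin (L + 1) → ℤ), (IsClosedWalk L s ∧ Q (upcross L s)) →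
      (Valid (steps L s) ∧ (steps L s).length = L ∧ (steps L s).sum = 0) ∧
        Q (fun j => uc j 0 (steps L s)) := by
    intro s hw
    refine ⟨⟨?_, by simp, ?_⟩, ?_⟩
    · intro x hx
      rw [steps, List.mem_ofFn] at hx
      obtain ⟨i, rfl⟩ := hx
      have := hw.1.1.2 i
      rcases abs_eq (by norm_num : (0:ℤ) ≤ 1) |>.mp this with h | h
      · exact Or.inl h
      · exact Or.inr h
    · rw [steps_sum, hw.1.1.1, hw.1.2]; ring
    · rw [key s hw.1]; exact hw.2
  apply Nat.card_eq_of_bijective (fun z => ⟨steps L z.1, hf z.1 z.2⟩)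
  constructor
  · rintro ⟨s, hs⟩ ⟨s', hs'⟩ h
    simp only [Subtype.mk.injEq] at h
    apply Subtype.ext
    funext i
    have e1 := take_steps_sum L s i.1 (by omega)
    have e2 := take_steps_sum L s' i.1 (by omega)
    rw [h] at e1
    have h0 : s 0 = 0 := hs.1.1.1
    have h0' : s' 0 = 0 := hs'.1.1.1
    have heq : s ⟨i.1, by omega⟩ = s' ⟨i.1, by omega⟩ := by omega
    simpa using heq
  · rintro ⟨d, ⟨hv, hlen, hsum⟩, hQ⟩
    set s : Fin (L + 1) → ℤ := fun i => (d.take i.1).sum with hsdef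
    have hwalk : IsWalk L s := by
      constructor
      · simp [hsdef]
      · intro i
        have hi : (i : ℕ) < d.length := by omega
        have : s i.succ - s i.castSucc = d[(i : ℕ)] := by
          simp only [hsdef, Fin.val_succ, Fin.coe_castSucc]
          rw [List.sum_take_succ _ _ hi]
          ring
        rw [this]
        rcases hv d[(i : ℕ)] (List.getElem_mem hi) with h | h <;> rw [h] <;> norm_num
    have hclosed : IsClosedWalk L s := by
      refine ⟨hwalk, ?_⟩
      simp only [hsdef]
      have : (Fin.last L : Fin (L + 1)).1 = L := rfl
      rw [this, List.take_of_length_le (by omega), hsum]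
    have hsteps : steps L s = d := by
      apply List.ext_getElem (by simp [hlen])
      intro k h1 h2
      have hk : k < L := by simpa using h1
      simp only [steps, List.getElem_ofFn, Fin.succ_mk, Fin.castSucc_mk, hsdef]
      rw [List.sum_take_succ _ _ h2]
      ring
    refine ⟨⟨s, hclosed, ?_⟩, ?_⟩
    · have hk := key s hclosed
      rw [hsteps] at hk
      rw [← hk]
      exact hQ
    · apply Subtype.ext
      exact hsteps

/-! ### Flatten lemmas -/

lemma uc_flatten (j : ℤ) : ∀ (bs : List (List ℤ)), (∀ b ∈ bs, b.sum = 0) →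
    uc j 0 bs.flatten = (bs.map (uc j 0)).sum
  | [], _ => by simp
  | b :: bs, h => by
    rw [List.flatten_cons, uc_append j b bs.flatten 0, h b (by simp), add_zero]
    rw [List.map_cons, List.sum_cons, uc_flatten j bs (fun x hx => h x (by simp [hx]))]

lemma valid_flatten {bs : List (List ℤ)} (h : ∀ b ∈ bs, Valid b) :
    Valid bs.flatten := by
  intro x hx
  rw [List.mem_flatten] at hx
  obtain ⟨b, hb, hxb⟩ := hx
  exact h b hb x hxb

/-! ### Interleaving bounces with positive excursions -/

def interleave : List Bool → List (List ℤ) → List (List ℤ)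
  | [], cs => cs
  | true :: m, cs => [-1, 1] :: interleave m cs
  | false :: m, [] => interleave m []
  | false :: m, c :: cs => c :: interleave m cs

def maskOf (bs : List (List ℤ)) : List Bool := bs.map (fun b => decide (b = [-1, 1]))

def posOf (bs : List (List ℤ)) : List (List ℤ) := bs.filter (fun b => !decide (b = [-1, 1]))

@[simp] lemma maskOf_nil : maskOf [] = [] := rfl
@[simp] lemma posOf_nil : posOf [] = [] := rfl

lemma maskOf_cons_pos (bs : List (List ℤ)) :
    maskOf ([(-1:ℤ), 1] :: bs) = true :: maskOf bs := by simp [maskOf]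

lemma maskOf_cons_neg {b : List ℤ} (hb : b ≠ [-1, 1]) (bs : List (List ℤ)) :
    maskOf (b :: bs) = false :: maskOf bs := by simp [maskOf, hb]

lemma posOf_cons_pos (bs : List (List ℤ)) :
    posOf ([(-1:ℤ), 1] :: bs) = posOf bs := by simp [posOf]

lemma posOf_cons_neg {b : List ℤ} (hb : b ≠ [-1, 1]) (bs : List (List ℤ)) :
    posOf (b :: bs) = b :: posOf bs := by simp [posOf, hb]

lemma interleave_eta : ∀ bs : List (List ℤ), interleave (maskOf bs) (posOf bs) = bs
  | [] => rfl
  | b :: bs => by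
    by_cases hb : b = [-1, 1]
    · subst hb
      rw [maskOf_cons_pos, posOf_cons_pos]
      show interleave (true :: _) _ = _
      rw [interleave, interleave_eta bs]
    · rw [maskOf_cons_neg hb, posOf_cons_neg hb]
      show interleave (false :: _) (b :: _) = _
      rw [interleave, interleave_eta bs]

lemma mem_interleave : ∀ (m : List Bool) (cs : List (List ℤ)) (b : List ℤ),
    b ∈ interleave m cs → b = [-1, 1] ∨ b ∈ cs
  | [], cs, b, h => Or.inr h
  | true :: m, cs, b, h => by
    rw [interleave, List.mem_cons] at h
    rcases h with rfl | h'
    · exact Or.inl rfl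
    · exact mem_interleave m cs b h'
  | false :: m, [], b, h => mem_interleave m [] b (by rwa [interleave] at h)
  | false :: m, c :: cs, b, h => by
    rw [interleave, List.mem_cons] at h
    rcases h with rfl | h'
    · exact Or.inr (by simp)
    · rcases mem_interleave m cs b h' with h'' | h''
      · exact Or.inl h''
      · exact Or.inr (by simp [h''])

lemma maskOf_posOf_interleave : ∀ (m : List Bool) (cs : List (List ℤ)),
    m.count false = cs.length → (∀ c ∈ cs, c ≠ [-1, 1]) →
    maskOf (interleave m cs) = m ∧ posOf (interleave m cs) = cs
  | [], cs, h, _ => by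
    have : cs = [] := List.length_eq_zero_iff.mp (by simpa using h.symm)
    subst this
    exact ⟨rfl, rfl⟩
  | true :: m, cs, h, hc => by
    have h' : m.count false = cs.length := by simpa [List.count_cons] using h
    obtain ⟨h1, h2⟩ := maskOf_posOf_interleave m cs h' hc
    rw [interleave, maskOf_cons_pos, posOf_cons_pos, h1, h2]
    exact ⟨rfl, rfl⟩
  | false :: m, [], h, _ => by
    exfalso
    simp [List.count_cons] at h
  | false :: m, c :: cs, h, hc => by
    have h' : m.count false = cs.length := by
      simp [List.count_cons] at h
      omega
    obtain ⟨h1, h2⟩ := maskOf_posOf_interleave m cs h'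
      (fun x hx => hc x (by simp [hx]))
    have hcb : c ≠ [-1, 1] := hc c (by simp)
    rw [interleave, maskOf_cons_neg hcb, posOf_cons_neg hcb, h1, h2]
    exact ⟨rfl, rfl⟩

lemma map_sum_interleave {M : Type*} [AddCommMonoid M] (g : List ℤ → M) :
    ∀ (m : List Bool) (cs : List (List ℤ)), m.count false = cs.length →
    ((interleave m cs).map g).sum = (m.count true) • g [-1, 1] + (cs.map g).sum
  | [], cs, h => by
    have : cs = [] := List.length_eq_zero_iff.mp (by simpa using h.symm)
    subst this
    simp [interleave]
  | true :: m, cs, h => by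
    have h' : m.count false = cs.length := by simpa [List.count_cons] using h
    rw [interleave, List.map_cons, List.sum_cons, map_sum_interleave g m cs h']
    have hc : (true :: m).count true = m.count true + 1 := by simp [List.count_cons]
    rw [hc, add_nsmul, one_nsmul]
    abel
  | false :: m, [], h => by
    exfalso
    simp [List.count_cons] at h
  | false :: m, c :: cs, h => by
    have h' : m.count false = cs.length := by
      simp [List.count_cons] at h
      omega
    rw [interleave, List.map_cons, List.sum_cons, map_sum_interleave g m cs h']
    have hc : (false :: m).count true = m.count true := by simp [List.count_cons]
    rw [hc, List.map_cons, List.sum_cons]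
    abel

lemma map_sum_split {M : Type*} [AddCommMonoid M] (g : List ℤ → M) :
    ∀ bs : List (List ℤ),
      (bs.map g).sum = ((maskOf bs).count true) • g [-1, 1] + ((posOf bs).map g).sum
  | [] => by simp
  | b :: bs => by
    rw [List.map_cons, List.sum_cons, map_sum_split g bs]
    by_cases hb : b = [-1, 1]
    · subst hb
      rw [maskOf_cons_pos, posOf_cons_pos]
      have hc : (true :: maskOf bs).count true = (maskOf bs).count true + 1 := by
        simp [List.count_cons]
      rw [hc, add_nsmul, one_nsmul]
      abel
    · rw [maskOf_cons_neg hb, posOf_cons_neg hb]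
      have hc : (false :: maskOf bs).count true = (maskOf bs).count true := by
        simp [List.count_cons]
      rw [hc, List.map_cons, List.sum_cons]
      abel

lemma count_false_maskOf : ∀ bs : List (List ℤ),
    (maskOf bs).count false = (posOf bs).length
  | [] => rfl
  | b :: bs => by
    by_cases hb : b = [-1, 1]
    · subst hb
      rw [maskOf_cons_pos bs, posOf_cons_pos bs, ← count_false_maskOf bs]
      simp [List.count_cons]
    · rw [maskOf_cons_neg hb, posOf_cons_neg hb]
      have := count_false_maskOf bs
      simp [List.count_cons]
      omega

lemma count_true_add_false : ∀ m : List Bool, m.count true + m.count false = m.length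
  | [] => rfl
  | b :: m => by
    have := count_true_add_false m
    cases b <;> simp [List.count_cons] <;> omega

lemma length_maskOf (bs : List (List ℤ)) : (maskOf bs).length = bs.length := by
  simp [maskOf]

lemma mem_posOf {bs : List (List ℤ)} {b : List ℤ} (h : b ∈ posOf bs) :
    b ∈ bs ∧ b ≠ [-1, 1] := by
  rw [posOf, List.mem_filter] at h
  refine ⟨h.1, by simpa using h.2⟩

/-! ### Counting masks -/

lemma count_true_eq_sum : ∀ m : List Bool,
    m.count true = ∑ k ∈ Finset.range m.length, (if m.getD k false then 1 else 0)
  | [] => by simp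
  | b :: m => by
    rw [List.count_cons, List.length_cons, Finset.sum_range_succ', count_true_eq_sum m]
    have h1 : ∀ k : ℕ, (b :: m).getD (k + 1) false = m.getD k false := fun k => rfl
    simp only [h1]
    congr 1
    cases b <;> simp

lemma count_true_ofFn : ∀ {l : ℕ} (f : Fin l → Bool),
    (List.ofFn f).count true = ∑ i : Fin l, (if f i then 1 else 0)
  | 0, f => by simp
  | l + 1, f => by
    rw [List.ofFn_succ, List.count_cons, Fin.sum_univ_succ,
      count_true_ofFn (fun i => f i.succ)]
    cases hf : f 0 <;> simp [hf] <;> omega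

lemma card_masks (l k : ℕ) :
    Nat.card {m : List Bool // m.length = l ∧ m.count true = k} = l.choose k := by
  classical
  have e : {m : List Bool // m.length = l ∧ m.count true = k} ≃
      {A : Finset (Fin l) // A.card = k} := by
    refine ⟨fun z => ⟨Finset.univ.filter (fun i : Fin l => z.1.getD (i : ℕ) false = true), ?_⟩,
      fun z => ⟨List.ofFn (fun i : Fin l => decide ((i : Fin l) ∈ z.1)), by simp, ?_⟩, ?_, ?_⟩
    · obtain ⟨m, hm1, hm2⟩ := z
      rw [Finset.card_filter,
        Fin.sum_univ_eq_sum_range (fun kk => if m.getD kk false = true then 1 else 0) l,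
        ← hm1, ← count_true_eq_sum m]
      exact hm2
    · obtain ⟨A, hA⟩ := z
      rw [count_true_ofFn]
      have : ∀ i : Fin l, (if decide (i ∈ A) then 1 else 0) = if i ∈ A then 1 else 0 := by
        intro i
        by_cases h : i ∈ A <;> simp [h]
      rw [Finset.sum_congr rfl (fun i _ => this i), Finset.sum_boole]
      simp [Finset.filter_mem_eq_inter, hA]
    · rintro ⟨m, hm1, hm2⟩
      apply Subtype.ext
      apply List.ext_getElem (by simp [hm1])
      intro kk h1 h2
      have hkl : kk < l := by simpa using h1
      rw [List.getElem_ofFn]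
      have : m.getD kk false = m[kk] := List.getD_eq_getElem m false h2
      simp only [this]
      cases hmk : m[kk] <;> simp [List.getElem?_eq_getElem h2, hmk]
    · rintro ⟨A, hA⟩
      apply Subtype.ext
      ext i
      simp only [Finset.mem_filter, Finset.mem_univ, true_and]
      rw [List.getD_eq_getElem _ _ (by simp [i.isLt]), List.getElem_ofFn]
      simp
  rw [Nat.card_congr e, Nat.card_eq_fintype_card, Fintype.card_finset_len, Fintype.card_fin]

/-! ### The conditions -/

def QL (t n0 : ℕ) (n : Fin (t + 1) → ℕ) : (ℤ → ℕ) → Prop := fun u =>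
  u (-1) = 2 * n0 ∧ (∀ i : Fin (t + 1), u ((i : ℕ) : ℤ) = 2 * n i) ∧
    ∀ m : ℤ, m ≠ -1 → (∀ i : Fin (t + 1), m ≠ ((i : ℕ) : ℤ)) → u m = 0

def QR (t : ℕ) (n : Fin t → ℕ) : (ℤ → ℕ) → Prop := fun u =>
  (∀ i : Fin t, u ((i : ℕ) : ℤ) = 2 * n i) ∧
    ∀ m : ℤ, (∀ i : Fin t, m ≠ ((i : ℕ) : ℤ)) → u m = 0

def PL (t n0 : ℕ) (n : Fin (t + 1) → ℕ) (d : List ℤ) : Prop :=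
  (Valid d ∧ d.length = 4 * (n0 + ∑ i, n i) ∧ d.sum = 0) ∧
    QL t n0 n (fun j => uc j 0 d)

def PR (t : ℕ) (n : Fin t → ℕ) (d : List ℤ) : Prop :=
  (Valid d ∧ d.length = 4 * (∑ i, n i) ∧ d.sum = 0) ∧
    QR t n (fun j => uc j 0 d)

lemma PL_ge (t n0 : ℕ) (n : Fin (t + 1) → ℕ) (d : List ℤ) (h : PL t n0 n d) :
    Valid d ∧ d.sum = 0 ∧ ∀ k, -1 ≤ (d.take k).sum := by
  obtain ⟨⟨hv, _, hs⟩, _, _, h3⟩ := h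
  refine ⟨hv, hs, take_sum_ge hv hs (-1) (by omega) ?_⟩
  intro m hm
  exact h3 m (by omega) (fun i => by have : (0:ℤ) ≤ ((i : ℕ) : ℤ) := Int.natCast_nonneg _; omega)

lemma PR_ge (t : ℕ) (n : Fin t → ℕ) (d : List ℤ) (h : PR t n d) :
    Valid d ∧ d.sum = 0 ∧ ∀ k, -1 ≤ (d.take k).sum := by
  obtain ⟨⟨hv, _, hs⟩, _, h2⟩ := h
  refine ⟨hv, hs, fun k => le_trans (by omega) (take_sum_ge hv hs 0 le_rfl ?_ k)⟩
  intro m hm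
  exact h2 m (fun i => by have : (0:ℤ) ≤ ((i : ℕ) : ℤ) := Int.natCast_nonneg _; omega)

lemma blocks_card (P : List ℤ → Prop)
    (hP : ∀ d, P d → Valid d ∧ d.sum = 0 ∧ ∀ k, -1 ≤ (d.take k).sum) :
    Nat.card {bs : List (List ℤ) // (∀ b ∈ bs, Block b) ∧ P bs.flatten} =
    Nat.card {d : List ℤ // P d} := by
  apply Nat.card_eq_of_bijective (fun z => ⟨z.1.flatten, z.2.2⟩)
  constructor
  · rintro ⟨bs, hbs, _⟩ ⟨bs', hbs', _⟩ h
    simp only [Subtype.mk.injEq] at h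
    exact Subtype.ext (blocks_unique bs bs' hbs hbs' h)
  · rintro ⟨d, hd⟩
    obtain ⟨hv, hs, hge⟩ := hP d hd
    obtain ⟨bs, hbs, hflat⟩ := exists_factor d.length d le_rfl hv hs hge
    exact ⟨⟨bs, hbs, by rwa [hflat]⟩, Subtype.ext hflat⟩

lemma sum_map_one {α : Type*} (cs : List α) : (cs.map (fun _ => (1:ℕ))).sum = cs.length := by
  induction cs with
  | nil => simp
  | cons c cs ih => simp [ih]; omega

/-- facts about a list of blocks whose flattening satisfies the right condition -/
lemma S3_facts (t : ℕ) (n : Fin (t + 1) → ℕ) (cs : List (List ℤ))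
    (hB : ∀ b ∈ cs, Block b) (hPR : PR (t + 1) n cs.flatten) :
    (∀ c ∈ cs, PosExc c) ∧ cs.length = 2 * n 0 := by
  have hsum0 : ∀ b ∈ cs, b.sum = 0 := fun b hb => (hB b hb).sum_eq
  have hucm1 : uc (-1) 0 cs.flatten = 0 := by
    apply hPR.2.2 (-1)
    intro i
    have : (0:ℤ) ≤ ((i : ℕ) : ℤ) := Int.natCast_nonneg _
    omega
  rw [uc_flatten _ _ hsum0] at hucm1
  have hpos : ∀ c ∈ cs, PosExc c := by
    intro c hc
    rcases hB c hc with hb | hp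
    · exfalso
      have h1 : uc (-1) 0 c = 1 := by rw [hb, uc_bounce]; simp
      have h2 : uc (-1) 0 c ∈ cs.map (uc (-1) 0) := List.mem_map_of_mem hc
      have := (List.sum_eq_zero_iff).mp hucm1 _ h2
      omega
    · exact hp
  constructor
  · exact hpos
  · have h0 : uc ((((0 : Fin (t+1)) : ℕ)) : ℤ) 0 cs.flatten = 2 * n 0 := hPR.2.1 0
    have h0' : uc 0 0 cs.flatten = 2 * n 0 := by simpa using h0
    rw [uc_flatten _ _ hsum0] at h0'
    have : cs.map (uc 0 0) = cs.map (fun _ => 1) :=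
      List.map_congr_left (fun c hc => (hpos c hc).uc_zero)
    rw [this, sum_map_one] at h0'
    omega

lemma flatten_interleave_stats (m : List Bool) (cs : List (List ℤ))
    (hcount : m.count false = cs.length) (hsum0 : ∀ b ∈ cs, b.sum = 0) :
    (∀ j : ℤ, uc j 0 (interleave m cs).flatten
        = m.count true * (if j = -1 then 1 else 0) + uc j 0 cs.flatten) ∧
    (interleave m cs).flatten.length = m.count true * 2 + cs.flatten.length ∧
    (interleave m cs).flatten.sum = cs.flatten.sum := by
  have hsums : ∀ b ∈ interleave m cs, b.sum = 0 := by
    intro b hb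
    rcases mem_interleave _ _ _ hb with rfl | h
    · simp
    · exact hsum0 b h
  refine ⟨?_, ?_, ?_⟩
  · intro j
    rw [uc_flatten j _ hsums, map_sum_interleave (uc j 0) m cs hcount, uc_bounce,
      uc_flatten j cs hsum0, smul_eq_mul]
  · rw [List.length_flatten, map_sum_interleave List.length m cs hcount,
      List.length_flatten, smul_eq_mul]
    norm_num
  · rw [List.sum_flatten, map_sum_interleave List.sum m cs hcount, List.sum_flatten]
    norm_num

lemma flatten_split_stats (bs : List (List ℤ)) (hsum0 : ∀ b ∈ bs, b.sum = 0) :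
    (∀ j : ℤ, uc j 0 bs.flatten
        = (maskOf bs).count true * (if j = -1 then 1 else 0) + uc j 0 (posOf bs).flatten) ∧
    bs.flatten.length = (maskOf bs).count true * 2 + (posOf bs).flatten.length ∧
    bs.flatten.sum = (posOf bs).flatten.sum := by
  have hsum0' : ∀ b ∈ posOf bs, b.sum = 0 := fun b hb => hsum0 b (mem_posOf hb).1
  refine ⟨?_, ?_, ?_⟩
  · intro j
    rw [uc_flatten j _ hsum0, map_sum_split (uc j 0) bs, uc_bounce,
      uc_flatten j _ hsum0', smul_eq_mul]
  · rw [List.length_flatten, map_sum_split List.length bs, List.length_flatten, smul_eq_mul]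
    norm_num
  · rw [List.sum_flatten, map_sum_split List.sum bs, List.sum_flatten]
    norm_num

lemma card_shuffle (t n0 : ℕ) (n : Fin (t + 1) → ℕ) :
    Nat.card ({m : List Bool // m.length = 2 * n0 + 2 * n 0 ∧ m.count true = 2 * n0} ×
      {cs : List (List ℤ) // (∀ b ∈ cs, Block b) ∧ PR (t + 1) n cs.flatten}) =
    Nat.card {bs : List (List ℤ) // (∀ b ∈ bs, Block b) ∧ PL t n0 n bs.flatten} := by
  have hmain : ∀ (m : List Bool) (cs : List (List ℤ)),
      (m.length = 2 * n0 + 2 * n 0 ∧ m.count true = 2 * n0) →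
      ((∀ b ∈ cs, Block b) ∧ PR (t + 1) n cs.flatten) →
      (m.count false = cs.length ∧ (∀ c ∈ cs, c ≠ [-1, 1])) ∧
      ((∀ b ∈ interleave m cs, Block b) ∧ PL t n0 n (interleave m cs).flatten) := by
    rintro m cs ⟨hm1, hm2⟩ ⟨hcsB, hPR⟩
    obtain ⟨hpos, hlen_cs⟩ := S3_facts t n cs hcsB hPR
    have hne : ∀ c ∈ cs, c ≠ [-1, 1] := fun c hc hb => bounce_not_posExc (hb ▸ hpos c hc)
    have hcount : m.count false = cs.length := by
      have := count_true_add_false m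
      omega
    have hsum0 : ∀ b ∈ cs, b.sum = 0 := fun b hb => (hcsB b hb).sum_eq
    obtain ⟨huc, hlen, hsum⟩ := flatten_interleave_stats m cs hcount hsum0
    obtain ⟨⟨hvR, hlenR, hsumR⟩, hQR1, hQR2⟩ := hPR
    refine ⟨⟨hcount, hne⟩, ?_, ?_⟩
    · intro b hb
      rcases mem_interleave _ _ _ hb with rfl | h
      · exact Or.inl rfl
      · exact hcsB b h
    · refine ⟨⟨?_, ?_, ?_⟩, ?_, ?_, ?_⟩
      · exact valid_flatten (fun b hb => by
          rcases mem_interleave _ _ _ hb with rfl | h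
          · exact bounce_valid
          · exact (hcsB b h).valid)
      · rw [hlen, hlenR, hm2]
        ring
      · rw [hsum, hsumR]
      · show uc (-1) 0 (interleave m cs).flatten = 2 * n0
        rw [huc (-1), hm2, if_pos rfl]
        have hz : uc (-1) 0 cs.flatten = 0 :=
          hQR2 (-1) (fun i => by have := Int.natCast_nonneg (i : ℕ); omega)
        rw [hz]
        ring
      · intro i
        show uc ((i : ℕ) : ℤ) 0 (interleave m cs).flatten = 2 * n i
        rw [huc _, if_neg (by have := Int.natCast_nonneg (i : ℕ); omega)]
        have h := hQR1 i
        simp only at h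
        omega
      · intro m' hm'1 hm'2
        show uc m' 0 (interleave m cs).flatten = 0
        rw [huc m', if_neg hm'1]
        have h := hQR2 m' hm'2
        simp only at h
        omega
  apply Nat.card_eq_of_bijective
    (fun z => ⟨interleave z.1.1 z.2.1, (hmain z.1.1 z.2.1 z.1.2 z.2.2).2⟩)
  constructor
  · rintro ⟨⟨m, hm⟩, ⟨cs, hcs⟩⟩ ⟨⟨m', hm'⟩, ⟨cs', hcs'⟩⟩ h
    simp only [Subtype.mk.injEq] at h
    obtain ⟨⟨hc1, hn1⟩, _⟩ := hmain m cs hm hcs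
    obtain ⟨⟨hc2, hn2⟩, _⟩ := hmain m' cs' hm' hcs'
    obtain ⟨e1, e2⟩ := maskOf_posOf_interleave m cs hc1 hn1
    obtain ⟨e1', e2'⟩ := maskOf_posOf_interleave m' cs' hc2 hn2
    simp only [Prod.mk.injEq]
    exact ⟨Subtype.ext (by show m = m'; rw [← e1, h, e1']),
      Subtype.ext (by show cs = cs'; rw [← e2, h, e2'])⟩
  · rintro ⟨bs, hB, hPL⟩
    have hsum0 : ∀ b ∈ bs, b.sum = 0 := fun b hb => (hB b hb).sum_eq
    obtain ⟨huc, hlen, hsum⟩ := flatten_split_stats bs hsum0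
    obtain ⟨⟨hv, hlenL, hsumL⟩, hQ1, hQ2, hQ3⟩ := hPL
    simp only at hQ1 hQ2 hQ3
    have hposB : ∀ c ∈ posOf bs, Block c := fun c hc => hB c (mem_posOf hc).1
    have hpos : ∀ c ∈ posOf bs, PosExc c := by
      intro c hc
      rcases hposB c hc with hb | hp
      · exact absurd hb (mem_posOf hc).2
      · exact hp
    have hsum0' : ∀ b ∈ posOf bs, b.sum = 0 := fun b hb => hsum0 b (mem_posOf hb).1
    have hucm1cs : uc (-1) 0 (posOf bs).flatten = 0 := by
      rw [uc_flatten _ _ hsum0']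
      apply List.sum_eq_zero
      intro x hx
      rw [List.mem_map] at hx
      obtain ⟨c, hc, rfl⟩ := hx
      exact (hpos c hc).uc_neg (by omega)
    have hct : (maskOf bs).count true = 2 * n0 := by
      have h1 := huc (-1)
      rw [if_pos rfl, hucm1cs] at h1
      omega
    have hucics : ∀ i : Fin (t + 1), uc ((i : ℕ) : ℤ) 0 (posOf bs).flatten = 2 * n i := by
      intro i
      have h1 := huc ((i : ℕ) : ℤ)
      rw [if_neg (by have := Int.natCast_nonneg (i : ℕ); omega), hQ2 i] at h1
      omega
    have hucm'cs : ∀ m' : ℤ, (∀ i : Fin (t + 1), m' ≠ ((i : ℕ) : ℤ)) →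
        uc m' 0 (posOf bs).flatten = 0 := by
      intro m' hm'
      rcases eq_or_ne m' (-1) with rfl | hne1
      · exact hucm1cs
      · have h1 := huc m'
        rw [if_neg hne1, hQ3 m' hne1 hm'] at h1
        omega
    have hlenM : (posOf bs).flatten.length = 4 * (∑ i, n i) := by
      rw [hlenL] at hlen
      omega
    have hsumM : (posOf bs).flatten.sum = 0 := by
      rw [hsumL] at hsum
      omega
    have hPRpos : PR (t + 1) n (posOf bs).flatten :=
      ⟨⟨valid_flatten (fun b hb => (hposB b hb).valid), hlenM, hsumM⟩, hucics, hucm'cs⟩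
    have hcslen : (posOf bs).length = 2 * n 0 := (S3_facts t n (posOf bs) hposB hPRpos).2
    have hmlen : (maskOf bs).length = 2 * n0 + 2 * n 0 := by
      have h1 := count_true_add_false (maskOf bs)
      have h2 := count_false_maskOf bs
      omega
    refine ⟨⟨⟨maskOf bs, hmlen, hct⟩, ⟨posOf bs, hposB, hPRpos⟩⟩, ?_⟩
    exact Subtype.ext (interleave_eta bs)

end WB

/-- Adding one level below the origin multiplies the walk count by a binomial
coefficient without the `-1`: for positive integers `n0` and `n 0, ..., n t`
(so the paper's `t` is our `t + 1 >= 1`), the number of closed walks with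
`u (-1) = 2 * n0`, `u (j - 1) = 2 * n_j` for `1 <= j <= t + 1`, and `u = 0`
on all other edges, equals `C(2 * n0 + 2 * n 0, 2 * n0) * W(n 0, ..., n t)`. -/
theorem Wcount_below (t : ℕ) (n0 : ℕ) (hn0 : 0 < n0)
    (n : Fin (t + 1) → ℕ) (hn : ∀ i, 0 < n i) :
    Nat.card {s : Fin (4 * (n0 + ∑ i, n i) + 1) → ℤ //
      IsClosedWalk (4 * (n0 + ∑ i, n i)) s ∧
      upcross (4 * (n0 + ∑ i, n i)) s (-1) = 2 * n0 ∧
      (∀ i : Fin (t + 1), upcross (4 * (n0 + ∑ i, n i)) s ((i : ℕ) : ℤ) = 2 * n i) ∧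
      ∀ m : ℤ, m ≠ -1 → (∀ i : Fin (t + 1), m ≠ ((i : ℕ) : ℤ)) →
        upcross (4 * (n0 + ∑ i, n i)) s m = 0} =
    Nat.choose (2 * n0 + 2 * n 0) (2 * n0) * Wcount (t + 1) n := by
  classical
  calc
    Nat.card {s : Fin (4 * (n0 + ∑ i, n i) + 1) → ℤ //
      IsClosedWalk (4 * (n0 + ∑ i, n i)) s ∧
      upcross (4 * (n0 + ∑ i, n i)) s (-1) = 2 * n0 ∧
      (∀ i : Fin (t + 1), upcross (4 * (n0 + ∑ i, n i)) s ((i : ℕ) : ℤ) = 2 * n i) ∧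
      ∀ m : ℤ, m ≠ -1 → (∀ i : Fin (t + 1), m ≠ ((i : ℕ) : ℤ)) →
        upcross (4 * (n0 + ∑ i, n i)) s m = 0}
        = Nat.card {d : List ℤ // WB.PL t n0 n d} :=
          WB.card_walks (4 * (n0 + ∑ i, n i)) (WB.QL t n0 n)
    _ = Nat.card {bs : List (List ℤ) //
          (∀ b ∈ bs, WB.Block b) ∧ WB.PL t n0 n bs.flatten} :=
          (WB.blocks_card _ (WB.PL_ge t n0 n)).symm
    _ = Nat.card ({m : List Bool //
            m.length = 2 * n0 + 2 * n 0 ∧ m.count true = 2 * n0} ×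
          {cs : List (List ℤ) // (∀ b ∈ cs, WB.Block b) ∧ WB.PR (t + 1) n cs.flatten}) :=
          (WB.card_shuffle t n0 n).symm
    _ = Nat.card {m : List Bool //
            m.length = 2 * n0 + 2 * n 0 ∧ m.count true = 2 * n0} *
          Nat.card {cs : List (List ℤ) //
            (∀ b ∈ cs, WB.Block b) ∧ WB.PR (t + 1) n cs.flatten} := Nat.card_prod _ _
    _ = Nat.choose (2 * n0 + 2 * n 0) (2 * n0) *
          Nat.card {cs : List (List ℤ) //
            (∀ b ∈ cs, WB.Block b) ∧ WB.PR (t + 1) n cs.flatten} := by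
          rw [WB.card_masks]
    _ = Nat.choose (2 * n0 + 2 * n 0) (2 * n0) *
          Nat.card {d : List ℤ // WB.PR (t + 1) n d} := by
          rw [WB.blocks_card _ (WB.PR_ge (t + 1) n)]
    _ = Nat.choose (2 * n0 + 2 * n 0) (2 * n0) * Wcount (t + 1) n := by
          have h := (WB.card_walks (4 * ∑ i, n i) (WB.QR (t + 1) n)).symm
          exact congrArg (fun x => Nat.choose (2 * n0 + 2 * n 0) (2 * n0) * x) h
end

section
/- The initial counts of even-visiting returns to the origin are c_0 = 1, c_1 = 2, c_2 = 14, c_3 = 116, and c_4 = 1110. -/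
/-- `c k`: the number of even-visiting closed walks of length `4 * k`. -/
noncomputable def c (k : ℕ) : ℕ :=
  Nat.card {s : Fin (4 * k + 1) → ℤ //
    IsClosedWalk (4 * k) s ∧ EvenVisiting (4 * k) s}

/-! ### Walks as step functions -/

def posAux (L : ℕ) (b : Fin L → Bool) : ℕ → ℤ
  | 0 => 0
  | n+1 => posAux L b n + (if h : n < L then (if b ⟨n, h⟩ then 1 else -1) else 0)

def posOf (L : ℕ) (b : Fin L → Bool) (i : Fin (L + 1)) : ℤ :=
  posAux L b i.val

def stepsOf (L : ℕ) (s : Fin (L + 1) → ℤ) (i : Fin L) : Bool :=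
  s i.succ - s i.castSucc = 1

lemma posOf_zero (L : ℕ) (b : Fin L → Bool) : posOf L b 0 = 0 := rfl

lemma posOf_succ (L : ℕ) (b : Fin L → Bool) (i : Fin L) :
    posOf L b i.succ = posOf L b i.castSucc + (if b i then 1 else -1) := by
  show posAux L b (i.val + 1) = _
  rw [posAux, dif_pos i.isLt]
  rfl

lemma isWalk_posOf (L : ℕ) (b : Fin L → Bool) : IsWalk L (posOf L b) := by
  refine ⟨posOf_zero L b, fun i => ?_⟩
  rw [posOf_succ]
  cases h : b i <;> simp

lemma posOf_stepsOf (L : ℕ) (s : Fin (L + 1) → ℤ) (hs : IsWalk L s) :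
    posOf L (stepsOf L s) = s := by
  funext i
  induction i using Fin.induction with
  | zero => rw [posOf_zero, hs.1]
  | succ i ih =>
    rw [posOf_succ, ih]
    have h := hs.2 i
    rcases abs_eq (by norm_num : (0:ℤ) ≤ 1) |>.mp h with h1 | h1
    · simp only [stepsOf, h1]
      simp; omega
    · have : ¬ (s i.succ - s i.castSucc = 1) := by omega
      simp only [stepsOf, decide_eq_true_eq]
      rw [if_neg this]
      omega

lemma stepsOf_posOf (L : ℕ) (b : Fin L → Bool) : stepsOf L (posOf L b) = b := by
  funext i
  unfold stepsOf
  rw [posOf_succ]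
  cases h : b i <;> simp

def P (L : ℕ) (b : Fin L → Bool) : Prop :=
  posOf L b (Fin.last L) = 0 ∧ EvenVisiting L (posOf L b)

def walkEquiv (L : ℕ) :
    {b : Fin L → Bool // P L b} ≃
      {s : Fin (L + 1) → ℤ // IsClosedWalk L s ∧ EvenVisiting L s} where
  toFun b := ⟨posOf L b.1, ⟨⟨isWalk_posOf L b.1, b.2.1⟩, b.2.2⟩⟩
  invFun s := ⟨stepsOf L s.1, by
    have h : posOf L (stepsOf L s.1) = s.1 := posOf_stepsOf L s.1 s.2.1.1
    unfold P
    rw [h]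
    exact ⟨s.2.1.2, s.2.2⟩⟩
  left_inv b := Subtype.ext (stepsOf_posOf L b.1)
  right_inv s := Subtype.ext (posOf_stepsOf L s.1 s.2.1.1)

/-! ### List-level computation -/

def dstep (a : Bool) : ℤ := if a then 1 else -1

def posL (x : ℤ) : List Bool → List ℤ
  | [] => [x]
  | a :: l => x :: posL (x + dstep a) l

def tog (x : ℤ) : List ℤ → List ℤ
  | [] => [x]
  | y :: l => if x == y then l else y :: tog x l

def oddSet : List ℤ → List ℤ
  | [] => []
  | x :: m => tog x (oddSet m)

def good (m : List ℤ) : Bool :=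
  (m.head? == some (0 : ℤ)) && (oddSet m).all (· == 0)

def chk (l : List Bool) : Bool := good ((posL 0 l).reverse)

def allB : ℕ → List (List Bool)
  | 0 => [[]]
  | n+1 => ((allB n).map (true :: ·)) ++ ((allB n).map (false :: ·))

lemma mem_allB : ∀ (n : ℕ) (l : List Bool), l ∈ allB n ↔ l.length = n
  | 0, l => by simp [allB, List.length_eq_zero_iff]
  | n+1, l => by
    cases l with
    | nil => simp [allB]
    | cons a t =>
      have h := mem_allB n t
      cases a <;> simp [allB, h]

lemma nodup_allB : ∀ n : ℕ, (allB n).Nodup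
  | 0 => by simp [allB]
  | n+1 => by
    have h := nodup_allB n
    have inj : ∀ (a : Bool), Function.Injective (fun l : List Bool => a :: l) := by
      intro a x y hxy
      simpa using hxy
    refine List.Nodup.append (h.map (inj true)) (h.map (inj false)) ?_
    intro x hx hy
    rw [List.mem_map] at hx hy
    obtain ⟨u, -, rfl⟩ := hx
    obtain ⟨v, -, hv⟩ := hy
    simp at hv

/-! ### `posL` of a step function -/

lemma posAux_shift (L : ℕ) (b : Fin (L + 1) → Bool) :
    ∀ n, n ≤ L → posAux (L + 1) b (n + 1)
      = dstep (b 0) + posAux L (fun j => b j.succ) n := by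
  intro n
  induction n with
  | zero =>
    intro _
    simp [posAux, dstep]
    rfl
  | succ n ih =>
    intro hn
    have h1 : n ≤ L := Nat.le_of_succ_le hn
    have h2 : n + 1 < L + 1 := Nat.succ_lt_succ (Nat.lt_of_succ_le hn)
    have h3 : n < L := Nat.lt_of_succ_le hn
    rw [posAux, dif_pos h2, ih h1]
    conv_rhs => rw [posAux, dif_pos h3]
    have : b ⟨n + 1, h2⟩ = (fun j : Fin L => b j.succ) ⟨n, h3⟩ := rfl
    rw [this]
    ring

lemma posL_ofFn : ∀ (L : ℕ) (b : Fin L → Bool) (x : ℤ),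
    posL x (List.ofFn b) = List.ofFn (fun i : Fin (L + 1) => x + posOf L b i)
  | 0, b, x => by simp [List.ofFn_zero, posL, posOf, posAux, List.ofFn_succ]
  | L+1, b, x => by
    rw [List.ofFn_succ, posL, posL_ofFn L (fun j => b j.succ) (x + dstep (b 0))]
    rw [List.ofFn_succ (f := fun i : Fin (L + 2) => x + posOf (L + 1) b i)]
    congr 1
    · show x = x + posAux (L+1) b 0
      simp [posAux]
    · refine List.ofFn_inj.mpr (funext fun i => ?_)
      show x + dstep (b 0) + posAux L (fun j => b j.succ) i.val
        = x + posAux (L + 1) b (i.val + 1)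
      rw [posAux_shift L b i.val (Nat.le_of_lt_succ i.isLt)]
      ring

lemma count_ofFn (x : ℤ) : ∀ (n : ℕ) (f : Fin n → ℤ),
    (List.ofFn f).count x = Fintype.card {i // f i = x}
  | 0, f => by simp
  | n+1, f => by
    rw [List.ofFn_succ, List.count_cons, count_ofFn x n (fun i => f i.succ)]
    rw [Fintype.card_subtype, Fintype.card_subtype, Finset.card_filter,
      Finset.card_filter, Fin.sum_univ_succ]
    simp only [beq_iff_eq]
    rcases eq_or_ne (f 0) x with h | h
    · simp [h, Nat.add_comm]
    · simp [h, Ne.symm h]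

lemma getLast?_ofFn (n : ℕ) (f : Fin (n + 1) → ℤ) :
    (List.ofFn f).getLast? = some (f (Fin.last n)) := by
  have hne : List.ofFn f ≠ [] := by simp [List.ofFn_eq_nil_iff]
  rw [List.getLast?_eq_getLast hne, List.getLast_ofFn_succ]

/-! ### `oddSet` computes parities of counts -/

lemma count_tog (x z : ℤ) (s : List ℤ) :
    (tog x s).count z % 2 = (s.count z + if z = x then 1 else 0) % 2 := by
  induction s with
  | nil =>
    rcases eq_or_ne z x with h | h <;> simp [tog, List.count_cons, h] <;> simp [h.symm]
  | cons y s ih =>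
    rcases eq_or_ne x y with rfl | hxy
    · rw [tog, if_pos (by simp)]
      rw [List.count_cons]
      simp only [beq_iff_eq]
      split_ifs at ih ⊢ <;> omega
    · rw [tog, if_neg (by simpa using hxy)]
      rw [List.count_cons, List.count_cons]
      simp only [beq_iff_eq]
      split_ifs at ih ⊢ <;> omega

lemma count_tog_le (x z : ℤ) (s : List ℤ) :
    (tog x s).count z ≤ s.count z + 1 := by
  induction s with
  | nil =>
    rcases eq_or_ne z x with h | h <;> simp [tog, List.count_cons, h] <;> simp [h.symm]
  | cons y s ih =>
    rcases eq_or_ne x y with rfl | hxy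
    · rw [tog, if_pos (by simp)]
      rw [List.count_cons]
      omega
    · rw [tog, if_neg (by simpa using hxy)]
      rw [List.count_cons, List.count_cons]
      omega

lemma count_tog_self (x : ℤ) (s : List ℤ) :
    (tog x s).count x = if x ∈ s then s.count x - 1 else s.count x + 1 := by
  induction s with
  | nil => simp [tog]
  | cons y s ih =>
    rcases eq_or_ne x y with rfl | hxy
    · rw [tog, if_pos (by simp)]
      simp [List.count_cons]
    · rw [tog, if_neg (by simpa using hxy)]
      rw [List.count_cons, List.count_cons]
      by_cases hm : x ∈ s
      · rw [if_pos hm] at ih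
        rw [if_pos (List.mem_cons_of_mem y hm)]
        have hc := List.count_pos_iff.mpr hm
        simp only [beq_iff_eq, if_neg hxy]
        omega
      · rw [if_neg hm] at ih
        have hnm : ¬ (x ∈ y :: s) := by
          intro hmem
          rcases List.mem_cons.mp hmem with h | h
          · exact hxy h
          · exact hm h
        rw [if_neg hnm]
        simp only [beq_iff_eq, if_neg hxy]
        omega

lemma count_tog_le_one (x : ℤ) (s : List ℤ) (hs : ∀ z, s.count z ≤ 1) :
    ∀ z, (tog x s).count z ≤ 1 := by
  intro z
  rcases eq_or_ne z x with rfl | hzx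
  · have h1 := count_tog_self z s
    have := hs z
    by_cases hm : z ∈ s
    · rw [if_pos hm] at h1
      omega
    · rw [if_neg hm] at h1
      have h0 : s.count z = 0 := List.count_eq_zero.mpr hm
      omega
  · have h1 := count_tog x z s
    have h2 := count_tog_le x z s
    have := hs z
    rw [if_neg hzx] at h1
    omega

lemma count_oddSet_le_one : ∀ (m : List ℤ) (z : ℤ), (oddSet m).count z ≤ 1
  | [], z => by simp [oddSet]
  | x :: m, z => count_tog_le_one x (oddSet m) (count_oddSet_le_one m) z

lemma count_oddSet_parity : ∀ (m : List ℤ) (z : ℤ),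
    (oddSet m).count z % 2 = m.count z % 2
  | [], z => by simp [oddSet]
  | x :: m, z => by
    rw [oddSet, count_tog, List.count_cons]
    have ih := count_oddSet_parity m z
    simp only [beq_iff_eq]
    split_ifs <;> omega

lemma mem_oddSet (m : List ℤ) (z : ℤ) : z ∈ oddSet m ↔ ¬ Even (m.count z) := by
  have h1 := count_oddSet_le_one m z
  have h2 := count_oddSet_parity m z
  rw [Nat.even_iff]
  constructor
  · intro hz
    have := List.count_pos_iff.mpr hz
    omega
  · intro hodd
    have : (oddSet m).count z ≠ 0 := by omega
    exact List.count_pos_iff.mp (by omega)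

lemma good_iff (m : List ℤ) :
    good m = true ↔ m.head? = some 0 ∧ ∀ z : ℤ, z ≠ 0 → Even (m.count z) := by
  unfold good
  rw [Bool.and_eq_true, List.all_eq_true, beq_iff_eq]
  constructor
  · rintro ⟨h1, h2⟩
    refine ⟨h1, fun z hz => ?_⟩
    by_contra hodd
    have := h2 z ((mem_oddSet m z).mpr hodd)
    exact hz (by simpa using this)
  · rintro ⟨h1, h2⟩
    refine ⟨h1, fun z hz => ?_⟩
    rw [mem_oddSet] at hz
    by_contra hz0
    exact hz (h2 z (by simpa using hz0))

lemma chk_iff (L : ℕ) (b : Fin L → Bool) : chk (List.ofFn b) = true ↔ P L b := by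
  unfold chk
  have hm : posL 0 (List.ofFn b) = List.ofFn (posOf L b) := by
    rw [posL_ofFn]
    exact List.ofFn_inj.mpr (funext fun i => zero_add _)
  rw [hm, good_iff, List.head?_reverse, getLast?_ofFn]
  unfold P EvenVisiting
  constructor
  · rintro ⟨h1, h2⟩
    refine ⟨by simpa using h1, fun x hx => ?_⟩
    have := h2 x hx
    rw [List.count_reverse, count_ofFn] at this
    exact this
  · rintro ⟨h1, h2⟩
    refine ⟨by simpa using h1, fun x hx => ?_⟩
    rw [List.count_reverse, count_ofFn]
    exact h2 x hx

/-! ### Counting via a finset from the explicit list -/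

def goodF (L : ℕ) : Finset (List Bool) :=
  ⟨((allB L).filter chk : List (List Bool)), (nodup_allB L).filter chk⟩

lemma mem_goodF (L : ℕ) (l : List Bool) :
    l ∈ goodF L ↔ l.length = L ∧ chk l = true := by
  show l ∈ ((allB L).filter chk : List (List Bool)) ↔ _
  rw [List.mem_filter, mem_allB]

def fromList (L : ℕ) (l : List Bool) (h : l.length = L) : Fin L → Bool :=
  fun i => l.get (Fin.cast h.symm i)

lemma ofFn_fromList (L : ℕ) (l : List Bool) (h : l.length = L) :
    List.ofFn (fromList L l h) = l := by
  subst h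
  exact List.ofFn_get l

def listEquiv (L : ℕ) : {b : Fin L → Bool // P L b} ≃ {l : List Bool // l ∈ goodF L} where
  toFun b := ⟨List.ofFn b.1, (mem_goodF L _).mpr
    ⟨List.length_ofFn, (chk_iff L b.1).mpr b.2⟩⟩
  invFun l :=
    ⟨fromList L l.1 ((mem_goodF L l.1).mp l.2).1, by
      have := ((mem_goodF L l.1).mp l.2).2
      rw [← ofFn_fromList L l.1 ((mem_goodF L l.1).mp l.2).1] at this
      exact (chk_iff L _).mp this⟩
  left_inv b := by
    apply Subtype.ext
    funext i
    simp [fromList, List.get_ofFn]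
  right_inv l := by
    apply Subtype.ext
    exact ofFn_fromList L l.1 ((mem_goodF L l.1).mp l.2).1

lemma c_eq_length (k : ℕ) : c k = ((allB (4 * k)).filter chk).length := by
  unfold c
  rw [← Nat.card_congr (walkEquiv (4 * k)), Nat.card_congr (listEquiv (4 * k)),
    Nat.card_eq_fintype_card, Fintype.card_coe]
  rfl

/-! ### Fast pruned DFS count -/

def ext (p : ℤ) (h : List ℤ) : List Bool → List ℤ
  | [] => h
  | a :: l => ext (p + dstep a) ((p + dstep a) :: h) l

def dfs (p : ℤ) (h : List ℤ) : ℕ → ℕ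
  | 0 => if good h then 1 else 0
  | n+1 =>
    if p.natAbs > n + 1 then 0
    else dfs (p + 1) ((p + 1) :: h) n + dfs (p + -1) ((p + -1) :: h) n

lemma good_ext_false : ∀ (l : List Bool) (p : ℤ) (h : List ℤ),
    p.natAbs > l.length → good (ext p (p :: h) l) = false
  | [], p, h => by
    intro hp
    have hp0 : p ≠ 0 := by omega
    show good (p :: h) = false
    unfold good
    have : ((p :: h).head? == some (0:ℤ)) = false := by
      simp [hp0]
    rw [this, Bool.false_and]
  | a :: l, p, h => by
    intro hp
    show good (ext (p + dstep a) ((p + dstep a) :: p :: h) l) = false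
    apply good_ext_false
    cases a <;> simp [dstep] <;> simp [List.length_cons] at hp <;> omega

lemma ext_eq : ∀ (l : List Bool) (p : ℤ) (h : List ℤ),
    ext p (p :: h) l = (posL p l).reverse ++ h
  | [], p, h => by simp [ext, posL]
  | a :: l, p, h => by
    show ext (p + dstep a) ((p + dstep a) :: p :: h) l = _
    rw [ext_eq l (p + dstep a) (p :: h), posL, List.reverse_cons, List.append_assoc]
    rfl

lemma dfs_eq : ∀ (n : ℕ) (p : ℤ) (h : List ℤ),
    dfs p (p :: h) n
      = ((allB n).filter (fun l => good (ext p (p :: h) l))).length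
  | 0, p, h => by
    show (if good (p :: h) then 1 else 0) = _
    have : ext p (p :: h) [] = p :: h := rfl
    cases hg : good (p :: h) <;> simp [allB, List.filter, this, hg]
  | n+1, p, h => by
    rw [dfs]
    rcases Nat.lt_or_ge (n + 1) p.natAbs with hp | hp
    · rw [if_pos hp]
      have hnil : ((allB (n+1)).filter (fun l => good (ext p (p :: h) l))) = [] := by
        rw [List.filter_eq_nil_iff]
        intro l hl
        have hlen : l.length = n + 1 := (mem_allB (n+1) l).mp hl
        rw [good_ext_false l p h (by omega)]
        simp
      rw [hnil]
      rfl
    · rw [if_neg (by omega)]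
      rw [dfs_eq n (p + 1) (p :: h), dfs_eq n (p + -1) (p :: h)]
      show _ = ((((allB n).map (true :: ·)) ++ ((allB n).map (false :: ·))).filter _).length
      rw [List.filter_append, List.length_append, List.filter_map, List.filter_map,
        List.length_map, List.length_map]
      rfl

lemma c_eq_dfs (k : ℕ) : c k = dfs 0 [0] (4 * k) := by
  rw [c_eq_length, dfs_eq (4 * k) 0 []]
  congr 1
  apply List.filter_congr
  intro l _
  rw [ext_eq l 0 [], List.append_nil]
  rfl

set_option maxRecDepth 100000 in
/-- The initial counts of even-visiting returns to the origin. -/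
theorem c_initial_values :
    c 0 = 1 ∧ c 1 = 2 ∧ c 2 = 14 ∧ c 3 = 116 ∧ c 4 = 1110 := by
  refine ⟨?_, ?_, ?_, ?_, ?_⟩ <;> rw [c_eq_dfs] <;> decide +kernel
end

section
/- Diagonal powers of the random tridiagonal matrix expand over closed walks: for N > k ≥ 1, any x : Fin N → ℝ, and any index r : Fin N, (M(x)^k)_{r,r} = ∑_s ∏_{j=−k}^{k−1} (x_{r+j mod N})^{u_s(j)}, where the sum runs over all closed walks s of length k and u_s(j) is the up-crossing count of s at j. -/
/-- The random tridiagonal matrix `M x`: the `N × N` matrix with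
`(M x) i j = 1` if `j ≡ i - 1 (mod N)`, `(M x) i j = x i` if `j ≡ i + 1 (mod N)`,
and `0` otherwise (arithmetic on `Fin N` is modulo `N`). -/
def Mmat (N : ℕ) [NeZero N] (x : Fin N → ℝ) : Matrix (Fin N) (Fin N) ℝ :=
  fun i j => if j = i - 1 then 1 else if j = i + 1 then x i else 0

open Fin.CommRing

/-!
Write `M = P + diag(x) Q` with `P`, `Q` the cyclic down- and up-shifts; for `N ≥ 3` the two
off-diagonals are disjoint, so expanding `M ^ k` row by row turns `(M ^ k) r t` into a sum over
`±1` step sequences whose height ends at `t - r (mod N)`, each weighted by `x (r + h)` for every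
up-step leaving height `h`. As `k < N`, returning to `r` modulo `N` forces height `0`, i.e. a
closed walk, and grouping the up-steps by their starting height gives `∏ⱼ x (r + j) ^ u(j)`.
-/

open Finset

def unitStep (b : Bool) : ℤ := if b then 1 else -1

def walkOfSteps {L : ℕ} (σ : Fin L → Bool) : Fin (L + 1) → ℤ :=
  Fin.partialSum (unitStep ∘ σ)

def stepsOfWalk {L : ℕ} (s : Fin (L + 1) → ℤ) : Fin L → Bool :=
  fun i => decide (s i.castSucc < s i.succ)

section Steps

variable {L : ℕ}

@[simp]
lemma walkOfSteps_zero (σ : Fin L → Bool) : walkOfSteps σ 0 = 0 :=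
  Fin.partialSum_zero _

lemma walkOfSteps_succ (σ : Fin L → Bool) (i : Fin L) :
    walkOfSteps σ i.succ = walkOfSteps σ i.castSucc + unitStep (σ i) :=
  Fin.partialSum_succ _ _

lemma walkOfSteps_cons_succ (b : Bool) (τ : Fin L → Bool) (i : Fin (L + 1)) :
    walkOfSteps (Fin.cons b τ : Fin (L + 1) → Bool) i.succ = unitStep b + walkOfSteps τ i :=
  Fin.partialSum_succ' _ _

lemma abs_walkOfSteps_le (σ : Fin L → Bool) (i : Fin (L + 1)) : |walkOfSteps σ i| ≤ i := by
  induction i using Fin.induction with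
  | zero => simp
  | succ i ih =>
    rw [walkOfSteps_succ, Fin.val_succ, Nat.cast_succ]
    rw [Fin.val_castSucc] at ih
    cases σ i <;> simp only [unitStep] <;> grind

lemma isWalk_walkOfSteps (σ : Fin L → Bool) : IsWalk L (walkOfSteps σ) :=
  ⟨walkOfSteps_zero σ, fun i => by cases h : σ i <;> simp [walkOfSteps_succ, h, unitStep]⟩

lemma stepsOfWalk_walkOfSteps (σ : Fin L → Bool) : stepsOfWalk (walkOfSteps σ) = σ := by
  funext i
  cases h : σ i <;> simp [stepsOfWalk, walkOfSteps_succ, h, unitStep]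

lemma walkOfSteps_stepsOfWalk {s : Fin (L + 1) → ℤ} (hs : IsWalk L s) :
    walkOfSteps (stepsOfWalk s) = s := by
  funext i
  induction i using Fin.induction with
  | zero => rw [walkOfSteps_zero, hs.1]
  | succ i ih =>
    have hstep := hs.2 i
    rw [walkOfSteps_succ, ih, stepsOfWalk, unitStep]
    rcases abs_eq (zero_le_one' ℤ) |>.1 hstep with h | h <;> split_ifs <;> grind

def closedWalkEquiv (L : ℕ) :
    {σ : Fin L → Bool // walkOfSteps σ (Fin.last L) = 0} ≃ {s // IsClosedWalk L s} where
  toFun σ := ⟨walkOfSteps σ.1, isWalk_walkOfSteps σ.1, σ.2⟩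
  invFun s := ⟨stepsOfWalk s.1, by rw [walkOfSteps_stepsOfWalk s.2.1]; exact s.2.2⟩
  left_inv σ := Subtype.ext (stepsOfWalk_walkOfSteps σ.1)
  right_inv s := Subtype.ext (walkOfSteps_stepsOfWalk s.2.1)

end Steps

lemma prod_pow_upcross {M : Type*} [CommMonoid M] {L : ℕ} (s : Fin (L + 1) → ℤ) (g : ℤ → M)
    {T : Finset ℤ} (hT : ∀ i : Fin L, s i.castSucc ∈ T) :
    ∏ j ∈ T, g j ^ upcross L s j =
      ∏ i : Fin L, if s i.succ = s i.castSucc + 1 then g (s i.castSucc) else 1 := by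
  rw [prod_ite, prod_const_one, mul_one,
    ← prod_fiberwise_of_maps_to (g := fun i => s i.castSucc) (fun i _ => hT i)]
  refine prod_congr rfl fun j _ => ?_
  rw [prod_congr rfl fun i hi => congrArg g (mem_filter.1 hi).2, prod_const, filter_filter,
    upcross, Fintype.card_subtype]
  congr 2
  ext i
  grind

section Matrix

variable {N : ℕ} [NeZero N] (x : Fin N → ℝ)

def stepWeight (r : Fin N) {L : ℕ} (σ : Fin L → Bool) : ℝ :=
  ∏ i, if σ i then x (r + (walkOfSteps σ i.castSucc : Fin N)) else 1

lemma stepWeight_cons (r : Fin N) {L : ℕ} (b : Bool) (τ : Fin L → Bool) :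
    stepWeight x r (Fin.cons b τ : Fin (L + 1) → Bool) =
      (if b then x r else 1) * stepWeight x (r + (unitStep b : Fin N)) τ := by
  rw [stepWeight, Fin.prod_univ_succ]
  congr 1
  · simp
  · refine prod_congr rfl fun i _ => ?_
    rw [← Fin.succ_castSucc, walkOfSteps_cons_succ, Fin.cons_succ, Int.cast_add, add_assoc]

lemma Mmat_mul_apply (h2 : (2 : Fin N) ≠ 0) (A : Matrix (Fin N) (Fin N) ℝ) (i j : Fin N) :
    (Mmat N x * A) i j = x i * A (i + 1) j + A (i - 1) j := by
  have hne : i + 1 ≠ i - 1 := fun h => h2 (by linear_combination h)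
  have hrow : ∀ u, Mmat N x i u * A u j =
      (if u = i + 1 then x i * A u j else 0) + (if u = i - 1 then A u j else 0) := by
    intro u
    by_cases hu : u = i - 1
    · simp [Mmat, hu, hne.symm]
    · by_cases hu' : u = i + 1 <;> simp [Mmat, hu, hu', hne]
  rw [Matrix.mul_apply, sum_congr rfl fun u _ => hrow u, sum_add_distrib,
    sum_ite_eq', sum_ite_eq', if_pos (mem_univ _), if_pos (mem_univ _)]

theorem Mmat_pow_apply (h2 : (2 : Fin N) ≠ 0) (L : ℕ) (r t : Fin N) :
    (Mmat N x ^ L) r t = ∑ σ : Fin L → Bool,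
      if r + (walkOfSteps σ (Fin.last L) : Fin N) = t then stepWeight x r σ else 0 := by
  induction L generalizing r with
  | zero => simp [Matrix.one_apply, stepWeight]
  | succ L ih =>
    rw [pow_succ', Mmat_mul_apply x h2, ih, ih, ← Fintype.sum_equiv (Fin.consEquiv _) _ _
      fun _ => rfl, Fintype.sum_prod_type, Fintype.sum_bool, mul_sum]
    simp only [Fin.consEquiv, Equiv.coe_fn_mk]
    rw [← Fin.succ_last]
    simp only [walkOfSteps_cons_succ, stepWeight_cons, unitStep, if_true, Bool.false_eq_true,
      if_false, one_mul, Int.cast_add, Int.cast_one, Int.cast_neg, ← add_assoc, ← sub_eq_add_neg,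
      mul_ite, mul_zero]

lemma Mmat_pow_apply_self {k : ℕ} (hk : k < N) (r : Fin N) :
    (Mmat N x ^ k) r r = ∑ σ : Fin k → Bool,
      if walkOfSteps σ (Fin.last k) = 0 then stepWeight x r σ else 0 := by
  by_cases h2 : (2 : Fin N) = 0
  · -- the two off-diagonals of `Mmat` meet, so the path expansion fails; but then `k ≤ 1`
    have hN : N ≤ 2 :=
      Nat.le_of_dvd two_pos ((CharP.cast_eq_zero_iff (Fin N) N 2).1 (by exact_mod_cast h2))
    obtain rfl | rfl : k = 0 ∨ k = 1 := by omega
    · simp [stepWeight]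
    · obtain rfl : N = 2 := by omega
      have hσ : ∀ σ : Fin 1 → Bool, walkOfSteps σ (Fin.last 1) ≠ 0 := fun σ => by
        rw [← Fin.succ_last, walkOfSteps_succ, unitStep]
        split_ifs <;> simp
      rw [sum_eq_zero fun σ _ => if_neg (hσ σ)]
      fin_cases r <;> simp [Mmat]
  · rw [Mmat_pow_apply x h2]
    refine sum_congr rfl fun σ _ => if_congr ?_ rfl rfl
    have hσ : |walkOfSteps σ (Fin.last k)| < N := by
      have := abs_walkOfSteps_le σ (Fin.last k)
      rw [Fin.val_last] at this
      omega
    rw [add_eq_left, CharP.intCast_eq_zero_iff (Fin N) N]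
    exact ⟨fun h => Int.eq_zero_of_abs_lt_dvd h hσ, fun h => h ▸ dvd_zero _⟩

lemma stepWeight_eq_prod_pow_upcross (r : Fin N) {L : ℕ} (σ : Fin L → Bool) :
    stepWeight x r σ = ∏ j ∈ Icc (-(L : ℤ)) (L - 1),
      x (r + (j : Fin N)) ^ upcross L (walkOfSteps σ) j := by
  rw [prod_pow_upcross _ (fun j => x (r + (j : Fin N))) fun i => ?_]
  · refine prod_congr rfl fun i _ => ?_
    cases h : σ i <;> simp [walkOfSteps_succ, h, unitStep]
  · have := abs_walkOfSteps_le σ i.castSucc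
    rw [Fin.val_castSucc, abs_le] at this
    rw [mem_Icc]
    omega

end Matrix

lemma finsum_closedWalk_eq_sum {M : Type*} [AddCommMonoid M] (L : ℕ)
    (F : (Fin (L + 1) → ℤ) → M) :
    ∑ᶠ s : {s // IsClosedWalk L s}, F s.1 =
      ∑ σ : Fin L → Bool, if walkOfSteps σ (Fin.last L) = 0 then F (walkOfSteps σ) else 0 := by
  rw [← finsum_comp_equiv (closedWalkEquiv L)]
  simp only [closedWalkEquiv, Equiv.coe_fn_mk]
  rw [finsum_subtype_eq_finsum_cond (f := fun σ => F (walkOfSteps σ)), finsum_eq_sum_of_fintype]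
  simp only [finsum_eq_if]

theorem diag_pow_eq_sum_walks_general (N k : ℕ) [NeZero N]
    (hkN : k < N) (x : Fin N → ℝ) (r : Fin N) :
    (Mmat N x ^ k) r r =
      ∑ᶠ s : {f : Fin (k + 1) → ℤ // IsClosedWalk k f},
        ∏ j ∈ Finset.Icc (-(k : ℤ)) ((k : ℤ) - 1),
          (x (r + (j : Fin N))) ^ (upcross k s.1 j) := by
  rw [Mmat_pow_apply_self x hkN, finsum_closedWalk_eq_sum k fun s =>
    ∏ j ∈ Icc (-(k : ℤ)) (k - 1), x (r + (j : Fin N)) ^ upcross k s j]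
  simp only [stepWeight_eq_prod_pow_upcross]

/-- Diagonal powers of the random tridiagonal matrix expand over closed walks:
for `N > k ≥ 1`, any `x : Fin N → ℝ` and any index `r : Fin N`,
`(M x ^ k) r r = ∑_s ∏_{j = -k}^{k-1} (x (r + j mod N)) ^ (u_s j)`, where the sum
runs over all closed walks `s` of length `k` and `u_s j` is the up-crossing
count of `s` at `j`. -/
theorem diag_pow_eq_sum_walks (N k : ℕ) [NeZero N] (hN : 2 ≤ N)
    (hk : 1 ≤ k) (hkN : k < N) (x : Fin N → ℝ) (r : Fin N) :
    (Mmat N x ^ k) r r =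
      ∑ᶠ s : {f : Fin (k + 1) → ℤ // IsClosedWalk k f},
        ∏ j ∈ Finset.Icc (-(k : ℤ)) ((k : ℤ) - 1),
          (x (r + (j : Fin N))) ^ (upcross k s.1 j) :=
  diag_pow_eq_sum_walks_general N k hkN x r
end

section
/- The averaged diagonal entries of powers of the random tridiagonal matrix count even-visiting walks: for every k ≥ 0, every N > 4k with N ≥ 2, and every index r : Fin N, one has 2^{−N} · ∑_{x ∈ ({−1,1})^{Fin N}} (M(x)^{4k})_{r,r} = c_k, where the sum runs over all functions x : Fin N → ℝ taking values in {−1, 1}. -/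
open Finset
open Fin.CommRing

/-- The walk on ℤ determined by a sequence of up/down steps. -/
def walkOf {L : ℕ} (σ : Fin L → Bool) (t : Fin (L + 1)) : ℤ :=
  ∑ u : Fin L, if (u : ℕ) < (t : ℕ) then (if σ u then 1 else -1) else 0

lemma walkOf_zero {L : ℕ} (σ : Fin L → Bool) : walkOf σ 0 = 0 := by
  simp [walkOf]

lemma walkOf_step {L : ℕ} (σ : Fin L → Bool) (t : Fin L) :
    walkOf σ t.succ - walkOf σ t.castSucc = if σ t then 1 else -1 := by
  unfold walkOf
  rw [← Finset.sum_sub_distrib]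
  rw [Finset.sum_eq_single t]
  · simp [Fin.val_succ, Fin.coe_castSucc]
  · intro u _ hu
    have hne : (u : ℕ) ≠ (t : ℕ) := fun h => hu (Fin.ext h)
    simp only [Fin.val_succ, Fin.coe_castSucc]
    have h1 : ((u:ℕ) < (t:ℕ) + 1) = ((u:ℕ) < (t:ℕ)) := by
      apply propext; omega
    simp only [h1, sub_self]
  · intro h; exact absurd (Finset.mem_univ t) h

lemma walkOf_cons_succ {L : ℕ} (b : Bool) (σ : Fin L → Bool) (t : Fin (L + 1)) :
    walkOf (Fin.cons b σ) t.succ = (if b then 1 else -1) + walkOf σ t := by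
  unfold walkOf
  rw [Fin.sum_univ_succ]
  congr 1
  · simp

lemma walkOf_abs_le {L : ℕ} (σ : Fin L → Bool) (t : Fin (L + 1)) :
    |walkOf σ t| ≤ L := by
  calc |walkOf σ t| ≤ ∑ u : Fin L, |if (u : ℕ) < (t : ℕ) then (if σ u then (1:ℤ) else -1) else 0| :=
        Finset.abs_sum_le_sum_abs _ _
    _ ≤ ∑ _u : Fin L, 1 := by
        apply Finset.sum_le_sum
        intro u _
        split_ifs <;> simp
    _ = L := by simp

lemma isWalk_walkOf {L : ℕ} (σ : Fin L → Bool) : IsWalk L (walkOf σ) := by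
  refine ⟨walkOf_zero σ, fun t => ?_⟩
  rw [walkOf_step]
  split_ifs <;> simp
lemma two_ne_zero_fin (N : ℕ) [NeZero N] (h3 : 3 ≤ N) (a : Fin N) : a - 1 ≠ a + 1 := by
  intro h
  have h0 : a + 0 = a + 2 := by
    rw [add_zero]
    calc a = a - 1 + 1 := by rw [sub_add_cancel]
      _ = a + 1 + 1 := by rw [h]
      _ = a + 2 := by rw [add_assoc]; norm_num
  have h2 : ((2 : ℕ) : Fin N) = 0 := by
    rw [Nat.cast_ofNat]
    exact (add_left_cancel h0).symm
  have := Nat.le_of_dvd (by norm_num) ((CharP.cast_eq_zero_iff (Fin N) N 2).mp h2)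
  omega

lemma pow_entry (N : ℕ) [NeZero N] (h3 : 3 ≤ N) (x : Fin N → ℝ) :
    ∀ (L : ℕ) (i j : Fin N),
    (Mmat N x ^ L) i j =
      ∑ σ : Fin L → Bool,
        if i + ((walkOf σ (Fin.last L) : ℤ) : Fin N) = j then
          ∏ t : Fin L, (if σ t = true then x (i + ((walkOf σ t.castSucc : ℤ) : Fin N)) else 1)
        else 0 := by
  intro L
  induction L with
  | zero =>
    intro i j
    rw [pow_zero, Matrix.one_apply, Fintype.sum_unique]
    simp [walkOf]
  | succ L IH =>
    intro i j
    rw [pow_succ', Matrix.mul_apply]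
    have hsplit : ∀ k : Fin N, Mmat N x i k * (Mmat N x ^ L) k j =
        (if k = i - 1 then (Mmat N x ^ L) (i-1) j else 0) +
        (if k = i + 1 then x i * (Mmat N x ^ L) (i+1) j else 0) := by
      intro k
      unfold Mmat
      by_cases hk1 : k = i - 1
      · subst hk1
        simp [if_neg (two_ne_zero_fin N h3 i), two_ne_zero_fin N h3 i]
      · by_cases hk2 : k = i + 1
        · subst hk2
          have : ¬ (i + 1 = i - 1) := fun hh => (two_ne_zero_fin N h3 i) hh.symm
          simp [this, hk1]
        · simp [hk1, hk2]
    rw [Finset.sum_congr rfl (fun k _ => hsplit k), Finset.sum_add_distrib,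
      Finset.sum_ite_eq' Finset.univ (i - 1), Finset.sum_ite_eq' Finset.univ (i + 1)]
    simp only [Finset.mem_univ, if_true]
    rw [IH (i-1) j, IH (i+1) j]
    rw [← Equiv.sum_comp (Fin.consEquiv (fun _ : Fin (L+1) => Bool)), Fintype.sum_prod_type,
      Fintype.sum_bool]
    have hc : ∀ (b : Bool) (σ : Fin L → Bool),
        (Fin.consEquiv (fun _ : Fin (L+1) => Bool)) (b, σ) = Fin.cons b σ := fun _ _ => rfl
    simp only [hc]
    have hcastT : ∀ (σ : Fin L → Bool) (t : Fin (L+1)),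
        ((walkOf ((Fin.cons true σ : Fin (L+1) → Bool)) t.succ : ℤ) : Fin N) =
          (1 : Fin N) + ((walkOf σ t : ℤ) : Fin N) := by
      intro σ t
      rw [walkOf_cons_succ, Int.cast_add]
      congr 1
    have hcastF : ∀ (σ : Fin L → Bool) (t : Fin (L+1)),
        ((walkOf ((Fin.cons false σ : Fin (L+1) → Bool)) t.succ : ℤ) : Fin N) =
          (-1 : Fin N) + ((walkOf σ t : ℤ) : Fin N) := by
      intro σ t
      rw [walkOf_cons_succ, Int.cast_add]
      congr 1
    have keyT : ∀ σ : Fin L → Bool,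
        (if i + ((walkOf ((Fin.cons true σ : Fin (L+1) → Bool)) (Fin.last (L+1)) : ℤ) : Fin N) = j then
          ∏ t : Fin (L+1), (if (Fin.cons true σ : Fin (L+1) → Bool) t = true then
            x (i + ((walkOf ((Fin.cons true σ : Fin (L+1) → Bool)) t.castSucc : ℤ) : Fin N)) else 1)
        else 0) =
        x i * (if (i + 1) + ((walkOf σ (Fin.last L) : ℤ) : Fin N) = j then
          ∏ t : Fin L, (if σ t = true then x ((i + 1) + ((walkOf σ t.castSucc : ℤ) : Fin N)) else 1)
        else 0) := by
      intro σ
      have hcond : (i + ((walkOf ((Fin.cons true σ : Fin (L+1) → Bool)) (Fin.last (L+1)) : ℤ) : Fin N) = j) =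
          ((i + 1) + ((walkOf σ (Fin.last L) : ℤ) : Fin N) = j) := by
        rw [← Fin.succ_last, hcastT, ← add_assoc]
      have hprod : (∏ t : Fin (L+1), (if (Fin.cons true σ : Fin (L+1) → Bool) t = true then
            x (i + ((walkOf ((Fin.cons true σ : Fin (L+1) → Bool)) t.castSucc : ℤ) : Fin N)) else 1)) =
          x i * ∏ t : Fin L, (if σ t = true then
            x ((i + 1) + ((walkOf σ t.castSucc : ℤ) : Fin N)) else 1) := by
        rw [Fin.prod_univ_succ]
        congr 1
        · rw [Fin.castSucc_zero]
          simp [walkOf_zero]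
        · apply Finset.prod_congr rfl
          intro t _
          simp only [Fin.cons_succ]
          rw [← Fin.succ_castSucc, hcastT, ← add_assoc]
      simp only [hcond, hprod]
      split_ifs <;> ring
    have keyF : ∀ σ : Fin L → Bool,
        (if i + ((walkOf ((Fin.cons false σ : Fin (L+1) → Bool)) (Fin.last (L+1)) : ℤ) : Fin N) = j then
          ∏ t : Fin (L+1), (if (Fin.cons false σ : Fin (L+1) → Bool) t = true then
            x (i + ((walkOf ((Fin.cons false σ : Fin (L+1) → Bool)) t.castSucc : ℤ) : Fin N)) else 1)
        else 0) =
        (if (i - 1) + ((walkOf σ (Fin.last L) : ℤ) : Fin N) = j then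
          ∏ t : Fin L, (if σ t = true then x ((i - 1) + ((walkOf σ t.castSucc : ℤ) : Fin N)) else 1)
        else 0) := by
      intro σ
      have him : i + (-1 : Fin N) = i - 1 := by rw [sub_eq_add_neg]
      have hcond : (i + ((walkOf ((Fin.cons false σ : Fin (L+1) → Bool)) (Fin.last (L+1)) : ℤ) : Fin N) = j) =
          ((i - 1) + ((walkOf σ (Fin.last L) : ℤ) : Fin N) = j) := by
        rw [← Fin.succ_last, hcastF, ← add_assoc, him]
      have hprod : (∏ t : Fin (L+1), (if (Fin.cons false σ : Fin (L+1) → Bool) t = true then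
            x (i + ((walkOf ((Fin.cons false σ : Fin (L+1) → Bool)) t.castSucc : ℤ) : Fin N)) else 1)) =
          ∏ t : Fin L, (if σ t = true then
            x ((i - 1) + ((walkOf σ t.castSucc : ℤ) : Fin N)) else 1) := by
        rw [Fin.prod_univ_succ]
        have h0 : (if (Fin.cons false σ : Fin (L+1) → Bool) 0 = true then
            x (i + ((walkOf ((Fin.cons false σ : Fin (L+1) → Bool)) (Fin.castSucc 0) : ℤ) : Fin N))
            else 1) = 1 := by simp
        rw [h0, one_mul]
        apply Finset.prod_congr rfl
        intro t _
        simp only [Fin.cons_succ]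
        rw [← Fin.succ_castSucc, hcastF, ← add_assoc, him]
      simp only [hcond, hprod]
    rw [Finset.sum_congr rfl (fun σ _ => keyT σ), Finset.sum_congr rfl (fun σ _ => keyF σ),
      ← Finset.mul_sum, add_comm]
/-- number of up-steps of `σ` taken from site `i'` (walk started at `r`). -/
def upAt {N L : ℕ} [NeZero N] (r : Fin N) (σ : Fin L → Bool) (i' : Fin N) : ℕ :=
  (Finset.univ.filter
    (fun t : Fin L => σ t = true ∧ r + ((walkOf σ t.castSucc : ℤ) : Fin N) = i')).card

lemma prod_weights {N L : ℕ} [NeZero N] (r : Fin N) (x : Fin N → ℝ) (σ : Fin L → Bool) :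
    (∏ t : Fin L, (if σ t = true then x (r + ((walkOf σ t.castSucc : ℤ) : Fin N)) else 1)) =
    ∏ i' : Fin N, x i' ^ upAt r σ i' := by
  rw [← Finset.prod_filter]
  rw [← Finset.prod_fiberwise_of_maps_to
    (g := fun t : Fin L => r + ((walkOf σ t.castSucc : ℤ) : Fin N)) (t := Finset.univ)
    (fun t _ => Finset.mem_univ _)]
  apply Finset.prod_congr rfl
  intro i' _
  have hx : ∀ t ∈ Finset.filter (fun t => r + ((walkOf σ t.castSucc : ℤ) : Fin N) = i')
      (Finset.filter (fun a => σ a = true) Finset.univ),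
      x (r + ((walkOf σ t.castSucc : ℤ) : Fin N)) = x i' :=
    fun t ht => by rw [(Finset.mem_filter.mp ht).2]
  rw [Finset.prod_congr rfl hx, Finset.prod_const]
  congr 1
  unfold upAt
  rw [Finset.filter_filter]

lemma sum_pm (m : ℕ) : ∑ v ∈ ({-1, 1} : Finset ℝ), v ^ m = if Even m then 2 else 0 := by
  rw [Finset.sum_insert (by norm_num), Finset.sum_singleton]
  by_cases h : Even m
  · rw [if_pos h, h.neg_one_pow, one_pow]; norm_num
  · rw [if_neg h, (Nat.not_even_iff_odd.mp h).neg_one_pow, one_pow]; ring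

lemma sum_x_prod {N : ℕ} (m : Fin N → ℕ) :
    (∑ x ∈ Fintype.piFinset (fun _ : Fin N => ({-1, 1} : Finset ℝ)), ∏ i', x i' ^ m i') =
    if (∀ i', Even (m i')) then (2 : ℝ) ^ N else 0 := by
  rw [← Finset.prod_univ_sum (fun _ => ({-1, 1} : Finset ℝ)) (fun i v => v ^ m i)]
  rw [Finset.prod_congr rfl (fun i' _ => sum_pm (m i'))]
  by_cases h : ∀ i', Even (m i')
  · rw [if_pos h, Finset.prod_congr rfl (fun i' _ => if_pos (h i')), Finset.prod_const]
    simp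
  · rw [if_neg h]
    push_neg at h
    obtain ⟨i0, h0⟩ := h
    exact Finset.prod_eq_zero (Finset.mem_univ i0) (if_neg h0)
/-- up-crossing count as a Finset card. -/
def uC {L : ℕ} (s : Fin (L + 1) → ℤ) (j : ℤ) : ℕ :=
  (Finset.univ.filter (fun t : Fin L => s t.castSucc = j ∧ s t.succ = j + 1)).card

lemma tele : ∀ {L : ℕ} (g : Fin (L + 1) → ℤ),
    ∑ t : Fin L, (g t.succ - g t.castSucc) = g (Fin.last L) - g 0 := by
  intro L
  induction L with
  | zero => intro g; simp [Fin.last]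
  | succ L IH =>
    intro g
    rw [Fin.sum_univ_castSucc]
    have h1 : ∀ t : Fin L, g t.castSucc.succ - g t.castSucc.castSucc
        = (fun u : Fin (L+1) => g u.castSucc) t.succ - (fun u : Fin (L+1) => g u.castSucc) t.castSucc := by
      intro t
      simp only [Fin.succ_castSucc]
    rw [Finset.sum_congr rfl (fun t _ => h1 t), IH (fun u : Fin (L+1) => g u.castSucc)]
    simp only [Fin.succ_last, Fin.castSucc_zero]
    ring

lemma step_cases {L : ℕ} {s : Fin (L + 1) → ℤ} (hw : IsWalk L s) (t : Fin L) :
    s t.succ = s t.castSucc + 1 ∨ s t.succ = s t.castSucc - 1 := by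
  rcases (abs_eq (by norm_num : (0:ℤ) ≤ 1)).mp (hw.2 t) with h | h
  · left; omega
  · right; omega

lemma cross {L : ℕ} {s : Fin (L + 1) → ℤ} (hw : IsWalk L s) (hc : s (Fin.last L) = 0) (j : ℤ) :
    uC s j = (Finset.univ.filter (fun t : Fin L => s t.castSucc = j + 1 ∧ s t.succ = j)).card := by
  have per : ∀ t : Fin L,
      ((fun u : Fin (L+1) => if j < s u then (1:ℤ) else 0) t.succ -
       (fun u : Fin (L+1) => if j < s u then (1:ℤ) else 0) t.castSucc) =
      (if (s t.castSucc = j ∧ s t.succ = j + 1) then (1:ℤ) else 0) -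
      (if (s t.castSucc = j + 1 ∧ s t.succ = j) then (1:ℤ) else 0) := by
    intro t
    rcases step_cases hw t with h | h <;> simp only [] <;> split_ifs <;> omega
  have h0 := tele (fun u : Fin (L+1) => if j < s u then (1:ℤ) else 0)
  rw [Finset.sum_congr rfl (fun t _ => per t), Finset.sum_sub_distrib] at h0
  rw [Finset.sum_boole, Finset.sum_boole, hc, hw.1, sub_self] at h0
  have h1 : ((Finset.univ.filter (fun t : Fin L => s t.castSucc = j ∧ s t.succ = j + 1)).card : ℤ)
      = ((Finset.univ.filter (fun t : Fin L => s t.castSucc = j + 1 ∧ s t.succ = j)).card : ℤ) := by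
    omega
  exact_mod_cast h1

lemma visits_card {L : ℕ} (s : Fin (L + 1) → ℤ) (j : ℤ) :
    visits L s j = (Finset.univ.filter (fun i : Fin (L + 1) => s i = j)).card := by
  rw [visits, Fintype.card_subtype]

lemma visits_eq {L : ℕ} {s : Fin (L + 1) → ℤ} (hw : IsWalk L s) (hc : s (Fin.last L) = 0)
    {j : ℤ} (hj : j ≠ 0) :
    visits L s j = uC s j +
      (Finset.univ.filter (fun t : Fin L => s t.castSucc = j ∧ s t.succ = j - 1)).card := by
  rw [visits_card, Finset.card_filter, Fin.sum_univ_castSucc]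
  rw [if_neg (by rw [hc]; exact fun h => hj h.symm)]
  have per : ∀ t : Fin L, (if s t.castSucc = j then (1:ℕ) else 0) =
      (if (s t.castSucc = j ∧ s t.succ = j + 1) then (1:ℕ) else 0) +
      (if (s t.castSucc = j ∧ s t.succ = j - 1) then (1:ℕ) else 0) := by
    intro t
    rcases step_cases hw t with h | h <;> split_ifs <;> omega
  rw [Finset.sum_congr rfl (fun t _ => per t), Finset.sum_add_distrib, add_zero]
  rw [uC, Finset.card_filter, Finset.card_filter]

lemma visits_eq' {L : ℕ} {s : Fin (L + 1) → ℤ} (hw : IsWalk L s) (hc : s (Fin.last L) = 0)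
    {j : ℤ} (hj : j ≠ 0) :
    visits L s j = uC s j + uC s (j - 1) := by
  rw [visits_eq hw hc hj]
  congr 1
  rw [cross hw hc (j - 1)]
  congr 1
  apply Finset.filter_congr
  intro t _
  simp only [sub_add_cancel]
lemma walk_bound_fwd {L : ℕ} {s : Fin (L + 1) → ℤ} (hw : IsWalk L s) :
    ∀ n (h : n < L + 1), |s ⟨n, h⟩| ≤ (n : ℤ) := by
  intro n
  induction n with
  | zero =>
    intro h
    have : (⟨0, h⟩ : Fin (L + 1)) = 0 := rfl
    rw [this, hw.1]
    simp
  | succ n IH =>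
    intro h
    have hn : n < L + 1 := by omega
    have hnL : n < L := by omega
    have hstep := hw.2 ⟨n, hnL⟩
    have h1 : (⟨n, hnL⟩ : Fin L).succ = ⟨n + 1, h⟩ := rfl
    have h2 : (⟨n, hnL⟩ : Fin L).castSucc = ⟨n, hn⟩ := rfl
    rw [h1, h2] at hstep
    have hIH := IH hn
    rcases (abs_eq (by norm_num : (0:ℤ) ≤ 1)).mp hstep with hh | hh <;>
      (rw [abs_le] at hIH ⊢; push_cast; omega)

lemma walk_bound_bwd {L : ℕ} {s : Fin (L + 1) → ℤ} (hw : IsWalk L s)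
    (hc : s (Fin.last L) = 0) :
    ∀ n (hn : n ≤ L), |s ⟨L - n, by omega⟩| ≤ (n : ℤ) := by
  intro n
  induction n with
  | zero =>
    intro hn
    have : (⟨L - 0, by omega⟩ : Fin (L + 1)) = Fin.last L := by
      apply Fin.ext; simp [Fin.last]
    rw [this, hc]
    simp
  | succ n IH =>
    intro hn
    have hnL : L - (n + 1) < L := by omega
    have hstep := hw.2 ⟨L - (n + 1), hnL⟩
    have h1 : (⟨L - (n + 1), hnL⟩ : Fin L).succ = ⟨L - n, by omega⟩ := by
      apply Fin.ext; simp [Fin.val_succ]; omega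
    have h2 : (⟨L - (n + 1), hnL⟩ : Fin L).castSucc = ⟨L - (n + 1), by omega⟩ := rfl
    rw [h1, h2] at hstep
    have hIH := IH (by omega)
    rcases (abs_eq (by norm_num : (0:ℤ) ≤ 1)).mp hstep with hh | hh <;>
      (rw [abs_le] at hIH ⊢; push_cast; omega)

lemma walk_bound_half {k : ℕ} {s : Fin (4 * k + 1) → ℤ} (hw : IsWalk (4 * k) s)
    (hc : s (Fin.last (4 * k)) = 0) (t : Fin (4 * k + 1)) : |s t| ≤ (2 * k : ℤ) := by
  rcases le_or_gt (t : ℕ) (2 * k) with h | h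
  · have := walk_bound_fwd hw t t.isLt
    have ht : (⟨(t : ℕ), t.isLt⟩ : Fin (4 * k + 1)) = t := rfl
    rw [ht] at this
    have : |s t| ≤ ((t : ℕ) : ℤ) := this
    have h2 : ((t : ℕ) : ℤ) ≤ (2 * k : ℤ) := by exact_mod_cast h
    omega
  · have htL : (t : ℕ) ≤ 4 * k := by omega
    have := walk_bound_bwd hw hc (4 * k - (t : ℕ)) (by omega)
    have ht : (⟨4 * k - (4 * k - (t : ℕ)), by omega⟩ : Fin (4 * k + 1)) = t := by
      apply Fin.ext; simp; omega
    rw [ht] at this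
    have h2 : ((4 * k - (t : ℕ) : ℕ) : ℤ) ≤ (2 * k : ℤ) := by
      have : 4 * k - (t : ℕ) ≤ 2 * k := by omega
      exact_mod_cast this
    omega

lemma uC_zero {L : ℕ} {s : Fin (L + 1) → ℤ} {B : ℤ} (hb : ∀ t, |s t| ≤ B) {j : ℤ}
    (hj : j ≤ -B - 1 ∨ B ≤ j) : uC s j = 0 := by
  rw [uC, Finset.card_eq_zero, Finset.filter_eq_empty_iff]
  rintro t - ⟨h1, h2⟩
  have b1 := hb t.castSucc
  have b2 := hb t.succ
  rw [h1] at b1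
  rw [h2] at b2
  rw [abs_le] at b1 b2
  omega

lemma even_uC_of_evenVisiting {k : ℕ} {s : Fin (4 * k + 1) → ℤ}
    (hw : IsWalk (4 * k) s) (hc : s (Fin.last (4 * k)) = 0)
    (hev : EvenVisiting (4 * k) s) : ∀ j : ℤ, Even (uC s j) := by
  have hb : ∀ t, |s t| ≤ (2 * k : ℤ) := walk_bound_half hw hc
  have hz : ∀ j : ℤ, (j ≤ -(2 * k : ℤ) - 1 ∨ (2 * k : ℤ) ≤ j) → uC s j = 0 :=
    fun j hj => uC_zero hb hj
  have chain : ∀ j : ℤ, j ≠ 0 → (Even (uC s j) ↔ Even (uC s (j - 1))) := by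
    intro j hj
    have := hev j hj
    rw [visits_eq' hw hc hj] at this
    exact Nat.even_add.mp this
  -- nonnegative side
  have hA : ∀ n : ℕ, n ≤ 2 * k → Even (uC s ((2 * k : ℤ) - n)) := by
    intro n
    induction n with
    | zero =>
      intro _
      have heq : (2 * k : ℤ) - ((0:ℕ):ℤ) = (2 * k : ℤ) := by push_cast; ring
      rw [heq, hz (2 * k : ℤ) (Or.inr le_rfl)]
      exact Even.zero
    | succ n IH =>
      intro hn
      have hprev := IH (by omega)
      have hne : ((2 * k : ℤ) - n) ≠ 0 := by push_cast; omega
      have := (chain ((2 * k : ℤ) - n) hne).mp hprev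
      have heq : (2 * k : ℤ) - n - 1 = (2 * k : ℤ) - (n + 1 : ℕ) := by push_cast; ring
      rwa [heq] at this
  -- negative side
  have hB : ∀ n : ℕ, n ≤ 2 * k → Even (uC s (-(2 * k : ℤ) - 1 + n)) := by
    intro n
    induction n with
    | zero =>
      intro _
      have heq : -(2 * k : ℤ) - 1 + ((0:ℕ):ℤ) = -(2 * k : ℤ) - 1 := by push_cast; ring
      rw [heq, hz (-(2 * k : ℤ) - 1) (Or.inl (by omega))]
      exact Even.zero
    | succ n IH =>
      intro hn
      have hprev := IH (by omega)
      have hne : (-(2 * k : ℤ) - 1 + (n + 1 : ℕ)) ≠ 0 := by push_cast; omega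
      have := (chain (-(2 * k : ℤ) - 1 + (n + 1 : ℕ)) hne).mpr (by
        have heq : (-(2 * k : ℤ) - 1 + (n + 1 : ℕ)) - 1 = -(2 * k : ℤ) - 1 + n := by
          push_cast; ring
        rwa [heq])
      exact this
  intro j
  rcases le_or_gt 0 j with hj0 | hj0
  · rcases le_or_gt j (2 * k : ℤ) with hjk | hjk
    · have hn : ((2 * k : ℤ) - j).toNat ≤ 2 * k := by omega
      have := hA ((2 * k : ℤ) - j).toNat hn
      have heq : (2 * k : ℤ) - (((2 * k : ℤ) - j).toNat : ℤ) = j := by omega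
      rwa [heq] at this
    · rw [hz j (Or.inr (by omega))]; exact Even.zero
  · rcases le_or_gt (-(2 * k : ℤ)) j with hjk | hjk
    · have hn : (j + 2 * k + 1).toNat ≤ 2 * k := by omega
      have := hB (j + 2 * k + 1).toNat hn
      have heq : -(2 * k : ℤ) - 1 + ((j + 2 * k + 1).toNat : ℤ) = j := by omega
      rwa [heq] at this
    · rw [hz j (Or.inl (by omega))]; exact Even.zero

lemma evenVisiting_of_even_uC {L : ℕ} {s : Fin (L + 1) → ℤ}
    (hw : IsWalk L s) (hc : s (Fin.last L) = 0)
    (hu : ∀ j : ℤ, Even (uC s j)) : EvenVisiting L s := by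
  intro j hj
  rw [visits_eq' hw hc hj]
  exact (hu j).add (hu (j - 1))
lemma cast_inj_small {N k : ℕ} [NeZero N] (hkN : 4 * k < N) {a b : ℤ}
    (ha : |a| ≤ (2 * k : ℤ)) (hb : |b| ≤ (2 * k : ℤ))
    (h : ((a : ℤ) : Fin N) = ((b : ℤ) : Fin N)) : a = b := by
  have h0 : ((a - b : ℤ) : Fin N) = 0 := by push_cast; rw [h]; ring
  have hdvd : ((N : ℤ)) ∣ (a - b) := (CharP.intCast_eq_zero_iff (Fin N) N _).mp h0
  have hN4 : (4 * k : ℤ) < (N : ℤ) := by exact_mod_cast hkN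
  have habs : |a - b| < (N : ℤ) := by
    rw [abs_le] at ha hb
    rw [abs_lt]
    omega
  have := Int.eq_zero_of_abs_lt_dvd hdvd habs
  omega

lemma uC_walkOf {L : ℕ} (σ : Fin L → Bool) (j : ℤ) :
    uC (walkOf σ) j =
    (Finset.univ.filter (fun t : Fin L => σ t = true ∧ walkOf σ t.castSucc = j)).card := by
  rw [uC]
  congr 1
  apply Finset.filter_congr
  intro t _
  have hstep := walkOf_step σ t
  constructor
  · rintro ⟨h1, h2⟩
    refine ⟨?_, h1⟩
    cases h : σ t
    · rw [h] at hstep; simp at hstep; omega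
    · rfl
  · rintro ⟨h1, h2⟩
    rw [h1] at hstep
    simp at hstep
    exact ⟨h2, by omega⟩

lemma upAt_iff_uC {N k : ℕ} [NeZero N] (hkN : 4 * k < N) (r : Fin N)
    (σ : Fin (4 * k) → Bool) (hclosed : walkOf σ (Fin.last (4 * k)) = 0) :
    (∀ i', Even (upAt r σ i')) ↔ (∀ j : ℤ, Even (uC (walkOf σ) j)) := by
  have hb : ∀ t, |walkOf σ t| ≤ (2 * k : ℤ) :=
    walk_bound_half (isWalk_walkOf σ) hclosed
  constructor
  · intro he j
    rw [uC_walkOf]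
    rcases Finset.eq_empty_or_nonempty
      (Finset.univ.filter (fun t : Fin (4*k) => σ t = true ∧ walkOf σ t.castSucc = j)) with
      hemp | ⟨t0, ht0⟩
    · rw [hemp]; simp
    · obtain ⟨-, hw0⟩ := (Finset.mem_filter.mp ht0).2
      have hset : (Finset.univ.filter (fun t : Fin (4*k) => σ t = true ∧ walkOf σ t.castSucc = j))
          = (Finset.univ.filter (fun t : Fin (4*k) => σ t = true ∧
              r + ((walkOf σ t.castSucc : ℤ) : Fin N) = r + ((j : ℤ) : Fin N))) := by
        apply Finset.filter_congr
        intro t _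
        constructor
        · rintro ⟨h1, h2⟩; exact ⟨h1, by rw [h2]⟩
        · rintro ⟨h1, h2⟩
          refine ⟨h1, ?_⟩
          have hcast := add_left_cancel h2
          exact cast_inj_small hkN (hb t.castSucc) (hw0 ▸ hb t0.castSucc) hcast
      rw [hset]
      exact he (r + ((j : ℤ) : Fin N))
  · intro hu i'
    rw [upAt]
    rw [Finset.card_eq_sum_card_fiberwise
      (f := fun t : Fin (4*k) => walkOf σ t.castSucc) (t := Finset.Icc (-(2*k : ℤ)) (2*k))
      (fun t _ => by
        rw [Finset.mem_coe, Finset.mem_Icc]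
        have := hb t.castSucc
        rw [abs_le] at this
        exact this)]
    apply Finset.even_sum
    intro j _
    rcases Finset.eq_empty_or_nonempty
      (((Finset.univ.filter (fun t : Fin (4*k) => σ t = true ∧
          r + ((walkOf σ t.castSucc : ℤ) : Fin N) = i')).filter
          (fun t => walkOf σ t.castSucc = j))) with hemp | ⟨t0, ht0⟩
    · rw [hemp]; simp
    · have ht0' := Finset.mem_filter.mp ht0
      obtain ⟨-, hi'⟩ := (Finset.mem_filter.mp ht0'.1).2
      have hj0 := ht0'.2
      have hset : ((Finset.univ.filter (fun t : Fin (4*k) => σ t = true ∧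
            r + ((walkOf σ t.castSucc : ℤ) : Fin N) = i')).filter
            (fun t => walkOf σ t.castSucc = j))
          = Finset.univ.filter (fun t : Fin (4*k) => σ t = true ∧ walkOf σ t.castSucc = j) := by
        rw [Finset.filter_filter]
        apply Finset.filter_congr
        intro t _
        constructor
        · rintro ⟨⟨h1, -⟩, h3⟩; exact ⟨h1, h3⟩
        · rintro ⟨h1, h2⟩
          refine ⟨⟨h1, ?_⟩, h2⟩
          rw [h2, ← hj0, ← hi']
      rw [hset, ← uC_walkOf]
      exact hu j

lemma walk_eq_walkOf {L : ℕ} {s : Fin (L + 1) → ℤ} (hw : IsWalk L s) :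
    walkOf (fun t : Fin L => decide (s t.succ - s t.castSucc = 1)) = s := by
  set σs := fun t : Fin L => decide (s t.succ - s t.castSucc = 1) with hσs
  funext u
  suffices h : ∀ n (hn : n < L + 1), walkOf σs ⟨n, hn⟩ = s ⟨n, hn⟩ by
    have := h u.val u.isLt
    simpa using this
  intro n
  induction n with
  | zero =>
    intro hn
    have h0 : (⟨0, hn⟩ : Fin (L + 1)) = 0 := rfl
    rw [h0, walkOf_zero, hw.1]
  | succ n IH =>
    intro hn
    have hnL : n < L := by omega
    have hn' : n < L + 1 := by omega
    have hstepw := walkOf_step σs ⟨n, hnL⟩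
    have hsucc : (⟨n, hnL⟩ : Fin L).succ = ⟨n + 1, hn⟩ := rfl
    have hcast : (⟨n, hnL⟩ : Fin L).castSucc = ⟨n, hn'⟩ := rfl
    rw [hsucc, hcast] at hstepw
    have hIH := IH hn'
    rcases step_cases hw ⟨n, hnL⟩ with hh | hh <;> rw [hsucc, hcast] at hh
    · have hσ : σs ⟨n, hnL⟩ = true := by
        rw [hσs]; simp only [decide_eq_true_eq]; rw [hsucc, hcast]; omega
      rw [hσ] at hstepw
      simp at hstepw
      omega
    · have hσ : σs ⟨n, hnL⟩ = false := by
        rw [hσs]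
        simp only [decide_eq_false_iff_not]
        rw [hsucc, hcast]
        omega
      rw [hσ] at hstepw
      simp at hstepw
      omega

lemma steps_of_walkOf {L : ℕ} (σ : Fin L → Bool) (t : Fin L) :
    decide (walkOf σ t.succ - walkOf σ t.castSucc = 1) = σ t := by
  rw [walkOf_step]
  cases h : σ t <;> simp
lemma c_eq_card (k : ℕ) (p : (Fin (4 * k) → Bool) → Prop) [DecidablePred p]
    (hp : ∀ σ, p σ ↔ (walkOf σ (Fin.last (4 * k)) = 0 ∧ EvenVisiting (4 * k) (walkOf σ))) :
    (Finset.univ.filter p).card = c k := by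
  have E : {σ : Fin (4 * k) → Bool // p σ} ≃
      {s : Fin (4 * k + 1) → ℤ // IsClosedWalk (4 * k) s ∧ EvenVisiting (4 * k) s} :=
  { toFun := fun σ => ⟨walkOf σ.1,
      ⟨⟨isWalk_walkOf σ.1, ((hp σ.1).mp σ.2).1⟩, ((hp σ.1).mp σ.2).2⟩⟩
    invFun := fun s => ⟨fun t => decide (s.1 t.succ - s.1 t.castSucc = 1), by
      rw [hp, walk_eq_walkOf s.2.1.1]
      exact ⟨s.2.1.2, s.2.2⟩⟩
    left_inv := fun σ => Subtype.ext (by funext t; exact steps_of_walkOf σ.1 t)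
    right_inv := fun s => Subtype.ext (walk_eq_walkOf s.2.1.1) }
  calc (Finset.univ.filter p).card = Fintype.card {σ // p σ} := (Fintype.card_subtype p).symm
    _ = Nat.card {σ // p σ} := Nat.card_eq_fintype_card.symm
    _ = Nat.card {s : Fin (4 * k + 1) → ℤ //
        IsClosedWalk (4 * k) s ∧ EvenVisiting (4 * k) s} := Nat.card_congr E
    _ = c k := rfl
/-- The averaged diagonal entries of powers of the random tridiagonal matrix
count even-visiting walks: for every `k ≥ 0`, every `N > 4 k` with `N ≥ 2` and
every index `r : Fin N`,
`2 ^ (-N) * ∑_x (M x ^ (4 k)) r r = c k`, the sum running over all functions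
`x : Fin N → ℝ` taking values in `{-1, 1}`. -/
theorem averaged_diag_pow_eq_c (k N : ℕ) [NeZero N] (hN : 2 ≤ N)
    (hkN : 4 * k < N) (r : Fin N) :
    ((2 : ℝ) ^ N)⁻¹ *
      (∑ᶠ x ∈ {x : Fin N → ℝ | ∀ i, x i = -1 ∨ x i = 1},
        (Mmat N x ^ (4 * k)) r r) = (c k : ℝ) := by
  classical
  have h2N : (2 : ℝ) ^ N ≠ 0 := by positivity
  have hSset : {x : Fin N → ℝ | ∀ i, x i = -1 ∨ x i = 1} =
      ↑(Fintype.piFinset (fun _ : Fin N => ({-1, 1} : Finset ℝ))) := by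
    ext x
    simp [Fintype.mem_piFinset]
  rw [hSset, finsum_mem_coe_finset]
  have hcardS : (Fintype.piFinset (fun _ : Fin N => ({-1, 1} : Finset ℝ))).card = 2 ^ N := by
    rw [Fintype.card_piFinset]
    have h2c : (({-1, 1} : Finset ℝ)).card = 2 := by
      rw [Finset.card_insert_of_notMem (by norm_num), Finset.card_singleton]
    rw [Finset.prod_congr rfl (fun i _ => h2c), Finset.prod_const, Finset.card_univ,
      Fintype.card_fin]
  rcases Nat.eq_zero_or_pos k with hk0 | hkpos
  · subst hk0
    have hone : ∀ x ∈ Fintype.piFinset (fun _ : Fin N => ({-1, 1} : Finset ℝ)),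
        (Mmat N x ^ (4 * 0)) r r = 1 := by
      intro x _
      norm_num [Matrix.one_apply]
    rw [Finset.sum_congr rfl hone, Finset.sum_const, hcardS]
    have hc0 : c 0 = 1 := by
      haveI hne : Nonempty {s : Fin (4 * 0 + 1) → ℤ //
          IsClosedWalk (4 * 0) s ∧ EvenVisiting (4 * 0) s} := by
        refine ⟨⟨fun _ => 0, ⟨⟨rfl, fun i => i.elim0⟩, rfl⟩, fun x hx => ?_⟩⟩
        have hv : visits (4 * 0) (fun _ => (0 : ℤ)) x = 0 := by
          rw [visits, Fintype.card_eq_zero_iff]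
          exact ⟨fun i => hx i.2.symm⟩
        rw [hv]
        exact Even.zero
      haveI : Subsingleton {s : Fin (4 * 0 + 1) → ℤ //
          IsClosedWalk (4 * 0) s ∧ EvenVisiting (4 * 0) s} := by
        constructor
        intro a b
        apply Subtype.ext
        funext t
        have ht : t = 0 := Fin.fin_one_eq_zero t
        rw [ht, a.2.1.1.1, b.2.1.1.1]
      rw [c]
      exact Nat.card_unique
    rw [hc0]
    simp
    try field_simp
  · have h3 : 3 ≤ N := by omega
    rw [Finset.sum_congr rfl (fun x _ => pow_entry N h3 x (4 * k) r r)]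
    rw [Finset.sum_comm]
    have hinner : ∀ σ : Fin (4 * k) → Bool,
        (∑ x ∈ Fintype.piFinset (fun _ : Fin N => ({-1, 1} : Finset ℝ)),
          if r + ((walkOf σ (Fin.last (4 * k)) : ℤ) : Fin N) = r then
            ∏ t : Fin (4 * k),
              (if σ t = true then x (r + ((walkOf σ t.castSucc : ℤ) : Fin N)) else 1)
          else 0) =
        if (walkOf σ (Fin.last (4 * k)) = 0 ∧ ∀ i', Even (upAt r σ i')) then (2 : ℝ) ^ N
        else 0 := by
      intro σ
      by_cases hcl : walkOf σ (Fin.last (4 * k)) = 0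
      · have hcond : r + ((walkOf σ (Fin.last (4 * k)) : ℤ) : Fin N) = r := by
          rw [hcl]
          simp
        simp only [if_pos hcond]
        rw [Finset.sum_congr rfl (fun x _ => prod_weights r x σ), sum_x_prod]
        by_cases he : ∀ i', Even (upAt r σ i')
        · rw [if_pos he, if_pos ⟨hcl, he⟩]
        · rw [if_neg he, if_neg (fun hh => he hh.2)]
      · have hcond : ¬ (r + ((walkOf σ (Fin.last (4 * k)) : ℤ) : Fin N) = r) := by
          intro hh
          apply hcl
          have h0 : ((walkOf σ (Fin.last (4 * k)) : ℤ) : Fin N) = 0 := by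
            have := hh
            nth_rewrite 2 [← add_zero r] at this
            exact add_left_cancel this
          have hdvd : ((N : ℤ)) ∣ walkOf σ (Fin.last (4 * k)) :=
            (CharP.intCast_eq_zero_iff (Fin N) N _).mp h0
          have habs : |walkOf σ (Fin.last (4 * k))| < (N : ℤ) := by
            have h1 := walkOf_abs_le σ (Fin.last (4 * k))
            have h2 : ((4 * k : ℕ) : ℤ) < ((N : ℕ) : ℤ) := by exact_mod_cast hkN
            omega
          exact Int.eq_zero_of_abs_lt_dvd hdvd habs
        simp only [if_neg hcond, Finset.sum_const_zero]
        rw [if_neg (fun hh => hcl hh.1)]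
    rw [Finset.sum_congr rfl (fun σ _ => hinner σ)]
    rw [← Finset.sum_filter, Finset.sum_const, nsmul_eq_mul]
    have hfc : (Finset.univ.filter (fun σ : Fin (4 * k) → Bool =>
        walkOf σ (Fin.last (4 * k)) = 0 ∧ ∀ i', Even (upAt r σ i'))).card = c k := by
      apply c_eq_card
      intro σ
      constructor
      · rintro ⟨hcl, he⟩
        refine ⟨hcl, ?_⟩
        exact evenVisiting_of_even_uC (isWalk_walkOf σ) hcl ((upAt_iff_uC hkN r σ hcl).mp he)
      · rintro ⟨hcl, hev⟩
        refine ⟨hcl, ?_⟩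
        exact (upAt_iff_uC hkN r σ hcl).mpr (even_uC_of_evenVisiting (isWalk_walkOf σ) hcl hev)
    rw [hfc]
    field_simp
end

section
/- The averaged trace of any power of the random tridiagonal matrix not divisible by 4 vanishes: for every m ≥ 1 with 4 ∤ m and every N > m with N ≥ 2, one has ∑_{x ∈ ({−1,1})^{Fin N}} Tr(M(x)^m) = 0, where the sum runs over all functions x : Fin N → ℝ taking values in {−1, 1}. -/
open Finset in
lemma pow_expand {N : ℕ} (A : Matrix (Fin N) (Fin N) ℝ) :
    ∀ (m : ℕ) (i j : Fin N), (A ^ (m + 1)) i j =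
      ∑ p : Fin m → Fin N, ∏ t : Fin (m + 1),
        A ((Fin.cons i (Fin.snoc p j) : Fin (m + 2) → Fin N) t.castSucc)
          ((Fin.cons i (Fin.snoc p j) : Fin (m + 2) → Fin N) t.succ) := by
  intro m
  induction m with
  | zero =>
    intro i j
    simp [Fin.prod_univ_succ]
    rw [show (0 : Fin 1) = Fin.last 0 from rfl, Fin.snoc_last]
  | succ n ih =>
    intro i j
    rw [pow_succ', Matrix.mul_apply]
    simp_rw [ih, Finset.mul_sum]
    rw [← Fintype.sum_prod_type']
    rw [← Fintype.sum_equiv (Fin.consEquiv (fun _ : Fin (n+1) => Fin N)).symm _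
      (fun kp => A i kp.1 * ∏ t : Fin (n + 1),
        A ((Fin.cons kp.1 (Fin.snoc kp.2 j) : Fin (n + 2) → Fin N) t.castSucc)
          ((Fin.cons kp.1 (Fin.snoc kp.2 j) : Fin (n + 2) → Fin N) t.succ))
      (fun _ => rfl)]
    apply Fintype.sum_congr
    intro p'
    rw [Fin.prod_univ_succ (n := n + 1)]
    have hfun : (Fin.cons i (Fin.snoc p' j) : Fin (n + 3) → Fin N) ∘ Fin.succ
        = (Fin.cons (p' 0) (Fin.snoc (fun t => p' t.succ) j) : Fin (n + 2) → Fin N) := by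
      funext r
      simp only [Function.comp_apply, Fin.cons_succ]
      rw [Fin.cons_snoc_eq_snoc_cons]
      rw [show (fun t => p' t.succ) = Fin.tail p' from rfl, Fin.cons_self_tail]
    -- now rewrite each factor
    simp only [Fin.consEquiv_symm_apply]
    have h2 : ∀ r : Fin (n+2), (Fin.cons i (Fin.snoc p' j) : Fin (n+3) → Fin N) r.succ
        = (Fin.cons (p' 0) (Fin.snoc (Fin.tail p') j) : Fin (n+2) → Fin N) r :=
      fun r => congrFun hfun r
    refine congrArg₂ HMul.hMul ?_ ?_
    · rw [Fin.castSucc_zero, Fin.cons_zero, h2 0, Fin.cons_zero]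
    · exact Finset.prod_congr rfl fun t _ => by rw [← Fin.succ_castSucc, h2, h2]

open Finset Fin.CommRing in
lemma key {N L : ℕ} [NeZero N] (h4 : ¬ (4 ∣ L)) (hLN : L < N)
    (q : Fin (L + 1) → Fin N) (hq : q (Fin.last L) = q 0) :
    ∑ x ∈ Fintype.piFinset (fun _ : Fin N => ({-1, 1} : Finset ℝ)),
      (∏ t : Fin L, Mmat N x (q t.castSucc) (q t.succ)) = 0 := by
  classical
  by_cases hvalid : ∀ t : Fin L, q t.succ = q t.castSucc - 1 ∨ q t.succ = q t.castSucc + 1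
  · set d : Fin L → Prop := fun t => q t.succ = q t.castSucc - 1 with hd
    set u : Fin N → ℕ :=
      fun i => (univ.filter (fun t : Fin L => ¬ d t ∧ q t.castSucc = i)).card with hu
    have hW : ∀ x : Fin N → ℝ,
        (∏ t : Fin L, Mmat N x (q t.castSucc) (q t.succ)) = ∏ i : Fin N, x i ^ u i := by
      intro x
      have h1 : ∀ t : Fin L,
          Mmat N x (q t.castSucc) (q t.succ) = if d t then 1 else x (q t.castSucc) := by
        intro t
        by_cases h : d t
        · simp only [Mmat]
          rw [if_pos h, if_pos h]
        · rcases hvalid t with h' | h'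
          · exact absurd h' h
          · simp only [Mmat]
            rw [if_neg h, if_pos h', if_neg h]
      calc (∏ t : Fin L, Mmat N x (q t.castSucc) (q t.succ))
          = ∏ t : Fin L, (if d t then 1 else x (q t.castSucc)) := Finset.prod_congr rfl (fun t _ => h1 t)
        _ = ∏ t ∈ univ.filter (fun t => ¬ d t), x (q t.castSucc) := by
            rw [Finset.prod_ite]; simp
        _ = ∏ i : Fin N, ∏ t ∈ (univ.filter (fun t => ¬ d t)).filter (fun t => q t.castSucc = i),
              x (q t.castSucc) := (Finset.prod_fiberwise_of_maps_to (fun t _ => mem_univ _) _).symm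
        _ = ∏ i : Fin N, x i ^ u i := by
            apply Finset.prod_congr rfl
            intro i _
            rw [Finset.filter_filter]
            calc ∏ t ∈ filter (fun t => ¬ d t ∧ q t.castSucc = i) univ, x (q t.castSucc)
                = ∏ t ∈ filter (fun t => ¬ d t ∧ q t.castSucc = i) univ, x i := by
                  refine Finset.prod_congr rfl (fun t ht => ?_)
                  rw [(Finset.mem_filter.mp ht).2.2]
              _ = x i ^ u i := by rw [Finset.prod_const]
    simp_rw [hW]
    rw [← Finset.prod_univ_sum (fun _ : Fin N => ({-1, 1} : Finset ℝ)) (fun i v => v ^ u i)]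
    -- find an odd u i
    have hodd : ∃ i, Odd (u i) := by
      by_contra hall
      push_neg at hall
      have hallE : ∀ i, Even (u i) := fun i => (Nat.even_or_odd (u i)).resolve_right (hall i)
      apply h4
      set U := (univ.filter (fun t : Fin L => ¬ d t)).card with hU
      set D := (univ.filter d).card with hD
      have hUD : D + U = L := by
        rw [hD, hU]
        simpa using Finset.card_filter_add_card_filter_not
          (s := (univ : Finset (Fin L))) (p := d)
      have hUsum : U = ∑ i : Fin N, u i := by
        rw [hU, Finset.card_eq_sum_card_fiberwise
          (f := fun t : Fin L => q t.castSucc) (t := univ) (fun t _ => mem_univ _)]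
        exact Finset.sum_congr rfl (fun i _ => by rw [Finset.filter_filter])
      have hUeven : Even U := by
        rw [hUsum]; exact Finset.even_sum _ (fun i _ => hallE i)
      set e : ℕ → ℤ := fun r => if h : r < L then (if d ⟨r, h⟩ then -1 else 1) else 0 with he
      set s : ℕ → ℤ := fun r => ∑ k ∈ range r, e k with hs
      have hsstep : ∀ n, s (n + 1) = s n + e n := by
        intro n; rw [hs]; simp [Finset.sum_range_succ]
      have habs : ∀ r, |s r| ≤ r := by
        intro r
        induction r with
        | zero => simp [hs]
        | succ n ihn =>
          have he1 : |e n| ≤ 1 := by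
            rw [he]; dsimp only; split_ifs <;> simp
          calc |s (n + 1)| = |s n + e n| := by rw [hsstep]
            _ ≤ |s n| + |e n| := abs_add_le _ _
            _ ≤ (n : ℤ) + 1 := add_le_add ihn he1
            _ = ((n + 1 : ℕ) : ℤ) := by push_cast; ring
      have hwalk : ∀ r (hr : r ≤ L), q ⟨r, Nat.lt_succ_of_le hr⟩ = q 0 + ((s r : ℤ) : Fin N) := by
        intro r
        induction r with
        | zero => intro _; simp [hs, show (⟨0, Nat.lt_succ_of_le (Nat.zero_le L)⟩ : Fin (L+1)) = 0 from rfl]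
        | succ n ihn =>
          intro hr
          have hn : n < L := hr
          have hstep : q ⟨n + 1, Nat.lt_succ_of_le hr⟩ = q (⟨n, hn⟩ : Fin L).succ := rfl
          have hcast : (⟨n, Nat.lt_succ_of_le hn.le⟩ : Fin (L + 1)) = (⟨n, hn⟩ : Fin L).castSucc := rfl
          have hen : e n = if d ⟨n, hn⟩ then -1 else 1 := by rw [he]; simp [hn]
          by_cases hdn : d ⟨n, hn⟩
          · have hqs : q (⟨n, hn⟩ : Fin L).succ = q (⟨n, hn⟩ : Fin L).castSucc - 1 := hdn
            rw [hstep, hqs, ← hcast, ihn hn.le, hsstep, hen, if_pos hdn]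
            push_cast
            ring
          · have hqs : q (⟨n, hn⟩ : Fin L).succ = q (⟨n, hn⟩ : Fin L).castSucc + 1 :=
              (hvalid _).resolve_left hdn
            rw [hstep, hqs, ← hcast, ihn hn.le, hsstep, hen, if_neg hdn]
            push_cast
            ring
      have hsL0 : s L = 0 := by
        have h1 : q (Fin.last L) = q 0 + ((s L : ℤ) : Fin N) := hwalk L le_rfl
        have h2 : ((s L : ℤ) : Fin N) = 0 := by
          have h1' : q 0 + ((s L : ℤ) : Fin N) = q 0 + 0 := by
            rw [← h1, hq, add_zero]
          exact add_left_cancel h1'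
        have key0 : ∀ z : ℤ, 0 ≤ z → z < (N : ℤ) → ((z : Fin N) = 0) → z = 0 := by
          intro z h0 hzN hz
          lift z to ℕ using h0
          have hz' : ((z : ℕ) : Fin N) = 0 := by exact_mod_cast hz
          have hlt : z < N := by exact_mod_cast hzN
          have hv := Fin.val_cast_of_lt hlt
          rw [hz'] at hv
          simpa using hv.symm
        have hLbound : |s L| < (N : ℤ) :=
          lt_of_le_of_lt (habs L) (by exact_mod_cast hLN)
        rcases le_or_gt 0 (s L) with hpos | hneg
        · exact key0 _ hpos (by rwa [abs_of_nonneg hpos] at hLbound) h2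
        · have hneg' : (0 : ℤ) ≤ -s L := by omega
          have hz0 : (-s L) = 0 := key0 _ hneg'
            (by rwa [abs_of_neg hneg] at hLbound)
            (by rw [Int.cast_neg, h2, neg_zero])
          omega
      have hsum : s L = (U : ℤ) - (D : ℤ) := by
        have hrfl : s L = ∑ k ∈ range L, e k := rfl
        rw [hrfl, ← Fin.sum_univ_eq_sum_range]
        have hpt : ∀ t : Fin L, e (t : ℕ) = if d t then -1 else 1 := by
          intro t; rw [he]; simp [t.isLt]
        rw [Finset.sum_congr rfl (fun t _ => hpt t), Finset.sum_ite,
          Finset.sum_const, Finset.sum_const, ← hD, ← hU]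
        simp
        ring
      have hU2 : L = 2 * U := by
        have : (U : ℤ) = (D : ℤ) := by omega
        have : U = D := by exact_mod_cast this
        omega
      obtain ⟨k, hk⟩ := hUeven
      exact ⟨k, by omega⟩
    obtain ⟨i, hoi⟩ := hodd
    apply Finset.prod_eq_zero (mem_univ i)
    rw [show ({-1, 1} : Finset ℝ) = insert (-1 : ℝ) {1} from rfl,
      Finset.sum_insert (by norm_num), Finset.sum_singleton, hoi.neg_one_pow, one_pow]
    ring
  · push_neg at hvalid
    obtain ⟨t, h1, h2⟩ := hvalid
    apply Finset.sum_eq_zero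
    intro x _
    apply Finset.prod_eq_zero (mem_univ t)
    simp [Mmat, h1, h2]

/-- The averaged trace of any power of the random tridiagonal matrix not
divisible by `4` vanishes: for every `m ≥ 1` with `4 ∤ m` and every `N > m` with
`N ≥ 2`, `∑_x Tr (M x ^ m) = 0`, the sum running over all functions
`x : Fin N → ℝ` taking values in `{-1, 1}`. -/
theorem averaged_trace_pow_eq_zero (m N : ℕ) [NeZero N] (hm : 1 ≤ m)
    (hm4 : ¬ (4 ∣ m)) (hN : 2 ≤ N) (hmN : m < N) :
    (∑ᶠ x ∈ {x : Fin N → ℝ | ∀ i, x i = -1 ∨ x i = 1},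
      Matrix.trace (Mmat N x ^ m)) = 0 := by
  classical
  obtain ⟨L, rfl⟩ : ∃ L, m = L + 1 := ⟨m - 1, by omega⟩
  have hset : {x : Fin N → ℝ | ∀ i, x i = -1 ∨ x i = 1}
      = ↑(Fintype.piFinset (fun _ : Fin N => ({-1, 1} : Finset ℝ))) := by
    ext x
    simp [Fintype.mem_piFinset]
  rw [hset, finsum_mem_coe_finset]
  have hTr : ∀ x : Fin N → ℝ, Matrix.trace (Mmat N x ^ (L + 1)) =
      ∑ i : Fin N, ∑ p : Fin L → Fin N, ∏ t : Fin (L + 1),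
        Mmat N x ((Fin.cons i (Fin.snoc p i) : Fin (L + 2) → Fin N) t.castSucc)
          ((Fin.cons i (Fin.snoc p i) : Fin (L + 2) → Fin N) t.succ) := by
    intro x
    rw [Matrix.trace]
    refine Finset.sum_congr rfl (fun i _ => ?_)
    exact pow_expand (Mmat N x) L i i
  simp_rw [hTr]
  rw [Finset.sum_comm]
  apply Finset.sum_eq_zero
  intro i _
  rw [Finset.sum_comm]
  apply Finset.sum_eq_zero
  intro p _
  refine key hm4 hmN (Fin.cons i (Fin.snoc p i)) ?_
  rw [show Fin.last (L + 1) = Fin.succ (Fin.last L) from (Fin.succ_last L).symm,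
    Fin.cons_succ, Fin.snoc_last, Fin.cons_zero]
end

section
/- All eigenvalues of the random tridiagonal sign matrix lie in the square with vertices ±2 and ±2i: for N ≥ 2 and x : Fin N → ℂ with x_i = 1 or x_i = −1 for every i, every eigenvalue λ ∈ ℂ of the matrix M(x) (i.e., every λ in the spectrum of M(x) over ℂ) satisfies |Re λ| + |Im λ| ≤ 2. -/
/-- The complex random tridiagonal matrix `M x`: the `N × N` matrix with
`(M x) i j = 1` if `j ≡ i - 1 (mod N)`, `(M x) i j = x i` if `j ≡ i + 1 (mod N)`,
and `0` otherwise (arithmetic on `Fin N` is modulo `N`). -/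
def MmatC (N : ℕ) [NeZero N] (x : Fin N → ℂ) : Matrix (Fin N) (Fin N) ℂ :=
  fun i j => if j = i - 1 then 1 else if j = i + 1 then x i else 0

private lemma key_s13 (N : ℕ) [NeZero N] (y : Fin N → ℂ) (v : Fin N → ℂ) (hv : v ≠ 0) (lam ω : ℂ)
    (hrec : ∀ i, lam * v i = v (i-1) + y i * v (i+1))
    (hω : ∀ i, ‖starRingEnd ℂ ω + ω * y i‖ ≤ 2) :
    |(ω * lam).re| ≤ 2 := by
  set S : ℝ := ∑ i, Complex.normSq (v i) with hSdef
  have hS : 0 < S := by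
    obtain ⟨i, hi⟩ := Function.ne_iff.mp hv
    exact Finset.sum_pos' (fun j _ => Complex.normSq_nonneg _)
      ⟨i, Finset.mem_univ i, Complex.normSq_pos.mpr hi⟩
  have hcast : (S : ℂ) = ∑ i, v i * starRingEnd ℂ (v i) := by
    push_cast [hSdef]
    exact Finset.sum_congr rfl fun i _ => (Complex.mul_conj (v i)).symm
  have h1 : ω * lam * (S : ℂ) = ∑ i, (ω * starRingEnd ℂ (v (i+1)) * v i
      + (ω * y i) * (starRingEnd ℂ (v i) * v (i+1))) := by
    rw [hcast, Finset.mul_sum]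
    have : ∀ i, ω * lam * (v i * starRingEnd ℂ (v i))
        = ω * starRingEnd ℂ (v i) * v (i-1) + (ω * y i) * (starRingEnd ℂ (v i) * v (i+1)) := by
      intro i
      have := hrec i
      calc ω * lam * (v i * starRingEnd ℂ (v i))
          = ω * starRingEnd ℂ (v i) * (lam * v i) := by ring
        _ = ω * starRingEnd ℂ (v i) * (v (i-1) + y i * v (i+1)) := by rw [this]
        _ = _ := by ring
    rw [Finset.sum_congr rfl fun i _ => this i, Finset.sum_add_distrib,
      Finset.sum_add_distrib]
    congr 1
    refine Fintype.sum_equiv (Equiv.subRight (1 : Fin N)) _ _ ?_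
    intro i
    simp
  have hre : ((ω * lam).re) * S = ∑ i, ((starRingEnd ℂ ω + ω * y i)
      * (starRingEnd ℂ (v i) * v (i+1))).re := by
    have h2 : (ω * lam * (S : ℂ)).re = (ω * lam).re * S := by
      simp [Complex.mul_re]
    rw [← h2, h1, Complex.re_sum]
    refine Finset.sum_congr rfl fun i _ => ?_
    have : ω * starRingEnd ℂ (v (i+1)) * v i
        = starRingEnd ℂ (starRingEnd ℂ ω * (starRingEnd ℂ (v i) * v (i+1))) := by
      simp only [map_mul, RingHomCompTriple.comp_apply, RingHom.id_apply,
        Complex.conj_conj]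
      ring
    rw [Complex.add_re, this, Complex.conj_re, add_mul, Complex.add_re]
  have hbound : |((ω * lam).re) * S| ≤ 2 * S := by
    rw [hre]
    calc |∑ i, ((starRingEnd ℂ ω + ω * y i) * (starRingEnd ℂ (v i) * v (i+1))).re|
        ≤ ∑ i, |((starRingEnd ℂ ω + ω * y i) * (starRingEnd ℂ (v i) * v (i+1))).re| :=
          Finset.abs_sum_le_sum_abs _ _
      _ ≤ ∑ i, (Complex.normSq (v i) + Complex.normSq (v (i+1))) := by
          refine Finset.sum_le_sum fun i _ => ?_
          calc |((starRingEnd ℂ ω + ω * y i) * (starRingEnd ℂ (v i) * v (i+1))).re|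
              ≤ ‖(starRingEnd ℂ ω + ω * y i) * (starRingEnd ℂ (v i) * v (i+1))‖ :=
                Complex.abs_re_le_norm _
            _ = ‖starRingEnd ℂ ω + ω * y i‖ * (‖v i‖ * ‖v (i+1)‖) := by
                simp [map_mul]
            _ ≤ 2 * (‖v i‖ * ‖v (i+1)‖) := by
                have := hω i
                have h0 : 0 ≤ ‖v i‖ * ‖v (i+1)‖ := by positivity
                exact mul_le_mul_of_nonneg_right this h0
            _ ≤ ‖v i‖ ^ 2 + ‖v (i+1)‖ ^ 2 := by
                nlinarith [sq_nonneg (‖v i‖ - ‖v (i+1)‖)]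
            _ = Complex.normSq (v i) + Complex.normSq (v (i+1)) := by
                rw [Complex.sq_norm, Complex.sq_norm]
      _ = 2 * S := by
          rw [Finset.sum_add_distrib, two_mul, hSdef]
          congr 1
          exact Fintype.sum_equiv (Equiv.addRight (1 : Fin N)) _ _ (fun i => rfl)
  rw [abs_mul, abs_of_pos hS] at hbound
  exact le_of_mul_le_mul_right hbound hS

/-- All eigenvalues of the random tridiagonal sign matrix lie in the square with
vertices `±2` and `±2i`: for `N ≥ 2` and `x : Fin N → ℂ` with `x i = 1` or
`x i = -1` for every `i`, every `λ` in the spectrum of `M x` over `ℂ` satisfies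
`|Re λ| + |Im λ| ≤ 2`. -/
theorem eigenvalues_in_square (N : ℕ) [NeZero N] (hN : 2 ≤ N)
    (x : Fin N → ℂ) (hx : ∀ i, x i = 1 ∨ x i = -1)
    (lam : ℂ) (hlam : lam ∈ spectrum ℂ (MmatC N x)) :
    |lam.re| + |lam.im| ≤ 2 := by
  -- get an eigenvector
  have h1 : lam ∈ spectrum ℂ (Matrix.toLinAlgEquiv' (MmatC N x)) := by
    rw [AlgEquiv.spectrum_eq]; exact hlam
  have h2 : Module.End.HasEigenvalue (Matrix.toLinAlgEquiv' (MmatC N x)) lam :=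
    Module.End.hasEigenvalue_iff_mem_spectrum.mpr h1
  obtain ⟨v, hv1, hv0⟩ := h2.exists_hasEigenvector
  rw [Module.End.mem_eigenspace_iff] at hv1
  set y : Fin N → ℂ := fun i => if (i + 1 : Fin N) = i - 1 then 0 else x i with hy
  have hmul : ∀ i, (MmatC N x).mulVec v i = v (i-1) + y i * v (i+1) := by
    intro i
    by_cases h : (i + 1 : Fin N) = i - 1
    · simp only [Matrix.mulVec, dotProduct, MmatC]
      rw [Finset.sum_eq_single (i-1)]
      · simp [hy, h]
      · intro j _ hj
        simp [hj, show j ≠ i + 1 from fun hh => hj (hh.trans h)]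
      · simp
    · simp only [Matrix.mulVec, dotProduct, MmatC]
      have hpt : ∀ j, (if j = i-1 then (1:ℂ) else if j = i+1 then x i else 0) * v j
          = (if j = i-1 then v (i-1) else 0) + (if j = i+1 then x i * v (i+1) else 0) := by
        intro j
        by_cases h1 : j = i - 1
        · subst h1
          simp [show (i - 1 : Fin N) ≠ i + 1 from fun hh => h hh.symm]
        · by_cases h2 : j = i + 1 <;> simp [h1, h2, h]
      rw [Finset.sum_congr rfl fun j _ => hpt j, Finset.sum_add_distrib]
      simp [hy, h]
  have hrec : ∀ i, lam * v i = v (i-1) + y i * v (i+1) := by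
    intro i
    have := congrFun hv1 i
    rw [Matrix.toLinAlgEquiv'_apply] at this
    rw [← hmul i, this]
    simp
  have habs2 : ∀ z : ℂ, Complex.normSq z ≤ 4 → ‖z‖ ≤ 2 := by
    intro z h
    rw [Complex.norm_def, show (2:ℝ) = Real.sqrt 4 by
      rw [show (4:ℝ) = 2^2 by norm_num, Real.sqrt_sq (by norm_num)]]
    exact Real.sqrt_le_sqrt h
  have hy3 : ∀ i, y i = 0 ∨ y i = 1 ∨ y i = -1 := by
    intro i
    rw [hy]
    by_cases h : (i + 1 : Fin N) = i - 1
    · left; simp [h]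
    · rcases hx i with h1 | h1 <;> simp [h, h1]
  have hb1 : |((1 + Complex.I) * lam).re| ≤ 2 := by
    refine key_s13 N y v hv0 lam (1 + Complex.I) hrec fun i => ?_
    refine habs2 _ ?_
    rcases hy3 i with h | h | h <;>
      simp [h, Complex.normSq_apply] <;> norm_num
  have hb2 : |((1 - Complex.I) * lam).re| ≤ 2 := by
    refine key_s13 N y v hv0 lam (1 - Complex.I) hrec fun i => ?_
    refine habs2 _ ?_
    rcases hy3 i with h | h | h <;>
      simp [h, Complex.normSq_apply] <;> norm_num
  have e1 : ((1 + Complex.I) * lam).re = lam.re - lam.im := by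
    simp [Complex.mul_re]
  have e2 : ((1 - Complex.I) * lam).re = lam.re + lam.im := by
    simp [Complex.mul_re]
  rw [e1] at hb1
  rw [e2] at hb2
  rw [abs_le] at hb1 hb2
  rcases abs_cases lam.re with ⟨hr, _⟩ | ⟨hr, _⟩ <;>
    rcases abs_cases lam.im with ⟨hi, _⟩ | ⟨hi, _⟩ <;> linarith [hb1.1, hb1.2, hb2.1, hb2.2]
end
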